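/- arXiv:2308.10102 — 10 statements merged into one kernel-verified Lean document; each statement's English description precedes it below -/
import Mathlib

section
/- Let d, k, n be positive integers and let ‖·‖ be any norm on ℝ^d. Let A = (a_i^j) be a k×n matrix with entries a_i^j ∈ ℝ^d such that ‖a_i^j‖ ≤ 1 for all i, j and the total sum of all entries is zero. Then there exist permutations π_1, …, π_k of {1,…,n} such that the row-permuted matrix C with c_i^j = a_{π_j(i)}^j satisfies ‖∑_{j=1}^k ∑_{i=1}^m c_i^j‖ ≤ min{dk, 40d^5} for every m ∈ {1,…,n}. -/
/-!
Put weight `p / s` on each of `s` chosen entries in every row. Keeping the image under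
`x ↦ (∑ x z • a z, row sums of x)`, move this point of the cube to one whose fractional
coordinates index linearly independent vectors: there are at most `d + #rows` of them, and since
every row sum is the integer `p`, a row meeting them meets them twice, so there are at most `2d`.
Rounding row by row then selects `p` entries per row whose total is within `2d` of `p / s` times
the total. Halving recursively arranges every row so that each column sum is within `8d` of the
average column, which is `0`. The `n` column sums, of norm at most `min k (8d)` and summing to
zero, are finally ordered by the Grinberg–Sevastyanov form of the Steinitz lemma, which rests on
the same vertex argument, with all partial sums of norm at most `d · min k (8d)`.
-/

open Finset Module

lemma two_mul_card_image_le_card {α β : Type*} [DecidableEq β] {s : Finset α} {f : α → β}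
    (h : ∀ a ∈ s, ∃ b ∈ s, b ≠ a ∧ f b = f a) : 2 * #(s.image f) ≤ #s := by
  rw [card_eq_sum_card_image f s, mul_comm, ← smul_eq_mul, ← sum_const]
  refine sum_le_sum fun y hy => ?_
  obtain ⟨a, ha, rfl⟩ := mem_image.1 hy
  obtain ⟨b, hb, hba, hfb⟩ := h a ha
  exact one_lt_card.2 ⟨b, by simp [hb, hfb], a, by simp [ha], hba⟩

lemma add_mul_mem_Icc_of_le_div {a b g t : ℝ} (ha : a ∈ Set.Icc (0 : ℝ) 1)
    (hb : b ∈ Set.Icc (0 : ℝ) 1) (hab : 0 < (b - a) / g) (ht : 0 ≤ t)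
    (htab : t ≤ (b - a) / g) : a + t * g ∈ Set.Icc (0 : ℝ) 1 := by
  have hba : b - a ≠ 0 := fun h => by simp [h] at hab
  have hg : g ≠ 0 := fun h => by simp [h] at hab
  have : t * g = (t / ((b - a) / g)) * (b - a) := by field_simp
  rw [this]
  exact (convex_Icc 0 1).add_smul_sub_mem ha hb
    ⟨div_nonneg ht hab.le, div_le_one_of_le₀ htab hab.le⟩

lemma card_le_finrank_add_card_image_fst {κ ι W : Type*} [DecidableEq κ] [AddCommGroup W]
    [Module ℝ W] [FiniteDimensional ℝ W] (a : κ → ι → W) {F : Finset (κ × ι)}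
    (hF : LinearIndepOn ℝ (fun z : κ × ι => (a z.1 z.2, (Pi.single z.1 1 : κ → ℝ))) ↑F) :
    #F ≤ finrank ℝ W + #(F.image Prod.fst) := by
  set R := F.image Prod.fst
  let P : W × (κ → ℝ) →ₗ[ℝ] W × (R → ℝ) :=
    LinearMap.id.prodMap (LinearMap.funLeft ℝ ℝ Subtype.val)
  let Q : W × (R → ℝ) →ₗ[ℝ] W × (κ → ℝ) :=
    LinearMap.id.prodMap (Function.ExtendByZero.linearMap ℝ Subtype.val)
  -- Forgetting the rows outside `R` loses nothing on the vectors indexed by `F`.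
  have hQP : Set.EqOn (fun z : κ × ι => (a z.1 z.2, (Pi.single z.1 1 : κ → ℝ)))
      (Q ∘ P ∘ fun z : κ × ι => (a z.1 z.2, (Pi.single z.1 1 : κ → ℝ))) F := by
    intro z hz
    ext j
    · rfl
    change (Pi.single z.1 1 : κ → ℝ) j = Function.extend (Subtype.val : R → κ)
      (fun r => (Pi.single z.1 1 : κ → ℝ) r.1) (0 : κ → ℝ) j
    by_cases hj : j ∈ R
    · exact (Subtype.val_injective.extend_apply (fun r : R => (Pi.single z.1 1 : κ → ℝ) r.1)
        (0 : κ → ℝ) ⟨j, hj⟩).symm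
    · have hzj : j ≠ z.1 := fun h => hj (h ▸ mem_image_of_mem _ hz)
      rw [Function.extend_apply' _ _ _ (by rintro ⟨r, rfl⟩; exact hj r.2)]
      simp [hzj]
  simpa [Module.finrank_prod] using ((hF.congr hQP).of_comp Q).fintype_card_le_finrank

section

variable {ι : Type*} [Fintype ι]

noncomputable def fracSupport (x : ι → ℝ) : Finset ι :=
  univ.filter fun i => x i ≠ 0 ∧ x i ≠ 1

@[simp]
lemma mem_fracSupport {x : ι → ℝ} {i : ι} : i ∈ fracSupport x ↔ x i ≠ 0 ∧ x i ≠ 1 := by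
  simp [fracSupport]

section Vertex

variable {W : Type*} [AddCommGroup W] [Module ℝ W]

lemma exists_fracSupport_ssubset (u : ι → W) {x : ι → ℝ} (hx : ∀ i, x i ∈ Set.Icc (0 : ℝ) 1)
    {g : ι → ℝ} (hgu : ∑ i ∈ fracSupport x, g i • u i = 0) {i₀ : ι}
    (hi₀ : i₀ ∈ fracSupport x) (hgi₀ : g i₀ ≠ 0) :
    ∃ y : ι → ℝ, (∀ i, y i ∈ Set.Icc (0 : ℝ) 1) ∧ ∑ i, y i • u i = ∑ i, x i • u i ∧
      (∀ i ∉ fracSupport x, y i = x i) ∧ fracSupport y ⊂ fracSupport x := by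
  classical
  set F := fracSupport x
  -- Moving from `x` in direction `g`, coordinate `i` hits the face `target i` at time `exit i`.
  let target : ι → ℝ := fun i => if 0 < g i then 1 else 0
  let exit : ι → ℝ := fun i => (target i - x i) / g i
  have htarget : ∀ i, target i ∈ Set.Icc (0 : ℝ) 1 := fun i => by
    by_cases h : 0 < g i <;> simp [target, h]
  have hexit : ∀ i ∈ F, g i ≠ 0 → 0 < exit i := by
    intro i hi hg
    obtain ⟨h0, h1⟩ := mem_fracSupport.1 hi
    rcases hg.lt_or_gt with hneg | hpos
    · exact div_pos_of_neg_of_neg (by simp [target, hneg.not_gt, (hx i).1.lt_of_ne' h0]) hneg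
    · exact div_pos (by simp [target, hpos, (hx i).2.lt_of_ne h1]) hpos
  obtain ⟨i₁, hi₁, hmin⟩ :=
    (F.filter (g · ≠ 0)).exists_min_image exit ⟨i₀, by simp [F, hi₀, hgi₀]⟩
  rw [mem_filter] at hi₁
  set t := exit i₁
  let y : ι → ℝ := fun i => x i + if i ∈ F then t * g i else 0
  have hyx : ∀ i ∉ F, y i = x i := fun i hi => by simp [y, hi]
  have hy₁ : y i₁ = target i₁ := by
    simp only [y, if_pos hi₁.1, t, exit, div_mul_cancel₀ _ hi₁.2]
    ring
  refine ⟨y, fun i => ?_, ?_, hyx, ?_⟩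
  · by_cases hi : i ∈ F ∧ g i ≠ 0
    · simpa only [y, if_pos hi.1] using add_mul_mem_Icc_of_le_div (hx i) (htarget i)
        (hexit i hi.1 hi.2) (hexit i₁ hi₁.1 hi₁.2).le (hmin i (mem_filter.2 hi))
    · rcases not_and_or.1 hi with hi | hi
      · rw [hyx i hi]; exact hx i
      · simpa [y, not_not.1 hi] using hx i
  · simp only [y, add_smul, sum_add_distrib, ite_smul, zero_smul, sum_ite_mem, univ_inter,
      mul_smul, ← smul_sum, hgu, smul_zero, add_zero]
  · refine (ssubset_iff_of_subset fun i hi => ?_).2 ⟨i₁, hi₁.1, ?_⟩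
    · by_contra hiF
      rw [mem_fracSupport, hyx i hiF] at hi
      exact hiF (mem_fracSupport.2 hi)
    · rw [mem_fracSupport, hy₁]
      by_cases h : 0 < g i₁ <;> simp [target, h]

theorem exists_linearIndepOn_fracSupport (u : ι → W) {x : ι → ℝ}
    (hx : ∀ i, x i ∈ Set.Icc (0 : ℝ) 1) :
    ∃ y : ι → ℝ, (∀ i, y i ∈ Set.Icc (0 : ℝ) 1) ∧ ∑ i, y i • u i = ∑ i, x i • u i ∧
      (∀ i ∉ fracSupport x, y i = x i) ∧ LinearIndepOn ℝ u ↑(fracSupport y) := by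
  obtain ⟨n, hn⟩ : ∃ n, #(fracSupport x) = n := ⟨_, rfl⟩
  induction n using Nat.strong_induction_on generalizing x with
  | _ n ih =>
  by_cases hli : LinearIndepOn ℝ u ↑(fracSupport x)
  · exact ⟨x, hx, rfl, fun _ _ => rfl, hli⟩
  obtain ⟨g, hgu, i₀, hi₀, hgi₀⟩ := not_linearIndepOn_finset_iff.1 hli
  obtain ⟨y, hy, hyu, hyx, hss⟩ := exists_fracSupport_ssubset u hx hgu hi₀ hgi₀
  obtain ⟨z, hz, hzu, hzy, hli⟩ := ih _ (hn ▸ card_lt_card hss) hy rfl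
  exact ⟨z, hz, hzu.trans hyu, fun i hi => (hzy i fun h => hi (hss.subset h)).trans (hyx i hi),
    hli⟩

end Vertex

section Steinitz

variable {E : Type*} [NormedAddCommGroup E] [NormedSpace ℝ E] {d : ℕ} {v : ι → E}

/-- Grinberg–Sevastyanov weights: they witness `‖∑ i ∈ A, v i‖ ≤ d * α`, and can be passed
from `A` to `A.erase i` for a suitable `i` as long as `d < #A`. -/
structure IsSteinitzWeight (d : ℕ) (v : ι → E) (A : Finset ι) (c : ι → ℝ) : Prop where
  mem_Icc : ∀ i, c i ∈ Set.Icc (0 : ℝ) 1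
  eq_zero_of_notMem : ∀ i ∉ A, c i = 0
  sum_eq : ∑ i, c i = #A - d
  sum_smul_eq_zero : ∑ i, c i • v i = 0

lemma isSteinitzWeight_univ (hv : ∑ i, v i = 0) (hd : d < Fintype.card ι) :
    IsSteinitzWeight d v univ fun _ => (Fintype.card ι - d : ℝ) / Fintype.card ι := by
  have hN : (0 : ℝ) < Fintype.card ι := by exact_mod_cast d.zero_le.trans_lt hd
  have hdN : (d : ℝ) < Fintype.card ι := by exact_mod_cast hd
  refine ⟨fun _ => ⟨div_nonneg (by linarith) hN.le, (div_le_one hN).2 (by linarith)⟩,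
    by simp, ?_, by rw [← smul_sum, hv, smul_zero]⟩
  simp only [sum_const, card_univ, nsmul_eq_mul]
  field_simp

lemma IsSteinitzWeight.norm_sum_le {A : Finset ι} {c : ι → ℝ} (hc : IsSteinitzWeight d v A c)
    {α : ℝ} (hv : ∀ i, ‖v i‖ ≤ α) : ‖∑ i ∈ A, v i‖ ≤ d * α := by
  have hsum : ∑ i ∈ A, c i = #A - d := by
    rw [sum_subset (subset_univ A) fun i _ hi => hc.eq_zero_of_notMem i hi, hc.sum_eq]
  have hsmul : ∑ i ∈ A, c i • v i = 0 := by
    rw [sum_subset (subset_univ A) fun i _ hi => by rw [hc.eq_zero_of_notMem i hi, zero_smul],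
      hc.sum_smul_eq_zero]
  calc ‖∑ i ∈ A, v i‖ = ‖∑ i ∈ A, (1 - c i) • v i‖ := by
        simp [sub_smul, sum_sub_distrib, hsmul]
    _ ≤ ∑ i ∈ A, (1 - c i) * α := norm_sum_le_of_le _ fun i _ => by
        rw [norm_smul, Real.norm_of_nonneg (sub_nonneg.2 (hc.mem_Icc i).2)]
        exact mul_le_mul_of_nonneg_left (hv i) (sub_nonneg.2 (hc.mem_Icc i).2)
    _ = d * α := by rw [← sum_mul, sum_sub_distrib, hsum]; simp

lemma norm_sum_le_of_imp_isSteinitzWeight {A : Finset ι} {α : ℝ} (hα : 0 ≤ α)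
    (hv : ∀ i, ‖v i‖ ≤ α) (hA : d < #A → ∃ c, IsSteinitzWeight d v A c) :
    ‖∑ i ∈ A, v i‖ ≤ d * α := by
  by_cases hdA : d < #A
  · obtain ⟨c, hc⟩ := hA hdA
    exact hc.norm_sum_le hv
  calc ‖∑ i ∈ A, v i‖ ≤ ∑ _i ∈ A, α := norm_sum_le_of_le _ fun i _ => hv i
    _ ≤ d * α := by
      rw [sum_const, nsmul_eq_mul]
      exact mul_le_mul_of_nonneg_right (by exact_mod_cast not_lt.1 hdA) hα

lemma exists_mem_eq_zero_of_sum_eq {y : ι → ℝ} (hy : ∀ i, y i ∈ Set.Icc (0 : ℝ) 1)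
    {A : Finset ι} (hyA : ∀ i ∉ A, y i = 0) (hsum : ∑ i ∈ A, y i = #A - 1 - d)
    (hF : #(fracSupport y) ≤ d + 1) : ∃ i ∈ A, y i = 0 := by
  by_contra! hA
  set F := fracSupport y
  have hFA : F ⊆ A := fun i hi => by_contra fun h => (mem_fracSupport.1 hi).1 (hyA i h)
  -- On `A`, every coordinate outside `F` equals `1`, so the deficit `d + 1` sits on `F`.
  have hsumF : ∑ i ∈ F, (1 - y i) = d + 1 := by
    rw [sum_subset hFA fun i hiA hiF => by simp_all [F], sum_sub_distrib, hsum]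
    simp only [sum_const, nsmul_eq_mul, mul_one]
    ring
  have hFne : F.Nonempty := nonempty_of_sum_ne_zero (by rw [hsumF]; positivity)
  have hlt : ∑ i ∈ F, (1 - y i) < #F :=
    calc ∑ i ∈ F, (1 - y i) < ∑ _i ∈ F, (1 : ℝ) := sum_lt_sum_of_nonempty hFne fun i hi => by
          linarith [(hy i).1.lt_of_ne' (hA i (hFA hi))]
      _ = #F := by simp
  have : (#F : ℝ) ≤ d + 1 := by exact_mod_cast hF
  linarith

variable [DecidableEq ι]

/-- Scale `c` so that its total drops by one, then pass to a point with at most `d + 1`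
fractional coordinates; it vanishes somewhere on `A`. -/
lemma IsSteinitzWeight.exists_erase [FiniteDimensional ℝ E] (hdim : finrank ℝ E = d)
    {A : Finset ι} {c : ι → ℝ} (hc : IsSteinitzWeight d v A c) (hdA : d < #A) :
    ∃ i ∈ A, ∃ c', IsSteinitzWeight d v (A.erase i) c' := by
  have hdA' : (d : ℝ) + 1 ≤ #A := by exact_mod_cast hdA
  set r : ℝ := (#A - 1 - d) / (#A - d)
  have hr : r ∈ Set.Icc (0 : ℝ) 1 :=
    ⟨div_nonneg (by linarith) (by linarith), (div_le_one (by linarith)).2 (by linarith)⟩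
  have hrc : ∀ i, r * c i ∈ Set.Icc (0 : ℝ) 1 := fun i =>
    ⟨mul_nonneg hr.1 (hc.mem_Icc i).1, mul_le_one₀ hr.2 (hc.mem_Icc i).1 (hc.mem_Icc i).2⟩
  obtain ⟨y, hy, hyu, hyx, hli⟩ := exists_linearIndepOn_fracSupport (fun i => (v i, (1 : ℝ))) hrc
  have hyA : ∀ i ∉ A, y i = 0 := fun i hi => by
    rw [hyx i (by simp [hc.eq_zero_of_notMem i hi]), hc.eq_zero_of_notMem i hi, mul_zero]
  have hyv : ∑ i, y i • v i = 0 := by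
    simpa [Prod.fst_sum, ← smul_sum, mul_smul, hc.sum_smul_eq_zero] using congrArg Prod.fst hyu
  have hysum : ∑ i ∈ A, y i = #A - 1 - d := by
    have := congrArg Prod.snd hyu
    simp only [Prod.snd_sum, Prod.smul_mk, smul_eq_mul, mul_one, ← mul_sum, hc.sum_eq] at this
    rw [sum_subset (subset_univ A) fun i _ hi => hyA i hi, this, div_mul_cancel₀ _ (by linarith)]
  have hF : #(fracSupport y) ≤ d + 1 := by
    simpa only [coe_sort_coe, Fintype.card_coe, finrank_prod, hdim, finrank_self] using
      hli.fintype_card_le_finrank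
  obtain ⟨i, hiA, hi⟩ := exists_mem_eq_zero_of_sum_eq hy hyA hysum hF
  refine ⟨i, hiA, y, hy, fun j hj => ?_, ?_, hyv⟩
  · by_cases hji : j = i
    · rwa [hji]
    · exact hyA j fun hjA => hj (mem_erase.2 ⟨hji, hjA⟩)
  · rw [← sum_subset (subset_univ A) fun i _ hi => hyA i hi, hysum, card_erase_of_mem hiA,
      Nat.cast_sub (card_pos.2 ⟨i, hiA⟩)]
    push_cast
    ring

theorem exists_list_norm_sum_take_le [FiniteDimensional ℝ E] (hdim : finrank ℝ E = d) {α : ℝ}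
    (hα : 0 ≤ α) (hv : ∀ i, ‖v i‖ ≤ α) (A : Finset ι)
    (hA : d < #A → ∃ c, IsSteinitzWeight d v A c) :
    ∃ l : List ι, l.Nodup ∧ l.toFinset = A ∧ ∀ m, ‖((l.take m).map v).sum‖ ≤ d * α := by
  induction A using Finset.strongInduction with
  | H A ih =>
  obtain rfl | ⟨i₀, hi₀⟩ := A.eq_empty_or_nonempty
  · exact ⟨[], List.nodup_nil, rfl, fun _ => by simp; positivity⟩
  obtain ⟨i, hi, hAi⟩ : ∃ i ∈ A, d < #(A.erase i) → ∃ c, IsSteinitzWeight d v (A.erase i) c := by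
    by_cases hdA : d < #A
    · obtain ⟨c, hc⟩ := hA hdA
      obtain ⟨i, hi, c', hc'⟩ := hc.exists_erase hdim hdA
      exact ⟨i, hi, fun _ => ⟨c', hc'⟩⟩
    · exact ⟨i₀, hi₀, fun h => (hdA (h.trans_le card_erase_le)).elim⟩
  obtain ⟨l, hnd, hl, hpre⟩ := ih _ (erase_ssubset hi) hAi
  have hnd' : (l ++ [i]).Nodup :=
    hnd.append (List.nodup_singleton i) (by simp [← List.mem_toFinset, hl])
  have hl' : (l ++ [i]).toFinset = A := by simp [List.toFinset_append, hl, insert_erase hi]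
  refine ⟨l ++ [i], hnd', hl', fun m => ?_⟩
  rcases le_or_gt m l.length with hm | hm
  · rw [List.take_append_of_le_length hm]
    exact hpre m
  · rw [List.take_of_length_le (by simp; omega), ← List.sum_toFinset _ hnd', hl']
    exact norm_sum_le_of_imp_isSteinitzWeight hα hv hA

theorem exists_perm_norm_sum_filter_lt_le [FiniteDimensional ℝ E] (hdim : finrank ℝ E = d)
    {N : ℕ} {w : Fin N → E} {α : ℝ} (hα : 0 ≤ α) (hw : ∀ i, ‖w i‖ ≤ α) (hsum : ∑ i, w i = 0) :
    ∃ τ : Equiv.Perm (Fin N),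
      ∀ m : ℕ, ‖∑ i ∈ univ.filter (fun i : Fin N => (i : ℕ) < m), w (τ i)‖ ≤ d * α := by
  obtain ⟨l, hnd, hl, hpre⟩ := exists_list_norm_sum_take_le hdim hα hw univ fun hd =>
    ⟨_, isSteinitzWeight_univ hsum (by simpa using hd)⟩
  set e := hnd.getEquivOfForallMemList l fun i => by simp [← List.mem_toFinset, hl]
  have hlen : l.length = N := by simpa using Fintype.card_congr e
  refine ⟨(finCongr hlen).symm.trans e, fun m => ?_⟩
  have hl : List.ofFn (fun i => w ((finCongr hlen).symm.trans e i)) = l.map w :=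
    List.ext_getElem (by simp [hlen]) fun j _ _ => by simp [e]
  rw [← List.sum_take_ofFn, hl, ← List.map_take]
  exact hpre m

end Steinitz

lemma exists_ne_mem_fracSupport_of_sum_eq {x : ι → ℝ} (hx : ∀ i, x i ∈ Set.Icc (0 : ℝ) 1)
    {p : ℕ} (hsum : ∑ i, x i = p) {i : ι} (hi : i ∈ fracSupport x) :
    ∃ i' ∈ fracSupport x, i' ≠ i := by
  classical
  by_contra! h
  set m := #((univ.erase i).filter (x · = 1))
  have hrest : ∑ j ∈ univ.erase i, x j = m := by
    rw [natCast_card_filter]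
    refine sum_congr rfl fun j hj => ?_
    have := mt (h j) (ne_of_mem_erase hj)
    by_cases hj1 : x j = 1 <;> simp_all
  rw [← add_sum_erase _ _ (mem_univ i), hrest] at hsum
  obtain ⟨h0, h1⟩ := mem_fracSupport.1 hi
  have hlt : m < p := by exact_mod_cast (by linarith [(hx i).1.lt_of_ne' h0] : (m : ℝ) < p)
  have hgt : p < m + 1 := by
    exact_mod_cast (by linarith [(hx i).2.lt_of_ne h1] : (p : ℝ) < m + 1)
  omega

lemma exists_subset_card_eq_of_sum_eq {x : ι → ℝ} (hx : ∀ i, x i ∈ Set.Icc (0 : ℝ) 1)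
    {B : Finset ι} {p : ℕ} (hB : ∑ i ∈ B, x i = p) :
    ∃ S ⊆ B, #S = p ∧ ∀ i ∈ B, i ∉ fracSupport x → (i ∈ S ↔ x i = 1) := by
  have hOp : #(B.filter (x · = 1)) ≤ p := by
    have : (#(B.filter (x · = 1)) : ℝ) ≤ p := by
      rw [← hB, natCast_card_filter]
      exact sum_le_sum fun i _ => by split_ifs with h <;> simp [h, (hx i).1]
    exact_mod_cast this
  have hpP : p ≤ #(B.filter (x · ≠ 0)) := by
    have : (p : ℝ) ≤ #(B.filter (x · ≠ 0)) := by
      rw [← hB, natCast_card_filter]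
      exact sum_le_sum fun i _ => by split_ifs with h <;> simp_all [(hx i).2]
    exact_mod_cast this
  obtain ⟨S, hOS, hSP, hS⟩ := exists_subsuperset_card_eq (fun i hi => by simp_all) hOp hpP
  refine ⟨S, hSP.trans (filter_subset _ _), hS, fun i hiB hi => ⟨fun hiS => ?_, fun h1 => ?_⟩⟩
  · simpa [(mem_filter.1 (hSP hiS)).2] using hi
  · exact hOS (mem_filter.2 ⟨hiB, h1⟩)

lemma norm_sum_sub_sum_smul_le {E : Type*} [SeminormedAddCommGroup E] [NormedSpace ℝ E]
    {a : ι → E} (ha : ∀ i, ‖a i‖ ≤ 1) {x : ι → ℝ} (hx : ∀ i, x i ∈ Set.Icc (0 : ℝ) 1)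
    {B S : Finset ι} (hSB : S ⊆ B) (hS : ∀ i ∈ B, i ∉ fracSupport x → (i ∈ S ↔ x i = 1)) :
    ‖∑ i ∈ S, a i - ∑ i ∈ B, x i • a i‖ ≤ #(fracSupport x) := by
  classical
  have hSsum : ∑ i ∈ S, a i = ∑ i ∈ B, (if i ∈ S then (1 : ℝ) else 0) • a i := by
    simp [ite_smul, sum_ite_mem, inter_eq_right.2 hSB]
  calc ‖∑ i ∈ S, a i - ∑ i ∈ B, x i • a i‖
      = ‖∑ i ∈ B, ((if i ∈ S then (1 : ℝ) else 0) - x i) • a i‖ := by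
        simp [hSsum, sub_smul, sum_sub_distrib]
    _ ≤ ∑ i ∈ B, if i ∈ fracSupport x then (1 : ℝ) else 0 := norm_sum_le_of_le _ fun i hiB => by
        rw [norm_smul, Real.norm_eq_abs]
        by_cases hi : i ∈ fracSupport x
        · have : |(if i ∈ S then (1 : ℝ) else 0) - x i| ≤ 1 := by
            rw [abs_le]; split_ifs <;> constructor <;> linarith [(hx i).1, (hx i).2]
          simpa [hi] using mul_le_one₀ this (norm_nonneg _) (ha i)
        · have : (if i ∈ S then (1 : ℝ) else 0) = x i := by
            by_cases hiS : i ∈ S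
            · simp [hiS, (hS i hiB hi).1 hiS]
            · rw [if_neg hiS]
              exact (by simpa [(hS i hiB hi).not.1 hiS] using hi : x i = 0).symm
          simp [this, hi]
    _ ≤ #(fracSupport x) := by
        rw [sum_boole]
        exact_mod_cast card_le_card fun i hi => (mem_filter.1 hi).2

section Balancing

variable {κ : Type*} [Fintype κ] [DecidableEq κ] {E : Type*} [NormedAddCommGroup E]
  [NormedSpace ℝ E]

lemma sum_smul_prod_single (y : κ × ι → ℝ) (a : κ → ι → E) :
    ∑ z, y z • (a z.1 z.2, (Pi.single z.1 1 : κ → ℝ)) =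
      (∑ j, ∑ i, y (j, i) • a j i, fun j => ∑ i, y (j, i)) := by
  ext j
  · simp [Prod.fst_sum, Fintype.sum_prod_type]
  · simp [Prod.snd_sum, Fintype.sum_prod_type, Pi.single_apply]

/-- By independence there are at most `finrank ℝ E + #rows` fractional coordinates, and a row
meeting them meets them at least twice because its sum is an integer. -/
lemma card_fracSupport_le_two_mul_finrank [FiniteDimensional ℝ E] (a : κ → ι → E)
    {y : κ × ι → ℝ} (hy : ∀ z, y z ∈ Set.Icc (0 : ℝ) 1) {p : ℕ} (hrow : ∀ j, ∑ i, y (j, i) = p)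
    (hli : LinearIndepOn ℝ (fun z : κ × ι => (a z.1 z.2, (Pi.single z.1 1 : κ → ℝ)))
      ↑(fracSupport y)) :
    #(fracSupport y) ≤ 2 * finrank ℝ E := by
  have h₁ := card_le_finrank_add_card_image_fst a hli
  have h₂ : 2 * #((fracSupport y).image Prod.fst) ≤ #(fracSupport y) :=
    two_mul_card_image_le_card fun z hz => by
      obtain ⟨i', hi', hne⟩ := exists_ne_mem_fracSupport_of_sum_eq (fun i => hy (z.1, i))
        (hrow z.1) (by simpa using hz)
      exact ⟨(z.1, i'), by simpa using hi', fun h => hne (by rw [← h]), rfl⟩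
  omega

variable [DecidableEq ι]

theorem exists_subsets_norm_sub_smul_le [FiniteDimensional ℝ E] {d : ℕ}
    (hdim : finrank ℝ E = d) (a : κ → ι → E) (ha : ∀ j i, ‖a j i‖ ≤ 1) (B : κ → Finset ι)
    {s p : ℕ} (hB : ∀ j, #(B j) = s) (hps : p ≤ s) :
    ∃ S : κ → Finset ι, (∀ j, S j ⊆ B j) ∧ (∀ j, #(S j) = p) ∧
      ‖∑ j, ∑ i ∈ S j, a j i - ((p : ℝ) / s) • ∑ j, ∑ i ∈ B j, a j i‖ ≤ 2 * d := by
  let x : κ × ι → ℝ := fun z => if z.2 ∈ B z.1 then (p : ℝ) / s else 0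
  have hps' : (p : ℝ) / s ∈ Set.Icc (0 : ℝ) 1 :=
    ⟨by positivity, div_le_one_of_le₀ (by exact_mod_cast hps) (Nat.cast_nonneg _)⟩
  have hx : ∀ z, x z ∈ Set.Icc (0 : ℝ) 1 := fun z => by
    by_cases h : z.2 ∈ B z.1 <;> simp [x, h, hps'.1, hps'.2]
  obtain ⟨y, hy, hyu, hyx, hli⟩ :=
    exists_linearIndepOn_fracSupport (fun z : κ × ι => (a z.1 z.2, (Pi.single z.1 1 : κ → ℝ))) hx
  rw [sum_smul_prod_single, sum_smul_prod_single, Prod.mk.injEq] at hyu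
  have hyB : ∀ j, ∀ i ∉ B j, y (j, i) = 0 := fun j i hi => by
    rw [hyx (j, i) (by simp [x, hi])]; simp [x, hi]
  have hrow : ∀ j, ∑ i, y (j, i) = p := fun j => by
    rw [congrFun hyu.2 j]
    simp only [x, ← sum_filter, filter_mem_eq_inter, univ_inter, sum_const, hB j, nsmul_eq_mul]
    exact mul_div_cancel_of_imp' fun hs => by simp_all
  have hrowB : ∀ j, ∑ i ∈ B j, y (j, i) = p := fun j => by
    rw [sum_subset (subset_univ _) fun i _ hi => hyB j i hi, hrow]
  have hmean : ∑ j, ∑ i ∈ B j, y (j, i) • a j i = ((p : ℝ) / s) • ∑ j, ∑ i ∈ B j, a j i :=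
    calc ∑ j, ∑ i ∈ B j, y (j, i) • a j i = ∑ j, ∑ i, y (j, i) • a j i :=
          sum_congr rfl fun j _ => sum_subset (subset_univ _) fun i _ hi => by simp [hyB j i hi]
      _ = ∑ j, ∑ i, x (j, i) • a j i := hyu.1
      _ = ((p : ℝ) / s) • ∑ j, ∑ i ∈ B j, a j i := by simp [x, ite_smul, smul_sum, sum_ite_mem]
  choose S hSB hS hSx using fun j => exists_subset_card_eq_of_sum_eq (fun i => hy (j, i)) (hrowB j)
  refine ⟨S, hSB, hS, ?_⟩
  calc ‖∑ j, ∑ i ∈ S j, a j i - ((p : ℝ) / s) • ∑ j, ∑ i ∈ B j, a j i‖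
      = ‖∑ j, (∑ i ∈ S j, a j i - ∑ i ∈ B j, y (j, i) • a j i)‖ := by
        rw [← hmean, sum_sub_distrib]
    _ ≤ ∑ j, (#(fracSupport fun i => y (j, i)) : ℝ) := norm_sum_le_of_le _ fun j _ =>
        norm_sum_sub_sum_smul_le (ha j) (fun i => hy (j, i)) (hSB j) (hSx j)
    _ = #(fracSupport y) := by
        rw [← Nat.cast_sum]
        simp only [fracSupport, card_filter, Fintype.sum_prod_type]
    _ ≤ 2 * d := by exact_mod_cast hdim ▸ card_fracSupport_le_two_mul_finrank a hy hrow hli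

lemma norm_sub_smul_sdiff_eq {p q : ℕ} (hpq : 0 < p + q) (U T : E) :
    ‖(T - U) - ((q : ℝ) / (p + q : ℕ)) • T‖ = ‖U - ((p : ℝ) / (p + q : ℕ)) • T‖ := by
  have hqp : (q : ℝ) / (p + q : ℕ) = 1 - (p : ℝ) / (p + q : ℕ) := by
    field_simp
    push_cast
    ring
  rw [hqp, ← norm_neg, sub_smul, one_smul]
  congr 1
  abel

lemma norm_sub_inv_smul_le_of_split {r : ℝ} {p s : ℕ} (hp : 0 < p) (hps : 4 * p ≤ 3 * s)
    {X U T : E} (hU : ‖U - ((p : ℝ) / s) • T‖ ≤ 2 * r)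
    (hX : ‖X - (p : ℝ)⁻¹ • U‖ ≤ 8 * r * (1 - 1 / p)) :
    ‖X - (s : ℝ)⁻¹ • T‖ ≤ 8 * r * (1 - 1 / s) := by
  have hp' : (0 : ℝ) < p := by exact_mod_cast hp
  have hs' : (0 : ℝ) < s := by exact_mod_cast (by omega : 0 < s)
  have hr : 0 ≤ r := by linarith [norm_nonneg (U - ((p : ℝ) / s) • T)]
  have hsplit :
      X - (s : ℝ)⁻¹ • T = (X - (p : ℝ)⁻¹ • U) + (p : ℝ)⁻¹ • (U - ((p : ℝ) / s) • T) := by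
    rw [smul_sub, smul_smul, show (p : ℝ)⁻¹ * (p / s) = (s : ℝ)⁻¹ by field_simp]
    abel
  have key : 8 * r / s ≤ 6 * r / p := by
    rw [div_le_div_iff₀ hs' hp']
    have : (4 * p : ℝ) ≤ 3 * s := by exact_mod_cast hps
    nlinarith
  calc ‖X - (s : ℝ)⁻¹ • T‖ ≤ ‖X - (p : ℝ)⁻¹ • U‖ + (p : ℝ)⁻¹ * ‖U - ((p : ℝ) / s) • T‖ := by
        rw [hsplit]
        exact (norm_add_le _ _).trans_eq (by rw [norm_smul, Real.norm_of_nonneg (by positivity)])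
    _ ≤ 8 * r * (1 - 1 / p) + (p : ℝ)⁻¹ * (2 * r) := by gcongr
    _ = 8 * r - 6 * r / p := by ring
    _ ≤ 8 * r - 8 * r / s := by linarith
    _ = 8 * r * (1 - 1 / s) := by ring

theorem exists_balanced_columns [FiniteDimensional ℝ E] {d : ℕ} (hdim : finrank ℝ E = d)
    (a : κ → ι → E) (ha : ∀ j i, ‖a j i‖ ≤ 1) (s : ℕ) (B : κ → Finset ι)
    (hB : ∀ j, #(B j) = s) :
    ∃ ψ : κ → Fin s → ι, (∀ j, Function.Injective (ψ j)) ∧ (∀ j c, ψ j c ∈ B j) ∧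
      ∀ c, ‖∑ j, a j (ψ j c) - (s : ℝ)⁻¹ • ∑ j, ∑ i ∈ B j, a j i‖ ≤ 8 * d * (1 - 1 / s) := by
  induction s using Nat.strong_induction_on generalizing B with
  | _ s ih =>
  rcases lt_or_ge s 2 with hs | hs
  · interval_cases s
    · exact ⟨fun _ => Fin.elim0, fun _ => Function.injective_of_subsingleton _,
        fun _ c => c.elim0, fun c => c.elim0⟩
    · choose b hb using fun j => card_eq_one.1 (hB j)
      exact ⟨fun j _ => b j, fun _ => Function.injective_of_subsingleton _,
        fun j _ => by simp [hb], fun _ => by simp [hb]⟩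
  obtain ⟨p, q, rfl, hp, hq, hp₃, hq₃⟩ : ∃ p q, s = p + q ∧ 0 < p ∧ 0 < q ∧
      4 * p ≤ 3 * (p + q) ∧ 4 * q ≤ 3 * (p + q) :=
    ⟨(s + 1) / 2, s / 2, by omega, by omega, by omega, by omega, by omega⟩
  obtain ⟨S, hSB, hS, hSnorm⟩ := exists_subsets_norm_sub_smul_le hdim a ha B hB (p.le_add_right q)
  obtain ⟨ψL, hψL_inj, hψL_mem, hψL⟩ := ih p (by omega) S hS
  obtain ⟨ψR, hψR_inj, hψR_mem, hψR⟩ := ih q (by omega) (fun j => B j \ S j) fun j => by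
    rw [card_sdiff_of_subset (hSB j), hB, hS]; omega
  have hR : ‖∑ j, ∑ i ∈ B j \ S j, a j i - ((q : ℝ) / (p + q : ℕ)) • ∑ j, ∑ i ∈ B j, a j i‖
      ≤ 2 * d := by
    have hT : ∑ j, ∑ i ∈ B j \ S j, a j i = ∑ j, ∑ i ∈ B j, a j i - ∑ j, ∑ i ∈ S j, a j i := by
      rw [← sum_sub_distrib]
      exact sum_congr rfl fun j _ => eq_sub_of_add_eq (sum_sdiff (hSB j))
    rw [hT, norm_sub_smul_sdiff_eq (by omega)]
    exact hSnorm
  refine ⟨fun j => Fin.append (ψL j) (ψR j), fun j => Fin.append_injective_iff.2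
    ⟨hψL_inj j, hψR_inj j, fun c c' h => (mem_sdiff.1 (hψR_mem j c')).2 (h ▸ hψL_mem j c)⟩,
    fun j c => Fin.addCases (fun c => ?_) (fun c => ?_) c,
    fun c => Fin.addCases (fun c => ?_) (fun c => ?_) c⟩
  · simpa using hSB j (hψL_mem j c)
  · simpa using (mem_sdiff.1 (hψR_mem j c)).1
  · simpa using norm_sub_inv_smul_le_of_split hp hp₃ hSnorm (hψL c)
  · simpa using norm_sub_inv_smul_le_of_split hq hq₃ hR (hψR c)

end Balancing

end

theorem colourful_steinitz_general
    (d k n : ℕ)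
    {E : Type*} [NormedAddCommGroup E] [NormedSpace ℝ E]
    [FiniteDimensional ℝ E] (hdim : Module.finrank ℝ E = d)
    (A : Fin k → Fin n → E)
    (hA : ∀ j i, ‖A j i‖ ≤ 1)
    (hsum : ∑ j : Fin k, ∑ i : Fin n, A j i = 0) :
    ∃ π : Fin k → Equiv.Perm (Fin n),
      ∀ m : ℕ, 1 ≤ m → m ≤ n →
        ‖∑ j : Fin k, ∑ i ∈ Finset.univ.filter (fun i : Fin n => (i : ℕ) < m),
            A j (π j i)‖ ≤ min ((d : ℝ) * k) (40 * d ^ 5) := by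
  obtain ⟨ψ, hψ_inj, -, hψ⟩ :=
    exists_balanced_columns hdim A hA n (fun _ => univ) fun _ => card_fin n
  let σ : Fin k → Equiv.Perm (Fin n) := fun j =>
    Equiv.ofBijective (ψ j) (Finite.injective_iff_bijective.1 (hψ_inj j))
  have hcol : ∀ c, ‖∑ j, A j (σ j c)‖ ≤ min (k : ℝ) (8 * d) := fun c => by
    have hψc : ‖∑ j, A j (ψ j c)‖ ≤ 8 * d * (1 - 1 / n) := by simpa [hsum] using hψ c
    refine le_min ((norm_sum_le_of_le _ fun j _ => hA j _).trans_eq (by simp)) ?_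
    exact hψc.trans (mul_le_of_le_one_right (by positivity) (sub_le_self _ (by positivity)))
  have hcol_sum : ∑ c, ∑ j, A j (σ j c) = 0 := by
    rw [sum_comm]
    simpa only [Equiv.sum_comp] using hsum
  obtain ⟨τ, hτ⟩ := exists_perm_norm_sum_filter_lt_le hdim (by positivity) hcol hcol_sum
  have hd : (d : ℝ) ^ 2 ≤ d ^ 5 := by
    rcases d.eq_zero_or_pos with rfl | hd
    · simp
    · exact pow_le_pow_right₀ (by exact_mod_cast hd) (by norm_num)
  refine ⟨fun j => τ.trans (σ j), fun m _ _ => ?_⟩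
  rw [sum_comm]
  calc _ ≤ d * min (k : ℝ) (8 * d) := hτ m
    _ ≤ min ((d : ℝ) * k) (40 * d ^ 5) := le_min (by gcongr; exact min_le_left _ _) (by
        nlinarith [mul_le_mul_of_nonneg_left (min_le_right (k : ℝ) (8 * d)) d.cast_nonneg])

/-- The colourful Steinitz lemma of Oertel, Paat, and Weismantel: if `A` is a
`k × n` matrix whose entries are vectors of norm at most `1` in a
`d`-dimensional real normed space and the total sum of the entries is zero,
then the rows of `A` can be rearranged (each row by its own permutation) so
that the sum of the entries in the first `m` columns has norm at most
`min (dk) (40 d^5)` for every `m ∈ {1, …, n}`. -/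
theorem colourful_steinitz
    (d k n : ℕ) (hd : 0 < d) (hk : 0 < k) (hn : 0 < n)
    {E : Type*} [NormedAddCommGroup E] [NormedSpace ℝ E]
    [FiniteDimensional ℝ E] (hdim : Module.finrank ℝ E = d)
    (A : Fin k → Fin n → E)
    (hA : ∀ j i, ‖A j i‖ ≤ 1)
    (hsum : ∑ j : Fin k, ∑ i : Fin n, A j i = 0) :
    ∃ π : Fin k → Equiv.Perm (Fin n),
      ∀ m : ℕ, 1 ≤ m → m ≤ n →
        ‖∑ j : Fin k, ∑ i ∈ Finset.univ.filter (fun i : Fin n => (i : ℕ) < m),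
            A j (π j i)‖ ≤ min ((d : ℝ) * k) (40 * d ^ 5) :=
  colourful_steinitz_general d k n hdim A hA hsum
end

section
/- Let d, N be positive integers and let ‖·‖ be any norm on ℝ^d. If a_1, …, a_N ∈ ℝ^d satisfy ‖a_i‖ ≤ 1 for all i and ∑_{i=1}^N a_i = 0, then there is a permutation π of {1,…,N} such that the reordered sequence c_i = a_{π(i)} satisfies ‖∑_{i=1}^m c_i‖ ≤ d for every m ∈ {1,…,N}. -/
open Finset

section
variable {E : Type*} [NormedAddCommGroup E] [NormedSpace ℝ E]

def SteinitzGood {N : ℕ} (a : Fin N → E) (A : Finset (Fin N)) (s : ℝ) : Prop :=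
  ∃ lam : Fin N → ℝ, (∀ i, 0 ≤ lam i ∧ lam i ≤ 1) ∧ (∀ i ∉ A, lam i = 0) ∧
    (∑ i ∈ A, lam i = s) ∧ (∑ i ∈ A, lam i • a i = 0)


lemma steinitz_exists_relation [FiniteDimensional ℝ E] {d N : ℕ} (hdim : Module.finrank ℝ E = d)
    (a : Fin N → E) (F : Finset (Fin N)) (hF : d + 1 < F.card) :
    ∃ μ : Fin N → ℝ, (∀ i ∉ F, μ i = 0) ∧ (∑ i ∈ F, μ i = 0) ∧
      (∑ i ∈ F, μ i • a i = 0) ∧ ∃ i ∈ F, μ i ≠ 0 := by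
  have hnli : ¬ LinearIndependent ℝ (fun i : F => ((1:ℝ), a i)) := by
    intro h
    have h2 := h.fintype_card_le_finrank
    rw [Module.finrank_prod, hdim, Module.finrank_self, Fintype.card_coe] at h2
    omega
  obtain ⟨g, hg0, i0, hi0⟩ := Fintype.not_linearIndependent_iff.mp hnli
  refine ⟨fun i => if h : i ∈ F then g ⟨i, h⟩ else 0, fun i hi => dif_neg hi, ?_, ?_,
    i0, i0.2, by simpa using hi0⟩
  · have h1 := congrArg Prod.fst hg0
    simp only [Prod.fst_sum, Prod.smul_fst, Prod.fst_zero, smul_eq_mul, mul_one] at h1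
    rw [← Finset.sum_attach F]
    simpa using h1
  · have h2 := congrArg Prod.snd hg0
    simp only [Prod.snd_sum, Prod.smul_snd, Prod.snd_zero] at h2
    rw [← Finset.sum_attach F (fun i => (if h : i ∈ F then g ⟨i, h⟩ else 0) • a i)]
    simpa using h2

lemma steinitz_reduce [FiniteDimensional ℝ E] {d N : ℕ} (hdim : Module.finrank ℝ E = d)
    (a : Fin N → E) (A : Finset (Fin N)) (s : ℝ)
    (lam : Fin N → ℝ) (hb : ∀ i, 0 ≤ lam i ∧ lam i ≤ 1) (hsupp : ∀ i ∉ A, lam i = 0)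
    (hs : ∑ i ∈ A, lam i = s) (hv : ∑ i ∈ A, lam i • a i = 0)
    (hF : d + 1 < (A.filter (fun i => lam i ≠ 0 ∧ lam i ≠ 1)).card) :
    ∃ lam' : Fin N → ℝ, (∀ i, 0 ≤ lam' i ∧ lam' i ≤ 1) ∧ (∀ i ∉ A, lam' i = 0) ∧
      (∑ i ∈ A, lam' i = s) ∧ (∑ i ∈ A, lam' i • a i = 0) ∧
      (A.filter (fun i => lam' i ≠ 0 ∧ lam' i ≠ 1)).card <
        (A.filter (fun i => lam i ≠ 0 ∧ lam i ≠ 1)).card := by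
  set F := A.filter (fun i => lam i ≠ 0 ∧ lam i ≠ 1) with hFdef
  obtain ⟨μ, hμ0, hμsum, hμvec, i1, hi1F, hi1⟩ := steinitz_exists_relation hdim a F hF
  have hfrac : ∀ i ∈ F, 0 < lam i ∧ lam i < 1 := by
    intro i hi
    rw [hFdef, mem_filter] at hi
    exact ⟨lt_of_le_of_ne (hb i).1 (Ne.symm hi.2.1), lt_of_le_of_ne (hb i).2 hi.2.2⟩
  set b : Fin N → ℝ := fun i => if 0 < μ i then (1 - lam i) / μ i else lam i / (-μ i) with hbdef
  set S := F.filter (fun i => μ i ≠ 0) with hSdef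
  have hS : S.Nonempty := ⟨i1, mem_filter.mpr ⟨hi1F, hi1⟩⟩
  obtain ⟨i0, hi0S, hi0min⟩ := S.exists_min_image b hS
  have hi0F : i0 ∈ F := (mem_filter.mp hi0S).1
  have hi0μ : μ i0 ≠ 0 := (mem_filter.mp hi0S).2
  set t := b i0 with htdef
  have ht : 0 ≤ t := by
    rw [htdef, hbdef]
    rcases (hfrac i0 hi0F) with ⟨h1, h2⟩
    by_cases hc : 0 < μ i0
    · simp only [hc, if_pos]
      exact div_nonneg (by linarith) hc.le
    · simp only [hc, if_neg]
      exact div_nonneg h1.le (by cases (hi0μ.lt_or_gt) with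
        | inl h => linarith
        | inr h => exact absurd h hc)
  -- bounds for perturbed coefficients
  have hbound : ∀ i, 0 ≤ lam i + t * μ i ∧ lam i + t * μ i ≤ 1 := by
    intro i
    by_cases hμi : μ i = 0
    · simp [hμi]; exact hb i
    · have hiS : i ∈ S := by
        rw [hSdef, mem_filter]
        refine ⟨?_, hμi⟩
        by_contra hiF
        exact hμi (hμ0 i hiF)
      have hmin := hi0min i hiS
      rcases lt_or_gt_of_ne hμi with hneg | hpos
      · have hbi : b i = lam i / (-μ i) := by rw [hbdef]; simp [not_lt.mpr hneg.le]
        have h1 : t * (-μ i) ≤ lam i := by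
          have := mul_le_mul_of_nonneg_right (hmin.trans_eq hbi) (by linarith : (0:ℝ) ≤ -μ i)
          rwa [div_mul_cancel₀ _ (by linarith : -μ i ≠ 0)] at this
        constructor
        · nlinarith
        · nlinarith [(hb i).2, mul_nonneg ht (neg_nonneg.mpr hneg.le)]
      · have hbi : b i = (1 - lam i) / μ i := by rw [hbdef]; simp [hpos]
        have h1 : t * μ i ≤ 1 - lam i := by
          have := mul_le_mul_of_nonneg_right (hmin.trans_eq hbi) hpos.le
          rwa [div_mul_cancel₀ _ hpos.ne'] at this
        constructor
        · nlinarith [(hb i).1, mul_nonneg ht hpos.le]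
        · linarith
  -- the minimizer hits the boundary
  have hi0hit : lam i0 + t * μ i0 = 0 ∨ lam i0 + t * μ i0 = 1 := by
    rcases lt_or_gt_of_ne hi0μ with hneg | hpos
    · left
      rw [htdef, hbdef]
      simp only [not_lt.mpr hneg.le, if_neg, if_false]
      rw [div_mul_eq_mul_div, div_neg, mul_div_assoc, div_self hi0μ, mul_one]
      ring
    · right
      rw [htdef, hbdef]
      simp only [hpos, if_pos, if_true]
      rw [div_mul_eq_mul_div, mul_div_assoc, div_self hi0μ]
      ring
  have hμA : ∀ i ∈ A, i ∉ F → μ i = 0 := fun i _ hiF => hμ0 i hiF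
  have hsumμA : ∑ i ∈ A, μ i = 0 := by
    rw [← hμsum]
    exact (Finset.sum_subset (filter_subset _ _) (fun i hi hiF => hμ0 i hiF)).symm
  have hvecμA : ∑ i ∈ A, μ i • a i = 0 := by
    rw [← hμvec]
    exact (Finset.sum_subset (filter_subset _ _) (fun i hi hiF => by rw [hμ0 i hiF, zero_smul])).symm
  refine ⟨fun i => lam i + t * μ i, hbound, ?_, ?_, ?_, ?_⟩
  · intro i hi
    have : μ i = 0 := hμ0 i (fun hiF => hi (filter_subset _ _ hiF))
    simp [hsupp i hi, this]
  · rw [Finset.sum_add_distrib, hs, ← Finset.mul_sum, hsumμA, mul_zero, add_zero]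
  · simp only [add_smul, mul_smul]
    rw [Finset.sum_add_distrib, hv, ← Finset.smul_sum, hvecμA, smul_zero, add_zero]
  · have hsub : A.filter (fun i => lam i + t * μ i ≠ 0 ∧ lam i + t * μ i ≠ 1) ⊆ F.erase i0 := by
      intro i hi
      rw [mem_filter] at hi
      rw [mem_erase]
      constructor
      · rintro rfl
        rcases hi0hit with h | h
        · exact hi.2.1 h
        · exact hi.2.2 h
      · by_contra hiF
        have hμi : μ i = 0 := hμ0 i hiF
        have : lam i ≠ 0 ∧ lam i ≠ 1 := by
          simpa [hμi] using hi.2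
        exact hiF (mem_filter.mpr ⟨hi.1, this⟩)
    calc (A.filter (fun i => lam i + t * μ i ≠ 0 ∧ lam i + t * μ i ≠ 1)).card
        ≤ (F.erase i0).card := Finset.card_le_card hsub
      _ < F.card := Finset.card_erase_lt_of_mem hi0F

lemma steinitz_min_frac [FiniteDimensional ℝ E] {d N : ℕ} (hdim : Module.finrank ℝ E = d)
    (a : Fin N → E) (A : Finset (Fin N)) (s : ℝ) (h : SteinitzGood a A s) :
    ∃ lam : Fin N → ℝ, (∀ i, 0 ≤ lam i ∧ lam i ≤ 1) ∧ (∀ i ∉ A, lam i = 0) ∧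
      (∑ i ∈ A, lam i = s) ∧ (∑ i ∈ A, lam i • a i = 0) ∧
      (A.filter (fun i => lam i ≠ 0 ∧ lam i ≠ 1)).card ≤ d + 1 := by
  obtain ⟨lam, h1, h2, h3, h4⟩ := h
  have key : ∀ n (lam : Fin N → ℝ), (∀ i, 0 ≤ lam i ∧ lam i ≤ 1) → (∀ i ∉ A, lam i = 0) →
      (∑ i ∈ A, lam i = s) → (∑ i ∈ A, lam i • a i = 0) →
      (A.filter (fun i => lam i ≠ 0 ∧ lam i ≠ 1)).card ≤ n →
      ∃ lam : Fin N → ℝ, (∀ i, 0 ≤ lam i ∧ lam i ≤ 1) ∧ (∀ i ∉ A, lam i = 0) ∧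
        (∑ i ∈ A, lam i = s) ∧ (∑ i ∈ A, lam i • a i = 0) ∧
        (A.filter (fun i => lam i ≠ 0 ∧ lam i ≠ 1)).card ≤ d + 1 := by
    intro n
    induction n with
    | zero => exact fun lam h1 h2 h3 h4 hc => ⟨lam, h1, h2, h3, h4, hc.trans (by omega)⟩
    | succ n ih =>
      intro lam h1 h2 h3 h4 hc
      by_cases hle : (A.filter (fun i => lam i ≠ 0 ∧ lam i ≠ 1)).card ≤ d + 1
      · exact ⟨lam, h1, h2, h3, h4, hle⟩
      · obtain ⟨lam', g1, g2, g3, g4, g5⟩ :=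
          steinitz_reduce hdim a A s lam h1 h2 h3 h4 (by omega)
        exact ih lam' g1 g2 g3 g4 (by omega)
  exact key _ lam h1 h2 h3 h4 le_rfl

lemma steinitz_zero_coord {d N : ℕ} (A : Finset (Fin N)) (lam : Fin N → ℝ)
    (hb : ∀ i, 0 ≤ lam i ∧ lam i ≤ 1)
    (hs : ∑ i ∈ A, lam i = (A.card : ℝ) - 1 - d)
    (hfc : (A.filter (fun i => lam i ≠ 0 ∧ lam i ≠ 1)).card ≤ d + 1) :
    ∃ i ∈ A, lam i = 0 := by
  by_contra hno
  push_neg at hno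
  have hFeq : A.filter (fun i => lam i ≠ 0 ∧ lam i ≠ 1) = A.filter (fun i => ¬ lam i = 1) :=
    filter_congr (fun i hi => by simp [hno i hi])
  set F := A.filter (fun i => ¬ lam i = 1) with hFdef
  set O := A.filter (fun i => lam i = 1) with hOdef
  have hsplit : ∑ i ∈ O, lam i + ∑ i ∈ F, lam i = ∑ i ∈ A, lam i :=
    Finset.sum_filter_add_sum_filter_not A _ _
  have hOsum : ∑ i ∈ O, lam i = (O.card : ℝ) := by
    rw [Finset.sum_congr rfl (fun i hi => (mem_filter.mp hi).2)]
    simp [hOdef]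
  have hcards : O.card + F.card = A.card := Finset.card_filter_add_card_filter_not _
  have hFpos : ∀ i ∈ F, 0 < lam i :=
    fun i hi => lt_of_le_of_ne (hb i).1 (Ne.symm (hno i (mem_filter.mp hi).1))
  rcases F.eq_empty_or_nonempty with hFe | hFne
  · have hOA : O.card = A.card := by
      rw [hFe, card_empty] at hcards; omega
    rw [hFe] at hsplit
    simp only [Finset.sum_empty, add_zero] at hsplit
    have hOAr : (O.card : ℝ) = (A.card : ℝ) := by exact_mod_cast hOA
    rw [hOsum, hs, hOAr] at hsplit
    have hd : (0:ℝ) ≤ d := Nat.cast_nonneg d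
    linarith
  · have hFsum : 0 < ∑ i ∈ F, lam i := Finset.sum_pos hFpos hFne
    have hcast : (O.card : ℝ) + (F.card : ℝ) = (A.card : ℝ) := by exact_mod_cast hcards
    have hFcard : (F.card : ℝ) ≤ (d : ℝ) + 1 := by
      rw [hFeq] at hfc
      exact_mod_cast hfc
    have hFsum_le : ∑ i ∈ F, lam i ≤ 0 := by
      rw [hOsum, hs] at hsplit
      -- ∑_F lam = A.card - 1 - d - O.card = F.card - 1 - d ≤ 0
      nlinarith
    linarith

lemma steinitz_scale {N : ℕ} (a : Fin N → E) (A : Finset (Fin N)) (s : ℝ) (c : ℝ)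
    (hc0 : 0 ≤ c) (hc1 : c ≤ 1) (h : SteinitzGood a A s) : SteinitzGood a A (c * s) := by
  obtain ⟨lam, h1, h2, h3, h4⟩ := h
  refine ⟨fun i => c * lam i, fun i => ⟨mul_nonneg hc0 (h1 i).1, ?_⟩,
    fun i hi => by simp [h2 i hi], ?_, ?_⟩
  · calc c * lam i ≤ 1 * lam i := mul_le_mul_of_nonneg_right hc1 (h1 i).1
      _ = lam i := one_mul _
      _ ≤ 1 := (h1 i).2
  · rw [← Finset.mul_sum, h3]
  · simp only [mul_smul]
    rw [← Finset.smul_sum, h4, smul_zero]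

lemma steinitz_step [FiniteDimensional ℝ E] {d N : ℕ} (hdim : Module.finrank ℝ E = d)
    (a : Fin N → E) (A : Finset (Fin N)) (hcard : d + 1 ≤ A.card)
    (h : SteinitzGood a A ((A.card : ℝ) - d)) :
    ∃ i ∈ A, SteinitzGood a (A.erase i) (((A.erase i).card : ℝ) - d) := by
  have hkd : (1:ℝ) ≤ (A.card : ℝ) - d := by
    have : (d:ℝ) + 1 ≤ (A.card : ℝ) := by exact_mod_cast hcard
    linarith
  set c : ℝ := ((A.card : ℝ) - 1 - d) / ((A.card : ℝ) - d) with hcdef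
  have hc0 : 0 ≤ c := div_nonneg (by linarith) (by linarith)
  have hc1 : c ≤ 1 := by
    rw [hcdef, div_le_one (by linarith)]
    linarith
  have hGood : SteinitzGood a A ((A.card : ℝ) - 1 - d) := by
    have := steinitz_scale a A _ c hc0 hc1 h
    rwa [hcdef, div_mul_cancel₀ _ (by linarith : (A.card : ℝ) - d ≠ 0)] at this
  obtain ⟨lam, h1, h2, h3, h4, h5⟩ := steinitz_min_frac hdim a A _ hGood
  obtain ⟨i, hiA, hi0⟩ := steinitz_zero_coord A lam h1 h3 h5
  refine ⟨i, hiA, lam, h1, ?_, ?_, ?_⟩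
  · intro j hj
    by_cases hjA : j ∈ A
    · have : j = i := by
        by_contra hne
        exact hj (mem_erase.mpr ⟨hne, hjA⟩)
      rw [this]; exact hi0
    · exact h2 j hjA
  · rw [Finset.sum_erase A (by rw [hi0] : lam i = 0), h3,
      Finset.card_erase_of_mem hiA]
    have h1' : 1 ≤ A.card := by omega
    push_cast [h1']
    ring
  · rw [Finset.sum_erase A (by rw [hi0, zero_smul] : lam i • a i = 0), h4]

lemma steinitz_chain [FiniteDimensional ℝ E] {d N : ℕ} (hdim : Module.finrank ℝ E = d)
    (hN : 0 < N) (a : Fin N → E) (hsum : ∑ i : Fin N, a i = 0) :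
    ∀ n ≤ N, ∃ T : ℕ → Finset (Fin N),
      (∀ k, N - n ≤ k → k ≤ N → (T k).card = k ∧ (d ≤ k → SteinitzGood a (T k) ((k:ℝ) - d))) ∧
      (∀ k, N - n ≤ k → k < N → T k ⊆ T (k + 1)) := by
  intro n
  induction n with
  | zero =>
    intro _
    refine ⟨fun _ => Finset.univ, ?_, ?_⟩
    · intro k hk1 hk2
      have hkN : k = N := by omega
      subst hkN
      refine ⟨by simp, fun hdk => ?_⟩
      refine ⟨fun _ => ((k:ℝ) - d) / k, fun i => ⟨?_, ?_⟩, fun i hi => absurd (mem_univ i) hi,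
        ?_, ?_⟩
      · apply div_nonneg _ (Nat.cast_nonneg k)
        have : (d:ℝ) ≤ k := by exact_mod_cast hdk
        linarith
      · rw [div_le_one (by exact_mod_cast hN : (0:ℝ) < k)]
        have : (0:ℝ) ≤ d := Nat.cast_nonneg d
        linarith
      · rw [Finset.sum_const, Finset.card_univ, Fintype.card_fin, nsmul_eq_mul,
          mul_div_cancel₀ _ (by exact_mod_cast hN.ne' : (k:ℝ) ≠ 0)]
      · rw [← Finset.smul_sum, hsum, smul_zero]
    · intro k hk1 hk2; omega
  | succ n ih =>
    intro hn1
    obtain ⟨T, hT1, hT2⟩ := ih (by omega)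
    set k₀ := N - n with hk₀
    have hk₀1 : 1 ≤ k₀ := by omega
    have hk₀N : k₀ ≤ N := by omega
    have hck₀ : (T k₀).card = k₀ := (hT1 k₀ le_rfl hk₀N).1
    have hstep : ∃ B : Finset (Fin N), B ⊆ T k₀ ∧ B.card = k₀ - 1 ∧
        (d ≤ k₀ - 1 → SteinitzGood a B ((↑(k₀ - 1) : ℝ) - d)) := by
      by_cases hdk : d + 1 ≤ k₀
      · obtain ⟨i, hiA, hGood⟩ := steinitz_step hdim a (T k₀) (by omega)
          (by rw [hck₀]; exact (hT1 k₀ le_rfl hk₀N).2 (by omega))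
        refine ⟨(T k₀).erase i, Finset.erase_subset _ _, ?_, fun _ => ?_⟩
        · rw [Finset.card_erase_of_mem hiA, hck₀]
        · have hc : ((T k₀).erase i).card = k₀ - 1 := by
            rw [Finset.card_erase_of_mem hiA, hck₀]
          rw [← hc]
          exact hGood
      · have hne : (T k₀).Nonempty := Finset.card_pos.mp (by omega)
        obtain ⟨i, hiA⟩ := hne
        refine ⟨(T k₀).erase i, Finset.erase_subset _ _, ?_, fun hdd => ?_⟩
        · rw [Finset.card_erase_of_mem hiA, hck₀]
        · omega
    obtain ⟨B, hBsub, hBcard, hBGood⟩ := hstep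
    refine ⟨fun k => if k < k₀ then B else T k, ?_, ?_⟩
    · intro k hk1 hk2
      by_cases hkk : k < k₀
      · have hkeq : k = k₀ - 1 := by omega
        simp only [hkk, if_pos]
        subst hkeq
        exact ⟨hBcard, hBGood⟩
      · simp only [hkk, if_neg]
        exact hT1 k (by omega) hk2
    · intro k hk1 hk2
      by_cases hkk : k < k₀
      · have hkeq : k = k₀ - 1 := by omega
        have hk1k : ¬ (k + 1 < k₀) := by omega
        have hk1eq : k + 1 = k₀ := by omega
        simp only [hkk, if_pos]
        rw [hk1eq, if_neg (lt_irrefl k₀)]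
        exact hBsub
      · have : ¬ (k + 1 < k₀) := by omega
        simp only [hkk, if_neg, this]
        exact hT2 k (by omega) hk2
end

/-- The Steinitz lemma with the constant `d` of Grinberg and Sevastyanov:
a sequence of vectors of norm at most `1` in a `d`-dimensional real normed
space summing to zero can be reordered so that every partial sum of the
reordered sequence has norm at most `d`. -/
theorem steinitz_lemma
    (d N : ℕ) (hd : 0 < d) (hN : 0 < N)
    {E : Type*} [NormedAddCommGroup E] [NormedSpace ℝ E]
    [FiniteDimensional ℝ E] (hdim : Module.finrank ℝ E = d)
    (a : Fin N → E)
    (ha : ∀ i, ‖a i‖ ≤ 1)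
    (hsum : ∑ i : Fin N, a i = 0) :
    ∃ π : Equiv.Perm (Fin N),
      ∀ m : ℕ, 1 ≤ m → m ≤ N →
        ‖∑ i ∈ Finset.univ.filter (fun i : Fin N => (i : ℕ) < m), a (π i)‖
          ≤ d := by
  classical
  obtain ⟨T, hT1, hT2⟩ := steinitz_chain hdim hN a hsum N le_rfl
  have hTcard : ∀ k ≤ N, (T k).card = k := fun k hk => (hT1 k (by omega) hk).1
  have hTGood : ∀ k, d ≤ k → k ≤ N → SteinitzGood a (T k) ((k:ℝ) - d) :=
    fun k h1 h2 => (hT1 k (by omega) h2).2 h1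
  have hTsub : ∀ k, k < N → T k ⊆ T (k+1) := fun k hk => hT2 k (by omega) hk
  have hTmono : ∀ j k, j ≤ k → k ≤ N → T j ⊆ T k := by
    intro j k hjk hkN
    induction k with
    | zero => rw [Nat.le_zero.mp hjk]
    | succ k ih =>
      rcases Nat.lt_or_ge j (k+1) with h | h
      · exact (ih (by omega) (by omega)).trans (hTsub k (by omega))
      · have : j = k+1 := by omega
        rw [this]
  have hdiff : ∀ m : Fin N, ∃ x, T ((m:ℕ)+1) \ T (m:ℕ) = {x} := by
    intro m
    have hsub := hTsub m m.2
    have hcard : (T ((m:ℕ)+1) \ T (m:ℕ)).card = 1 := by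
      rw [Finset.card_sdiff_of_subset hsub, hTcard _ m.2.le, hTcard _ (by omega)]
      omega
    exact Finset.card_eq_one.mp hcard
  choose g hg using hdiff
  have hgmem : ∀ m : Fin N, g m ∈ T ((m:ℕ)+1) ∧ g m ∉ T (m:ℕ) := by
    intro m
    have h := hg m
    have : g m ∈ T ((m:ℕ)+1) \ T (m:ℕ) := h ▸ Finset.mem_singleton_self _
    exact ⟨(Finset.mem_sdiff.mp this).1, (Finset.mem_sdiff.mp this).2⟩
  have hginj : Function.Injective g := by
    have key : ∀ m m' : Fin N, (m:ℕ) < (m':ℕ) → g m ≠ g m' := by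
      intro m m' hlt heq
      have h1 : g m ∈ T ((m:ℕ)+1) := (hgmem m).1
      have h2 : T ((m:ℕ)+1) ⊆ T (m':ℕ) := hTmono _ _ (by omega) m'.2.le
      exact (hgmem m').2 (heq ▸ h2 h1)
    intro m m' h
    by_contra hne
    rcases Nat.lt_or_ge (m:ℕ) (m':ℕ) with hc | hc
    · exact key m m' hc h
    · have hc' : (m':ℕ) < (m:ℕ) := by
        rcases Nat.eq_or_lt_of_le hc with h' | h'
        · exact absurd (Fin.ext h'.symm) hne
        · exact h'
      exact key m' m hc' h.symm
  have hgbij : Function.Bijective g := Finite.injective_iff_bijective.mp hginj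
  have himage : ∀ m ≤ N, (Finset.univ.filter (fun i : Fin N => (i:ℕ) < m)).image g = T m := by
    intro m
    induction m with
    | zero =>
      intro _
      have h1 : (Finset.univ.filter (fun i : Fin N => (i:ℕ) < 0)) = ∅ := by
        apply Finset.filter_false_of_mem; intro i _; omega
      have h2 : T 0 = ∅ := Finset.card_eq_zero.mp (hTcard 0 (by omega))
      rw [h1, h2, Finset.image_empty]
    | succ m ih =>
      intro hm
      have hmN : m < N := by omega
      have hfil : (Finset.univ.filter (fun i : Fin N => (i:ℕ) < m + 1)) =
          insert ⟨m, hmN⟩ (Finset.univ.filter (fun i : Fin N => (i:ℕ) < m)) := by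
        ext i
        simp only [Finset.mem_filter, Finset.mem_univ, true_and, Finset.mem_insert]
        constructor
        · intro h
          rcases Nat.lt_or_ge (i:ℕ) m with h' | h'
          · exact Or.inr h'
          · exact Or.inl (Fin.ext (show (i:ℕ) = m by omega))
        · rintro (rfl | h)
          · show m < m + 1; omega
          · omega
      have hmval : ((⟨m, hmN⟩ : Fin N) : ℕ) = m := rfl
      have hins : T (m+1) = insert (g ⟨m, hmN⟩) (T m) := by
        have hsub2 : insert (g ⟨m, hmN⟩) (T m) ⊆ T (m+1) := by
          apply Finset.insert_subset
          · have := (hgmem ⟨m, hmN⟩).1; rwa [hmval] at this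
          · exact hTsub m hmN
        refine (Finset.eq_of_subset_of_card_le hsub2 ?_).symm
        rw [Finset.card_insert_of_notMem (by have := (hgmem ⟨m, hmN⟩).2; rwa [hmval] at this),
          hTcard _ hm, hTcard _ hmN.le]
      rw [hfil, Finset.image_insert, ih hmN.le, hins]
  set π := Equiv.ofBijective g hgbij with hπ
  refine ⟨π, ?_⟩
  intro m hm1 hmN
  have hsum_eq : ∑ i ∈ Finset.univ.filter (fun i : Fin N => (i : ℕ) < m), a (π i)
      = ∑ j ∈ T m, a j := by
    rw [← himage m hmN]
    rw [Finset.sum_image (fun x _ y _ h => hginj h)]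
    rfl
  rw [hsum_eq]
  rcases Nat.lt_or_ge m d with hcase | hcase
  · calc ‖∑ j ∈ T m, a j‖ ≤ ∑ j ∈ T m, ‖a j‖ := norm_sum_le _ _
      _ ≤ ∑ _j ∈ T m, (1:ℝ) := Finset.sum_le_sum (fun j _ => ha j)
      _ = (m : ℝ) := by rw [Finset.sum_const, hTcard m hmN]; simp
      _ ≤ (d : ℝ) := by exact_mod_cast hcase.le
  · obtain ⟨lam, hb, hsupp, hs, hv⟩ := hTGood m hcase hmN
    have hrw : ∑ j ∈ T m, a j = ∑ j ∈ T m, (1 - lam j) • a j := by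
      simp only [sub_smul, one_smul]
      rw [Finset.sum_sub_distrib, hv, sub_zero]
    rw [hrw]
    calc ‖∑ j ∈ T m, (1 - lam j) • a j‖ ≤ ∑ j ∈ T m, ‖(1 - lam j) • a j‖ := norm_sum_le _ _
      _ ≤ ∑ j ∈ T m, (1 - lam j) := by
          apply Finset.sum_le_sum
          intro j _
          rw [norm_smul, Real.norm_eq_abs, abs_of_nonneg (by linarith [(hb j).2])]
          have h1 : 0 ≤ 1 - lam j := by linarith [(hb j).2]
          nlinarith [ha j, norm_nonneg (a j), (hb j).1]
      _ = (d : ℝ) := by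
          rw [Finset.sum_sub_distrib, Finset.sum_const, hTcard m hmN, hs]
          simp
end

section
/- Let d be a positive integer, let K ⊂ ℝ^d be a compact convex set containing the origin in its interior, and let ‖x‖_K = min{t ≥ 0 : x ∈ tK} be its gauge (Minkowski functional). If a_1, …, a_N ∈ ℝ^d satisfy ‖a_i‖_K ≤ 1 for all i and ∑_{i=1}^N a_i = 0, then there is a permutation π of {1,…,N} such that the reordered sequence c_i = a_{π(i)} satisfies ‖∑_{i=1}^m c_i‖_K ≤ d for every m ∈ {1,…,N}. -/
/-!
Grinberg–Sevastyanov. Going down from `A_N = {1, …, N}`, one removes one index at a time so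
that every remaining set `A_k` (`#A_k = k ≥ d`) carries weights `λ ∈ [0,1]^{A_k}` with
`∑ λ_i a_i = 0` and `∑ λ_i = k - d`. To pass from `A_k` to `A_{k-1}`, take an extreme point of
the (compact, nonempty after rescaling) polytope of such weights with total `k - d - 1`: the
`d + 1` linear equations allow at most `d + 1` fractional coordinates there, and counting then
forces a coordinate equal to `0`, which is the index removed. The weights bound the partial sums,
since `∑_{A_k} a_i = ∑_{A_k} (1 - λ_i) a_i` has gauge at most `∑ (1 - λ_i) = d`.
-/

open Finset Module Filter Topology

lemma eq_zero_of_add_mem_of_sub_mem_of_mem_extremePoints {V : Type*} [AddCommGroup V]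
    [Module ℝ V] {A : Set V} {x v : V} (hx : x ∈ A.extremePoints ℝ) (hadd : x + v ∈ A)
    (hsub : x - v ∈ A) : v = 0 := by
  have hmid : x ∈ openSegment ℝ (x - v) (x + v) :=
    ⟨1 / 2, 1 / 2, by norm_num, by norm_num, by norm_num, by module⟩
  simpa using hx.2 hsub hadd hmid

section

variable {ι F : Type*} [Fintype ι] [AddCommGroup F] [Module ℝ F] [FiniteDimensional ℝ F]

lemma exists_ne_zero_map_eq_zero_of_finrank_lt_card (L : (ι → ℝ) →ₗ[ℝ] F) (S : Finset ι)
    (h : finrank ℝ F < #S) : ∃ v, L v = 0 ∧ v ≠ 0 ∧ ∀ i ∉ S, v i = 0 := by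
  set e := Function.ExtendByZero.linearMap ℝ (Subtype.val : S → ι)
  have hker : LinearMap.ker (L ∘ₗ e) ≠ ⊥ :=
    LinearMap.ker_ne_bot_of_finrank_lt (by simpa using h)
  obtain ⟨g, hg, hg0⟩ := (Submodule.ne_bot_iff _).1 hker
  have he : ∀ s : S, e g s = g s := fun s => Subtype.val_injective.extend_apply _ _ _
  refine ⟨e g, hg, fun h0 => hg0 (funext fun s => by simpa [h0] using (he s).symm), ?_⟩
  intro i hi
  exact Function.extend_apply' _ _ _ fun ⟨s, hs⟩ => hi (hs ▸ s.2)

theorem card_filter_mem_Ioo_le_finrank {l u : ι → ℝ} {L : (ι → ℝ) →ₗ[ℝ] F} {c : F}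
    {μ : ι → ℝ}
    (hμ : μ ∈ (Set.univ.pi (fun i => Set.Icc (l i) (u i)) ∩ L ⁻¹' {c}).extremePoints ℝ) :
    #{i | μ i ∈ Set.Ioo (l i) (u i)} ≤ finrank ℝ F := by
  -- Otherwise some `v ≠ 0` in `ker L` is supported on the fractional coordinates, and `μ ± t • v`
  -- stay in the set for small `t`, so `μ` is not extreme.
  by_contra! h
  obtain ⟨v, hLv, hv0, hvS⟩ := exists_ne_zero_map_eq_zero_of_finrank_lt_card L _ h
  set P := Set.univ.pi (fun i => Set.Icc (l i) (u i)) ∩ L ⁻¹' {c}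
  have hline : ∀ᶠ t : ℝ in 𝓝 0, μ + t • v ∈ P := by
    have hcoord : ∀ i, ∀ᶠ t : ℝ in 𝓝 0, μ i + t * v i ∈ Set.Icc (l i) (u i) := by
      intro i
      by_cases hi : μ i ∈ Set.Ioo (l i) (u i)
      · have hcont : Tendsto (fun t : ℝ => μ i + t * v i) (𝓝 0) (𝓝 (μ i)) :=
          (by fun_prop : Continuous fun t : ℝ => μ i + t * v i).tendsto' 0 _ (by simp)
        exact (hcont.eventually (Ioo_mem_nhds hi.1 hi.2)).mono fun _ h => Set.Ioo_subset_Icc_self h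
      · simpa [hvS i (by simpa using hi)] using hμ.1.1 i (Set.mem_univ i)
    filter_upwards [eventually_all.2 hcoord] with t ht
    exact ⟨fun i _ => ht i, by simpa [hLv] using hμ.1.2⟩
  have hneg : ∀ᶠ t : ℝ in 𝓝 0, μ - t • v ∈ P := by
    simpa [← sub_eq_add_neg] using (continuous_neg.tendsto' (0 : ℝ) 0 neg_zero).eventually hline
  obtain ⟨t, ⟨hadd, hsub⟩, ht⟩ :=
    ((hline.and hneg).filter_mono nhdsWithin_le_nhds |>.and self_mem_nhdsWithin).exists
      (f := 𝓝[≠] (0 : ℝ))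
  have := eq_zero_of_add_mem_of_sub_mem_of_mem_extremePoints hμ hadd hsub
  exact hv0 ((smul_eq_zero.1 this).resolve_left ht)

end

lemma LinearMap.isClosed_preimage_singleton {V F : Type*} [AddCommGroup V] [Module ℝ V]
    [TopologicalSpace V] [IsTopologicalAddGroup V] [ContinuousSMul ℝ V] [T2Space V]
    [FiniteDimensional ℝ V] [AddCommGroup F] [Module ℝ F] (L : V →ₗ[ℝ] F) (c : F) :
    IsClosed (L ⁻¹' {c}) := by
  rcases (L ⁻¹' {c}).eq_empty_or_nonempty with h | ⟨x₀, hx₀⟩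
  · simp [h]
  have hfiber : L ⁻¹' {c} = (· - x₀) ⁻¹' (LinearMap.ker L) := by
    ext x
    simp_all [sub_eq_zero]
  rw [hfiber]
  exact (Submodule.closed_of_finiteDimensional _).preimage (continuous_sub_right x₀)

section

variable {ι : Type*} [DecidableEq ι]

lemma exists_list_forall_drop (P : Finset ι → Prop)
    (herase : ∀ A, P A → A.Nonempty → ∃ i ∈ A, P (A.erase i)) (A : Finset ι) (hA : P A) :
    ∃ l : List ι, l.Nodup ∧ l.toFinset = A ∧ ∀ m, P (l.drop m).toFinset := by
  induction A using Finset.strongInduction with | H A ih => ?_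
  rcases A.eq_empty_or_nonempty with rfl | hne
  · exact ⟨[], List.nodup_nil, rfl, fun _ => by simpa using hA⟩
  obtain ⟨i, hi, hPi⟩ := herase A hA hne
  obtain ⟨l, hnd, hl, hdrop⟩ := ih _ (erase_ssubset hi) hPi
  have hil : i ∉ l := by simp [← List.mem_toFinset, hl]
  have hcons : (i :: l).toFinset = A := by simp [hl, insert_erase hi]
  refine ⟨i :: l, List.nodup_cons.2 ⟨hil, hnd⟩, hcons, fun m => ?_⟩
  cases m with
  | zero => simpa [hcons] using hA
  | succ m => exact hdrop m

end

lemma exists_perm_forall_filter_lt {N : ℕ} (P : Finset (Fin N) → Prop) (huniv : P univ)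
    (herase : ∀ A, P A → A.Nonempty → ∃ i ∈ A, P (A.erase i)) :
    ∃ π : Equiv.Perm (Fin N),
      ∀ m, P ((univ.filter fun i : Fin N => (i : ℕ) < m).map π.toEmbedding) := by
  obtain ⟨l, hnd, hl, hdrop⟩ := exists_list_forall_drop P herase univ huniv
  have hlen : l.length = N := by simpa [hl] using (List.toFinset_card_of_nodup hnd).symm
  have hmem : ∀ j, j ∈ l.reverse := fun j => by simp [← List.mem_toFinset, hl]
  -- `π` enumerates `l` backwards, so its initial segments are the tails `l.drop _`.
  refine ⟨(finCongr (by simp [hlen])).trans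
    (List.Nodup.getEquivOfForallMemList _ (List.nodup_reverse.2 hnd) hmem), fun m => ?_⟩
  convert hdrop (l.length - m) using 1
  rw [← List.toFinset_reverse, ← List.take_reverse]
  ext j
  simp only [Finset.mem_map, mem_filter, Finset.mem_univ, true_and, List.mem_toFinset,
    List.mem_take_iff_getElem, Equiv.coe_toEmbedding, Equiv.trans_apply, finCongr_apply,
    List.Nodup.getEquivOfForallMemList_apply, Fin.exists_iff, List.get_eq_getElem, Fin.val_cast]
  exact ⟨fun ⟨i, hN, hm, h⟩ => ⟨i, by simp [hN, hm, hlen], h⟩,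
    fun ⟨i, hi, h⟩ => ⟨i, by simpa [hlen] using (lt_min_iff.1 hi).2, (lt_min_iff.1 hi).1, h⟩⟩

section

variable {ι E : Type*} [AddCommGroup E] [Module ℝ E]

def weightPolytope (a : ι → E) (A : Finset ι) (t : ℝ) : Set (ι → ℝ) :=
  {x | (∀ i ∈ A, x i ∈ Set.Icc 0 1) ∧ (∀ i ∉ A, x i = 0) ∧
    ∑ i ∈ A, x i • a i = 0 ∧ ∑ i ∈ A, x i = t}

variable {a : ι → E} {A : Finset ι} {t : ℝ} {x : ι → ℝ}

lemma zero_mem_weightPolytope (a : ι → E) (A : Finset ι) : 0 ∈ weightPolytope a A 0 :=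
  ⟨fun _ _ => by simp, fun _ _ => rfl, by simp, by simp⟩

lemma weightPolytope_eq_pi_inter_preimage [Fintype ι] [DecidableEq ι] (a : ι → E)
    (A : Finset ι) (t : ℝ) :
    weightPolytope a A t = Set.univ.pi (fun i => Set.Icc 0 (if i ∈ A then 1 else 0)) ∩
      Fintype.linearCombination ℝ (fun i => (a i, (1 : ℝ))) ⁻¹' {(0, t)} := by
  ext x
  have hbox : ∀ i, x i ∈ Set.Icc 0 (if i ∈ A then 1 else 0) ↔
      (i ∈ A → x i ∈ Set.Icc 0 1) ∧ (i ∉ A → x i = 0) := fun i => by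
    by_cases hi : i ∈ A <;> simp [hi, le_antisymm_iff, and_comm]
  have hcomb : (∀ i ∉ A, x i = 0) →
      ∑ i, x i • (a i, (1 : ℝ)) = (∑ i ∈ A, x i • a i, ∑ i ∈ A, x i) := fun h0 => by
    rw [← sum_subset (subset_univ A) fun i _ hi => by simp [h0 i hi]]
    simp [Prod.ext_iff, Prod.fst_sum, Prod.snd_sum]
  simp only [weightPolytope, Set.mem_ofPred_eq, Set.mem_inter_iff, Set.mem_pi, Set.mem_univ,
    true_imp_iff, hbox, forall_and, Set.mem_preimage, Set.mem_singleton_iff,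
    Fintype.linearCombination_apply]
  constructor
  · rintro ⟨h01, h0, hvec, hsum⟩
    exact ⟨⟨h01, h0⟩, by rw [hcomb h0, hvec, hsum]⟩
  · rintro ⟨⟨h01, h0⟩, heq⟩
    rw [hcomb h0, Prod.mk.injEq] at heq
    exact ⟨h01, h0, heq⟩

lemma isCompact_weightPolytope [Fintype ι] [DecidableEq ι] (a : ι → E) (A : Finset ι)
    (t : ℝ) :
    IsCompact (weightPolytope a A t) := by
  rw [weightPolytope_eq_pi_inter_preimage]
  exact (isCompact_univ_pi fun _ => isCompact_Icc).inter_right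
    (LinearMap.isClosed_preimage_singleton _ _)

lemma smul_mem_weightPolytope (hx : x ∈ weightPolytope a A t) {c : ℝ} (hc : c ∈ Set.Icc 0 1) :
    c • x ∈ weightPolytope a A (c * t) := by
  obtain ⟨h01, h0, hvec, hsum⟩ := hx
  refine ⟨fun i hi => ⟨?_, ?_⟩, fun i hi => by simp [h0 i hi], ?_, ?_⟩
  · exact mul_nonneg hc.1 (h01 i hi).1
  · exact mul_le_one₀ hc.2 (h01 i hi).1 (h01 i hi).2
  · simp [mul_smul, ← smul_sum, hvec]
  · simp [← mul_sum, hsum]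

lemma weightPolytope_nonempty_of_le (h : (weightPolytope a A t).Nonempty) {s : ℝ} (hs : 0 ≤ s)
    (hst : s ≤ t) : (weightPolytope a A s).Nonempty := by
  rcases hs.eq_or_lt with rfl | hs
  · exact ⟨0, zero_mem_weightPolytope a A⟩
  obtain ⟨x, hx⟩ := h
  have ht : 0 < t := hs.trans_le hst
  exact ⟨(s / t) • x, by simpa [div_mul_cancel₀ s ht.ne'] using
    smul_mem_weightPolytope hx ⟨div_nonneg hs.le ht.le, div_le_one_of_le₀ hst ht.le⟩⟩

lemma mem_weightPolytope_erase [DecidableEq ι] (hx : x ∈ weightPolytope a A t) {i : ι}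
    (hi : x i = 0) : x ∈ weightPolytope a (A.erase i) t := by
  obtain ⟨h01, h0, hvec, hsum⟩ := hx
  refine ⟨fun j hj => h01 j (mem_of_mem_erase hj), fun j hj => ?_, ?_, ?_⟩
  · by_cases hji : j = i
    · exact hji ▸ hi
    · exact h0 j fun hjA => hj (mem_erase.2 ⟨hji, hjA⟩)
  · rwa [sum_erase A (by simp [hi])]
  · rwa [sum_erase A hi]

lemma exists_eq_zero_of_mem_extremePoints_weightPolytope [Fintype ι] [DecidableEq ι]
    [FiniteDimensional ℝ E] {μ : ι → ℝ}
    (hμ : μ ∈ (weightPolytope a A (#A - finrank ℝ E - 1)).extremePoints ℝ) :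
    ∃ i ∈ A, μ i = 0 := by
  -- If no coordinate on `A` vanished, those off the fractional set `S` would all be `1`, and
  -- `∑_S (1 - μ i) = d + 1` would contradict `#S ≤ d + 1` with every term `< 1`.
  obtain ⟨h01, h0, -, hsum⟩ := extremePoints_subset hμ
  rw [weightPolytope_eq_pi_inter_preimage] at hμ
  have hcard := card_filter_mem_Ioo_le_finrank hμ
  rw [finrank_prod, finrank_self] at hcard
  set S : Finset ι := {i | μ i ∈ Set.Ioo 0 (if i ∈ A then 1 else 0)}
  by_contra! hne0
  have hpos : ∀ i ∈ A, 0 < μ i := fun i hi => (h01 i hi).1.lt_of_ne (hne0 i hi).symm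
  have hSA : S ⊆ A := fun i hi => by
    by_contra hiA
    simp [S, hiA] at hi
    linarith
  have hS : ∀ i ∈ S, 1 - μ i < 1 := fun i hi => by linarith [hpos i (hSA hi)]
  have hsumS : ∑ i ∈ S, (1 - μ i) = finrank ℝ E + 1 := by
    rw [sum_subset hSA fun i hiA hiS => ?_, sum_sub_distrib, hsum]
    · simp only [sum_const, nsmul_eq_mul, mul_one]
      ring
    · have : ¬ μ i < 1 := by simpa [S, hiA, hpos i hiA] using hiS
      linarith [(h01 i hiA).2]
  rcases S.eq_empty_or_nonempty with hempty | hne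
  · rw [hempty, sum_empty] at hsumS
    linarith
  · have := sum_lt_sum_of_nonempty hne hS
    rw [sum_const, nsmul_one] at this
    have : (#S : ℝ) ≤ finrank ℝ E + 1 := by exact_mod_cast hcard
    linarith

/-- Sets with `#A ≤ d` are admissible through the zero weight, which lets the removal of indices
run all the way down to `∅`. -/
def SteinitzAdmissible (a : ι → E) (A : Finset ι) : Prop :=
  ∃ t, (#A : ℝ) - finrank ℝ E ≤ t ∧ (weightPolytope a A t).Nonempty

lemma SteinitzAdmissible.exists_erase [Fintype ι] [DecidableEq ι] [FiniteDimensional ℝ E]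
    (h : SteinitzAdmissible a A) (hA : A.Nonempty) :
    ∃ i ∈ A, SteinitzAdmissible a (A.erase i) := by
  obtain ⟨t, ht, hne⟩ := h
  have hcard : ∀ i ∈ A, (#(A.erase i) : ℝ) = #A - 1 := fun i hi => by
    rw [← card_erase_add_one hi]; push_cast; ring
  by_cases hsmall : (#A : ℝ) ≤ finrank ℝ E + 1
  · obtain ⟨i, hi⟩ := hA
    exact ⟨i, hi, 0, by linarith [hcard i hi], 0, zero_mem_weightPolytope a _⟩
  obtain ⟨μ, hμ⟩ := (isCompact_weightPolytope a A _).extremePoints_nonempty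
    (weightPolytope_nonempty_of_le hne (s := #A - finrank ℝ E - 1) (by linarith) (by linarith))
  obtain ⟨i, hi, hμi⟩ := exists_eq_zero_of_mem_extremePoints_weightPolytope hμ
  exact ⟨i, hi, _, by linarith [hcard i hi], μ,
    mem_weightPolytope_erase (extremePoints_subset hμ) hμi⟩

lemma gauge_sum_le_of_mem_weightPolytope {K : Set E} (hK : Convex ℝ K) (hKa : Absorbent ℝ K)
    (ha : ∀ i ∈ A, gauge K (a i) ≤ 1) (hx : x ∈ weightPolytope a A t) :
    gauge K (∑ i ∈ A, a i) ≤ #A - t := by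
  obtain ⟨h01, -, hvec, hsum⟩ := hx
  have hcoef : ∀ i ∈ A, 0 ≤ 1 - x i := fun i hi => sub_nonneg.2 (h01 i hi).2
  have hsplit : ∑ i ∈ A, a i = ∑ i ∈ A, (1 - x i) • a i := by
    simp [sub_smul, sum_sub_distrib, hvec]
  calc gauge K (∑ i ∈ A, a i) = gauge K (∑ i ∈ A, (1 - x i) • a i) := by rw [hsplit]
    _ ≤ ∑ i ∈ A, gauge K ((1 - x i) • a i) :=
      le_sum_of_subadditive _ gauge_zero.le (gauge_add_le hK hKa) _ _
    _ = ∑ i ∈ A, (1 - x i) * gauge K (a i) :=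
      sum_congr rfl fun i hi => by rw [gauge_smul_of_nonneg (hcoef i hi), smul_eq_mul]
    _ ≤ ∑ i ∈ A, (1 - x i) :=
      sum_le_sum fun i hi => mul_le_of_le_one_right (hcoef i hi) (ha i hi)
    _ = #A - t := by simp [sum_sub_distrib, hsum]

theorem exists_perm_gauge_sum_filter_lt_le_finrank [FiniteDimensional ℝ E] {K : Set E}
    (hK : Convex ℝ K) (hKa : Absorbent ℝ K) {N : ℕ} (a : Fin N → E)
    (ha : ∀ i, gauge K (a i) ≤ 1) (hsum : ∑ i, a i = 0) :
    ∃ π : Equiv.Perm (Fin N), ∀ m : ℕ,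
      gauge K (∑ i ∈ univ.filter fun i : Fin N => (i : ℕ) < m, a (π i)) ≤ finrank ℝ E := by
  have huniv : SteinitzAdmissible a univ :=
    ⟨N, by simp, 1, fun _ _ => by simp, fun i hi => absurd (mem_univ i) hi,
      by simpa using hsum, by simp⟩
  obtain ⟨π, hπ⟩ := exists_perm_forall_filter_lt _ huniv fun A hA hne => hA.exists_erase hne
  refine ⟨π, fun m => ?_⟩
  obtain ⟨t, ht, x, hx⟩ := hπ m
  have := gauge_sum_le_of_mem_weightPolytope hK hKa (fun i _ => ha i) hx
  rw [sum_map, card_map] at this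
  rw [card_map] at ht
  exact this.trans (by linarith)

end

theorem steinitz_lemma_gauge_general
    (d N : ℕ)
    (K : Set (Fin d → ℝ)) (hKconv : Convex ℝ K)
    (hK0 : 0 ∈ interior K)
    (a : Fin N → (Fin d → ℝ))
    (ha : ∀ i, gauge K (a i) ≤ 1)
    (hsum : ∑ i : Fin N, a i = 0) :
    ∃ π : Equiv.Perm (Fin N),
      ∀ m : ℕ, 1 ≤ m → m ≤ N →
        gauge K (∑ i ∈ Finset.univ.filter (fun i : Fin N => (i : ℕ) < m), a (π i))
          ≤ d := by
  obtain ⟨π, hπ⟩ := exists_perm_gauge_sum_filter_lt_le_finrank hKconv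
    (absorbent_nhds_zero (mem_interior_iff_mem_nhds.1 hK0)) a ha hsum
  exact ⟨π, fun m _ _ => by simpa using hπ m⟩

/-- The Steinitz lemma of Grinberg and Sevastyanov for non-symmetric seminorms:
if `K ⊂ ℝ^d` is a compact convex set containing the origin in its interior and
`a_1, …, a_N ∈ ℝ^d` have gauge (Minkowski functional) at most `1` and sum to
zero, then the sequence can be reordered so that every partial sum of the
reordered sequence has gauge at most `d`. -/
theorem steinitz_lemma_gauge
    (d N : ℕ) (hd : 0 < d) (hN : 0 < N)
    (K : Set (Fin d → ℝ)) (hKcomp : IsCompact K) (hKconv : Convex ℝ K)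
    (hK0 : 0 ∈ interior K)
    (a : Fin N → (Fin d → ℝ))
    (ha : ∀ i, gauge K (a i) ≤ 1)
    (hsum : ∑ i : Fin N, a i = 0) :
    ∃ π : Equiv.Perm (Fin N),
      ∀ m : ℕ, 1 ≤ m → m ≤ N →
        gauge K (∑ i ∈ Finset.univ.filter (fun i : Fin N => (i : ℕ) < m), a (π i))
          ≤ d :=
  steinitz_lemma_gauge_general d N K hKconv hK0 a ha hsum
end

section
/- Let d, N be positive integers and let ‖·‖ be any norm on ℝ^d. If a_1, …, a_N ∈ ℝ^d satisfy ‖a_i‖ ≤ 1 for all i, then there exist signs ε_1, …, ε_N ∈ {−1, 1} such that ‖∑_{i=1}^m ε_i a_i‖ ≤ 2d − 1 for every m ∈ {1,…,N}. -/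
/-!
Bárány–Grinberg rounding. Process the vectors one at a time, maintaining real coefficients
`λ_i ∈ [-1, 1]` on the vectors seen so far with `∑ λ_i a_i = 0`, of which all but at most `d`
are already frozen at `±1`. A new vector enters with coefficient `0`; if `d + 1` coefficients are
then free, the free vectors are linearly dependent, and moving `λ` along the relation until a
coordinate reaches `±1` freezes one more. Any signs agreeing with the frozen coefficients then
give partial sums `∑_{i ∈ free} (ε_i - λ_i) a_i` of norm at most `2d`. To gain `1`, one free
index, the anchor, carries a sign `σ` with `σ λ_anchor ≥ 0`, and the relation is always oriented
so that this stays true: the anchor is therefore frozen at `σ` if ever, and `|σ - λ_anchor| ≤ 1`.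
-/

open Finset Module

theorem exists_sum_smul_eq_zero_of_finrank_lt_card {K V ι : Type*} [Field K] [AddCommGroup V]
    [Module K V] [FiniteDimensional K V] (a : ι → V) {S : Finset ι} (h : finrank K V < #S) :
    ∃ κ : ι → K, (∀ i ∉ S, κ i = 0) ∧ ∑ i ∈ S, κ i • a i = 0 ∧ ∃ i ∈ S, κ i ≠ 0 := by
  classical
  have hdep : ¬ LinearIndepOn K a (S : Set ι) := fun hind => by
    have := hind.fintype_card_le_finrank
    simp only [Finset.coe_sort_coe, Fintype.card_coe] at this
    omega
  simp only [linearIndepOn_finset_iff, not_forall] at hdep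
  obtain ⟨κ, hκ, i, hi, hκi⟩ := hdep
  refine ⟨fun i => if i ∈ S then κ i else 0, fun i hi => if_neg hi, ?_, i, hi, by simpa [hi]⟩
  rw [← hκ]
  exact sum_congr rfl fun i hi => by simp only [if_pos hi]

theorem sum_filter_val_lt_eq_sum_range {M : Type*} [AddCommMonoid M] {N m : ℕ} (hm : m ≤ N)
    (f : ℕ → M) : ∑ i ∈ univ.filter (fun i : Fin N => (i : ℕ) < m), f i = ∑ i ∈ range m, f i := by
  rw [sum_filter, Fin.sum_univ_eq_sum_range (fun i => if i < m then f i else 0), ← sum_filter]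
  congr 1
  ext i
  simp only [mem_filter, mem_range]
  omega

section SignArithmetic

variable {e c : ℝ}

theorem eq_of_mul_nonneg_of_eq_one_or_eq_neg_one (he : e = 1 ∨ e = -1) (hc : c = 1 ∨ c = -1)
    (hec : 0 ≤ e * c) : c = e := by
  rcases he with rfl | rfl <;> rcases hc with rfl | rfl <;> norm_num at hec <;> rfl

theorem abs_sub_le_two_of_eq_one_or_eq_neg_one (he : e = 1 ∨ e = -1) (hc : |c| ≤ 1) :
    |e - c| ≤ 2 := by
  rw [abs_le] at hc ⊢
  rcases he with rfl | rfl <;> constructor <;> linarith [hc.1, hc.2]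

theorem abs_sub_le_one_of_mul_nonneg (he : e = 1 ∨ e = -1) (hc : |c| ≤ 1) (hec : 0 ≤ e * c) :
    |e - c| ≤ 1 := by
  rw [abs_le] at hc ⊢
  rcases he with rfl | rfl <;> constructor <;> linarith [hc.1, hc.2]

end SignArithmetic

/-- The first time `t ≥ 0` at which `c + t * k` leaves `[-1, 1]`. -/
noncomputable def exitTime (c k : ℝ) : ℝ := (if 0 < k then 1 - c else -1 - c) / k

theorem exitTime_nonneg {c k : ℝ} (hc : |c| ≤ 1) : 0 ≤ exitTime c k := by
  rw [abs_le] at hc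
  unfold exitTime
  split_ifs with hk
  · exact div_nonneg (by linarith) hk.le
  · exact div_nonneg_of_nonpos (by linarith) (not_lt.1 hk)

theorem add_exitTime_mul {c k : ℝ} (hk : k ≠ 0) :
    c + exitTime c k * k = 1 ∨ c + exitTime c k * k = -1 := by
  unfold exitTime
  rw [div_mul_cancel₀ _ hk]
  split_ifs
  · exact .inl (by ring)
  · exact .inr (by ring)

theorem abs_add_mul_le_one_of_le_exitTime {c k t : ℝ} (hc : |c| ≤ 1) (ht : 0 ≤ t)
    (htk : t ≤ exitTime c k) : |c + t * k| ≤ 1 := by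
  rw [abs_le] at hc ⊢
  unfold exitTime at htk
  rcases lt_trichotomy k 0 with hk | rfl | hk
  · rw [if_neg hk.not_gt, le_div_iff_of_neg hk] at htk
    constructor <;> nlinarith
  · simpa using hc
  · rw [if_pos hk, le_div_iff₀ hk] at htk
    constructor <;> nlinarith

theorem exists_abs_add_mul_eq_one {S : Finset ℕ} {c κ : ℕ → ℝ} (hc : ∀ i ∈ S, |c i| ≤ 1)
    (hκ : ∃ i ∈ S, κ i ≠ 0) :
    ∃ t, 0 ≤ t ∧ (∀ i ∈ S, |c i + t * κ i| ≤ 1) ∧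
      ∃ j ∈ S, c j + t * κ j = 1 ∨ c j + t * κ j = -1 := by
  obtain ⟨i₀, hi₀, hκi₀⟩ := hκ
  obtain ⟨j, hj, hmin⟩ := (S.filter (κ · ≠ 0)).exists_min_image (fun i => exitTime (c i) (κ i))
    ⟨i₀, mem_filter.2 ⟨hi₀, hκi₀⟩⟩
  obtain ⟨hjS, hκj⟩ := mem_filter.1 hj
  refine ⟨exitTime (c j) (κ j), exitTime_nonneg (hc j hjS), fun i hi => ?_, j, hjS,
    add_exitTime_mul hκj⟩
  by_cases hκi : κ i = 0
  · simpa [hκi] using hc i hi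
  · exact abs_add_mul_le_one_of_le_exitTime (hc i hi) (exitTime_nonneg (hc j hjS))
      (hmin i (mem_filter.2 ⟨hi, hκi⟩))

/-- A state of the rounding: the coefficients of indices in `free` may still move, the others
are frozen; the `anchor` is a free index committed in advance to the sign `anchorSign`. -/
structure FractionalSigning where
  coeff : ℕ → ℝ
  free : Finset ℕ
  anchor : ℕ
  anchorSign : ℝ

namespace FractionalSigning

variable {E : Type*} [NormedAddCommGroup E] [NormedSpace ℝ E]
  {a : ℕ → E} {D m : ℕ} {s : FractionalSigning} {ε : ℕ → ℝ}

structure IsValid (a : ℕ → E) (D m : ℕ) (s : FractionalSigning) : Prop where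
  free_subset : s.free ⊆ range m
  card_free_le : #s.free ≤ D
  anchor_mem : s.anchor ∈ s.free
  anchorSign_eq : s.anchorSign = 1 ∨ s.anchorSign = -1
  anchorSign_mul_nonneg : 0 ≤ s.anchorSign * s.coeff s.anchor
  abs_coeff_le : ∀ i ∈ s.free, |s.coeff i| ≤ 1
  coeff_eq_of_frozen : ∀ i ∈ range m \ s.free, s.coeff i = 1 ∨ s.coeff i = -1
  sum_eq_zero : ∑ i ∈ range m, s.coeff i • a i = 0

def IsRounding (s : FractionalSigning) (m : ℕ) (ε : ℕ → ℝ) : Prop :=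
  (∀ i ∈ range m \ s.free, ε i = s.coeff i) ∧ ε s.anchor = s.anchorSign

theorem IsValid.norm_sum_le (hs : s.IsValid a D m) (ha : ∀ i, ‖a i‖ ≤ 1)
    (hε : ∀ i, ε i = 1 ∨ ε i = -1) (hr : s.IsRounding m ε) :
    ‖∑ i ∈ range m, ε i • a i‖ ≤ 2 * D - 1 := by
  set δ := fun i => ε i - s.coeff i
  have hsum : ∑ i ∈ range m, ε i • a i = ∑ i ∈ s.free, δ i • a i := by
    have : ∑ i ∈ range m, ε i • a i = ∑ i ∈ range m, δ i • a i := by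
      simp only [δ, sub_smul, sum_sub_distrib, hs.sum_eq_zero, sub_zero]
    rw [this]
    exact (sum_subset hs.free_subset fun i hi hni => by
      rw [show δ i = 0 from sub_eq_zero.2 (hr.1 i (mem_sdiff.2 ⟨hi, hni⟩)), zero_smul]).symm
  have hfree : ∑ i ∈ s.free.erase s.anchor, |δ i| ≤ #(s.free.erase s.anchor) • 2 :=
    sum_le_card_nsmul _ _ _ fun i hi =>
      abs_sub_le_two_of_eq_one_or_eq_neg_one (hε i) (hs.abs_coeff_le i (mem_of_mem_erase hi))
  have hanchor : |δ s.anchor| ≤ 1 := by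
    simp only [δ, hr.2]
    exact abs_sub_le_one_of_mul_nonneg hs.anchorSign_eq (hs.abs_coeff_le _ hs.anchor_mem)
      hs.anchorSign_mul_nonneg
  have hcard : (#(s.free.erase s.anchor) : ℝ) + 1 ≤ D := by
    exact_mod_cast (card_erase_add_one hs.anchor_mem).trans_le hs.card_free_le
  calc ‖∑ i ∈ range m, ε i • a i‖ = ‖∑ i ∈ s.free, δ i • a i‖ := by rw [hsum]
    _ ≤ ∑ i ∈ s.free, |δ i| := norm_sum_le_of_le _ fun i _ => by
      simpa [norm_smul] using mul_le_of_le_one_right (abs_nonneg (δ i)) (ha i)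
    _ = |δ s.anchor| + ∑ i ∈ s.free.erase s.anchor, |δ i| := (add_sum_erase _ _ hs.anchor_mem).symm
    _ ≤ 2 * D - 1 := by rw [nsmul_eq_mul] at hfree; linarith

theorem IsValid.exists_isRounding (hs : s.IsValid a D m) :
    ∃ ε : ℕ → ℝ, (∀ i, ε i = 1 ∨ ε i = -1) ∧ s.IsRounding m ε := by
  classical
  refine ⟨fun i => if i = s.anchor then s.anchorSign else if s.coeff i = -1 then -1 else 1,
    fun i => ?_, fun i hi => ?_, if_pos rfl⟩
  · dsimp only
    split_ifs
    exacts [hs.anchorSign_eq, .inr rfl, .inl rfl]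
  · have hia : i ≠ s.anchor := fun h => (mem_sdiff.1 hi).2 (h ▸ hs.anchor_mem)
    rcases hs.coeff_eq_of_frozen i hi with h | h <;> norm_num [hia, h]

@[simps]
def append (s : FractionalSigning) (m : ℕ) : FractionalSigning :=
  { s with coeff := Function.update s.coeff m 0, free := insert m s.free }

theorem IsValid.append (hs : s.IsValid a D m) : (s.append m).IsValid a (D + 1) (m + 1) where
  free_subset := insert_subset (self_mem_range_succ m)
    (hs.free_subset.trans (range_subset_range.2 m.le_succ))
  card_free_le := (card_insert_le _ _).trans (Nat.succ_le_succ hs.card_free_le)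
  anchor_mem := mem_insert_of_mem hs.anchor_mem
  anchorSign_eq := hs.anchorSign_eq
  anchorSign_mul_nonneg := by
    have : s.anchor ≠ m := fun h => by simpa [h] using hs.free_subset hs.anchor_mem
    simpa [this] using hs.anchorSign_mul_nonneg
  abs_coeff_le i hi := by
    rcases mem_insert.1 hi with rfl | hi
    · simp
    · have : i ≠ m := fun h => by simpa [h] using hs.free_subset hi
      simpa [this] using hs.abs_coeff_le i hi
  coeff_eq_of_frozen i hi := by
    simp only [append_free, mem_sdiff, mem_insert, mem_range, not_or] at hi
    rw [append_coeff, Function.update_of_ne hi.2.1]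
    exact hs.coeff_eq_of_frozen i (mem_sdiff.2 ⟨mem_range.2 (by omega), hi.2.2⟩)
  sum_eq_zero := by
    rw [sum_range_succ, append_coeff, Function.update_self, zero_smul, add_zero,
      ← hs.sum_eq_zero]
    exact sum_congr rfl fun i hi => by rw [append_coeff, Function.update_of_ne (mem_range.1 hi).ne]

theorem IsRounding.of_append (h : (s.append m).IsRounding (m + 1) ε) : s.IsRounding m ε := by
  refine ⟨fun i hi => ?_, h.2⟩
  obtain ⟨him, hiU⟩ := mem_sdiff.1 hi
  have hne : i ≠ m := (mem_range.1 him).ne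
  rw [h.1 i (by simp [hne, hiU, (mem_range.1 him).trans m.lt_succ_self]),
    append_coeff, Function.update_of_ne hne]

@[simps]
def move (s : FractionalSigning) (t : ℝ) (κ : ℕ → ℝ) : FractionalSigning :=
  { s with coeff := fun i => s.coeff i + t * κ i }

theorem IsValid.move {t : ℝ} {κ : ℕ → ℝ} (hs : s.IsValid a D m) (hκ : ∀ i ∉ s.free, κ i = 0)
    (hκa : ∑ i ∈ s.free, κ i • a i = 0) (ht : 0 ≤ t) (hκanchor : 0 ≤ s.anchorSign * κ s.anchor)
    (hbox : ∀ i ∈ s.free, |s.coeff i + t * κ i| ≤ 1) : (s.move t κ).IsValid a D m where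
  free_subset := hs.free_subset
  card_free_le := hs.card_free_le
  anchor_mem := hs.anchor_mem
  anchorSign_eq := hs.anchorSign_eq
  anchorSign_mul_nonneg := by
    simp only [move_coeff, move_anchor, move_anchorSign, mul_add, mul_left_comm _ t]
    exact add_nonneg hs.anchorSign_mul_nonneg (mul_nonneg ht hκanchor)
  abs_coeff_le := hbox
  coeff_eq_of_frozen i hi := by
    simpa [hκ i (mem_sdiff.1 hi).2] using hs.coeff_eq_of_frozen i hi
  sum_eq_zero := by
    have hκm : ∑ i ∈ range m, κ i • a i = 0 := by
      rwa [← sum_subset hs.free_subset fun i _ hi => by rw [hκ i hi, zero_smul]]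
    simp only [move_coeff, add_smul, mul_smul, sum_add_distrib, ← smul_sum,
      hs.sum_eq_zero, hκm, smul_zero, add_zero]

theorem IsRounding.of_move {t : ℝ} {κ : ℕ → ℝ} (hκ : ∀ i ∉ s.free, κ i = 0)
    (h : (s.move t κ).IsRounding m ε) : s.IsRounding m ε :=
  ⟨fun i hi => by simpa [hκ i (mem_sdiff.1 hi).2] using h.1 i hi, h.2⟩

theorem IsValid.exists_freeze (hs : s.IsValid a (D + 1) m) {j : ℕ} (hj : j ∈ s.free)
    (hcj : s.coeff j = 1 ∨ s.coeff j = -1) (hne : (s.free.erase j).Nonempty) :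
    ∃ s' : FractionalSigning, s'.IsValid a D m ∧ ∀ ε, s'.IsRounding m ε → s.IsRounding m ε := by
  obtain ⟨p, σ, hp, hσ, hσp, hanchor⟩ : ∃ p σ, p ∈ s.free.erase j ∧ (σ = 1 ∨ σ = -1) ∧
      0 ≤ σ * s.coeff p ∧ (s.anchor = j ∨ p = s.anchor ∧ σ = s.anchorSign) := by
    by_cases hpj : s.anchor = j
    · obtain ⟨q, hq⟩ := hne
      rcases le_total 0 (s.coeff q) with h | h
      · exact ⟨q, 1, hq, .inl rfl, by simpa using h, .inl hpj⟩
      · exact ⟨q, -1, hq, .inr rfl, by simpa using h, .inl hpj⟩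
    · exact ⟨s.anchor, s.anchorSign, mem_erase.2 ⟨hpj, hs.anchor_mem⟩, hs.anchorSign_eq,
        hs.anchorSign_mul_nonneg, .inr ⟨rfl, rfl⟩⟩
  have hfrozen : range m \ s.free ⊆ range m \ s.free.erase j :=
    sdiff_subset_sdiff subset_rfl (erase_subset j s.free)
  refine ⟨⟨s.coeff, s.free.erase j, p, σ⟩, ⟨(erase_subset j s.free).trans hs.free_subset, ?_, hp,
    hσ, hσp, fun i hi => hs.abs_coeff_le i (mem_of_mem_erase hi), fun i hi => ?_,
    hs.sum_eq_zero⟩, fun ε hr => ⟨fun i hi => hr.1 i (hfrozen hi), ?_⟩⟩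
  · exact (card_erase_of_mem hj).trans_le (Nat.sub_le_of_le_add hs.card_free_le)
  · by_cases hij : i = j
    · exact hij ▸ hcj
    · exact hs.coeff_eq_of_frozen i (by simpa [hij] using hi)
  · rcases hanchor with hpj | ⟨rfl, rfl⟩
    · rw [hpj, hr.1 j (mem_sdiff.2 ⟨hs.free_subset hj, notMem_erase j s.free⟩)]
      exact eq_of_mul_nonneg_of_eq_one_or_eq_neg_one hs.anchorSign_eq hcj
        (hpj ▸ hs.anchorSign_mul_nonneg)
    · exact hr.2

theorem IsValid.exists_reduce [FiniteDimensional ℝ E] (hs : s.IsValid a (D + 1) m)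
    (hD : finrank ℝ E ≤ D) (hD0 : 0 < D) :
    ∃ s' : FractionalSigning, s'.IsValid a D m ∧ ∀ ε, s'.IsRounding m ε → s.IsRounding m ε := by
  by_cases hcard : #s.free ≤ D
  · exact ⟨s, { hs with card_free_le := hcard }, fun _ => id⟩
  have hcard' : #s.free = D + 1 := by have := hs.card_free_le; omega
  obtain ⟨κ, hκ, hκa, hκne, hκanchor⟩ : ∃ κ : ℕ → ℝ, (∀ i ∉ s.free, κ i = 0) ∧
      ∑ i ∈ s.free, κ i • a i = 0 ∧ (∃ i ∈ s.free, κ i ≠ 0) ∧ 0 ≤ s.anchorSign * κ s.anchor := by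
    obtain ⟨κ, hκ, hκa, i, hi, hκi⟩ :=
      exists_sum_smul_eq_zero_of_finrank_lt_card (K := ℝ) a (S := s.free) (by omega)
    rcases le_total 0 (s.anchorSign * κ s.anchor) with h | h
    · exact ⟨κ, hκ, hκa, ⟨i, hi, hκi⟩, h⟩
    · refine ⟨-κ, fun i hi => by simp [hκ i hi], ?_, ⟨i, hi, by simpa using hκi⟩, by simpa using h⟩
      simp only [Pi.neg_apply, neg_smul, sum_neg_distrib, hκa, neg_zero]
  obtain ⟨t, ht, hbox, j, hj, hcj⟩ := exists_abs_add_mul_eq_one hs.abs_coeff_le hκne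
  have hne : (s.free.erase j).Nonempty := by
    rw [← card_pos, card_erase_of_mem hj]
    omega
  obtain ⟨s', hs', hr⟩ := (hs.move hκ hκa ht hκanchor hbox).exists_freeze hj hcj hne
  exact ⟨s', hs', fun ε h => (hr ε h).of_move hκ⟩

end FractionalSigning

open FractionalSigning in
theorem exists_isValid_forall_norm_sum_range_le {E : Type*} [NormedAddCommGroup E]
    [NormedSpace ℝ E] [FiniteDimensional ℝ E] {a : ℕ → E} (ha : ∀ i, ‖a i‖ ≤ 1) {D : ℕ}
    (hD : finrank ℝ E ≤ D) (hD0 : 0 < D) (n : ℕ) :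
    ∃ s : FractionalSigning, s.IsValid a D (n + 1) ∧ ∀ ε : ℕ → ℝ, (∀ i, ε i = 1 ∨ ε i = -1) →
      s.IsRounding (n + 1) ε → ∀ k ≤ n + 1, ‖∑ i ∈ range k, ε i • a i‖ ≤ 2 * D - 1 := by
  induction n with
  | zero =>
    have hs : IsValid a D 1 ⟨fun _ => 0, {0}, 0, 1⟩ :=
      ⟨by simp, (card_singleton 0).trans_le hD0, mem_singleton_self 0, .inl rfl, by simp,
        by simp, by simp, by simp⟩
    refine ⟨_, hs, fun ε hε hr k hk => ?_⟩
    rcases Nat.le_one_iff_eq_zero_or_eq_one.1 hk with rfl | rfl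
    · have : (1 : ℝ) ≤ D := by exact_mod_cast hD0
      simp only [range_zero, sum_empty, norm_zero]
      linarith
    · exact hs.norm_sum_le ha hε hr
  | succ n ih =>
    obtain ⟨s, hs, hbound⟩ := ih
    obtain ⟨s', hs', hr'⟩ := hs.append.exists_reduce hD hD0
    refine ⟨s', hs', fun ε hε hr k hk => ?_⟩
    rcases Nat.lt_or_ge k (n + 2) with hk' | hk'
    · exact hbound ε hε (hr' ε hr).of_append k (by omega)
    · exact le_antisymm hk hk' ▸ hs'.norm_sum_le ha hε hr

theorem exists_signs_forall_norm_sum_range_le {E : Type*} [NormedAddCommGroup E]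
    [NormedSpace ℝ E] [FiniteDimensional ℝ E] {a : ℕ → E} (ha : ∀ i, ‖a i‖ ≤ 1) {D : ℕ}
    (hD : finrank ℝ E ≤ D) (hD0 : 0 < D) (n : ℕ) :
    ∃ ε : ℕ → ℝ, (∀ i, ε i = 1 ∨ ε i = -1) ∧
      ∀ k ≤ n, ‖∑ i ∈ range k, ε i • a i‖ ≤ 2 * D - 1 := by
  obtain ⟨s, hs, hbound⟩ := exists_isValid_forall_norm_sum_range_le ha hD hD0 n
  obtain ⟨ε, hε, hr⟩ := hs.exists_isRounding
  exact ⟨ε, hε, fun k hk => hbound ε hε hr k (by omega)⟩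

theorem barany_grinberg_signs_general
    (d N : ℕ) (hd : 0 < d)
    {E : Type*} [NormedAddCommGroup E] [NormedSpace ℝ E]
    [FiniteDimensional ℝ E] (hdim : Module.finrank ℝ E = d)
    (a : Fin N → E)
    (ha : ∀ i, ‖a i‖ ≤ 1) :
    ∃ ε : Fin N → ℝ, (∀ i, ε i = 1 ∨ ε i = -1) ∧
      ∀ m : ℕ, 1 ≤ m → m ≤ N →
        ‖∑ i ∈ Finset.univ.filter (fun i : Fin N => (i : ℕ) < m), ε i • a i‖
          ≤ 2 * d - 1 := by
  set b : ℕ → E := fun i => if h : i < N then a ⟨i, h⟩ else 0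
  have hb : ∀ i, ‖b i‖ ≤ 1 := fun i => by
    by_cases h : i < N <;> simp [b, h, ha]
  obtain ⟨ε, hε, hbound⟩ := exists_signs_forall_norm_sum_range_le hb hdim.le hd N
  refine ⟨fun i => ε i, fun i => hε i, fun m _ hm => ?_⟩
  have hab : ∀ i : Fin N, a i = b i := fun i => by simp [b]
  simp only [hab]
  rw [sum_filter_val_lt_eq_sum_range hm (fun i => ε i • b i)]
  exact hbound m hm

/-- The sign-sequence theorem of Bárány and Grinberg: for any sequence of
vectors of norm at most `1` in a `d`-dimensional real normed space there are
signs `ε_i ∈ {-1, 1}` such that every partial sum of the signed sequence has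
norm at most `2d - 1`. -/
theorem barany_grinberg_signs
    (d N : ℕ) (hd : 0 < d) (hN : 0 < N)
    {E : Type*} [NormedAddCommGroup E] [NormedSpace ℝ E]
    [FiniteDimensional ℝ E] (hdim : Module.finrank ℝ E = d)
    (a : Fin N → E)
    (ha : ∀ i, ‖a i‖ ≤ 1) :
    ∃ ε : Fin N → ℝ, (∀ i, ε i = 1 ∨ ε i = -1) ∧
      ∀ m : ℕ, 1 ≤ m → m ≤ N →
        ‖∑ i ∈ Finset.univ.filter (fun i : Fin N => (i : ℕ) < m), ε i • a i‖
          ≤ 2 * d - 1 :=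
  barany_grinberg_signs_general d N hd hdim a ha
end

section
/- Let d, k, n be positive integers and let ‖·‖ be any norm on ℝ^d. Let B = (b_i^j) be a k×n matrix with entries b_i^j ∈ ℝ^d such that ‖b_i^j‖ ≤ 1 for all i, j. Then there exists a k×n sign matrix ε = (ε_i^j) with ε_i^j ∈ {−1, 1} such that ‖∑_{j=1}^k ∑_{i=1}^m ε_i^j b_i^j‖ ≤ 2d − 1 for every m ∈ {1,…,n}. -/
/-!
Process the vectors in order, keeping coefficients `c i ∈ [-1, 1]` on those seen so far with
`‖∑ c i • v i‖ ≤ 1` and fewer than `d = dim E` *floating* coefficients (`|c i| < 1`); a coefficient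
that reaches `±1` is frozen for good. When the new vector, entering with coefficient `0`, makes `d`
floating coefficients, move them along a line that keeps the sum in the unit ball until one of them
hits `±1`. Such a line exists: if the `d` floating vectors are dependent, move along a kernel
direction; if they form a basis, move towards a point where the sum is `± v j`. Rounding the floating
coefficients of the stage-`t` coloring to the final signs costs at most `2` per floating vector,
so the `t`-th prefix sum has norm at most `1 + 2 (d - 1)`. The matrix statement is this applied to
the entries listed column by column.
-/

open Finset Module

lemma sum_smul_eq_add_sum_sub_smul {α R M : Type*} [Ring R] [AddCommGroup M] [Module R M]
    {r s : Finset α} (hs : s ⊆ r) {c c' : α → R} (v : α → M)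
    (hcc' : ∀ i ∈ r, i ∉ s → c' i = c i) :
    ∑ i ∈ r, c' i • v i = ∑ i ∈ r, c i • v i + ∑ i ∈ s, (c' i - c i) • v i := by
  rw [sum_subset hs fun i hi his => by rw [hcc' i hi his, sub_self, zero_smul],
    ← sum_add_distrib]
  simp only [← add_smul, add_sub_cancel]

lemma exists_abs_eq_one_le_abs_add (c : ℝ) : ∃ σ : ℝ, |σ| = 1 ∧ 1 ≤ |c + σ| := by
  rcases le_or_gt 0 c with hc | hc
  · exact ⟨1, abs_one, by rw [abs_of_nonneg (by linarith)]; linarith⟩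
  · exact ⟨-1, by simp, by rw [abs_of_neg (by linarith)]; linarith⟩

lemma exists_mem_segment_norm_eq {F : Type*} [NormedAddCommGroup F] [NormedSpace ℝ F]
    {x p : F} {r : ℝ} (hx : ‖x‖ ≤ r) (hp : r ≤ ‖p‖) : ∃ y ∈ segment ℝ x p, ‖y‖ = r :=
  (convex_segment x p).isPreconnected.intermediate_value (left_mem_segment ℝ x p)
    (right_mem_segment ℝ x p) continuous_norm.continuousOn ⟨hx, hp⟩

section
variable {E : Type*} [NormedAddCommGroup E] [NormedSpace ℝ E]
  {ι : Type*} [Fintype ι]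

lemma norm_add_linearCombination_le_one_of_mem_segment (w : ι → E) {e : E} {x p y : ι → ℝ}
    (he : ‖e‖ ≤ 1) (hp : ‖e + Fintype.linearCombination ℝ w (p - x)‖ ≤ 1)
    (hy : y ∈ segment ℝ x p) : ‖e + Fintype.linearCombination ℝ w (y - x)‖ ≤ 1 := by
  rw [segment_eq_image'] at hy
  obtain ⟨θ, ⟨hθ₀, hθ₁⟩, rfl⟩ := hy
  have hconv : e + Fintype.linearCombination ℝ w (x + θ • (p - x) - x)
      = (1 - θ) • e + θ • (e + Fintype.linearCombination ℝ w (p - x)) := by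
    rw [add_sub_cancel_left, map_smul, smul_add, sub_smul, one_smul]; abel
  rw [hconv]
  calc ‖(1 - θ) • e + θ • (e + Fintype.linearCombination ℝ w (p - x))‖
      ≤ (1 - θ) * ‖e‖ + θ * ‖e + Fintype.linearCombination ℝ w (p - x)‖ := by
        refine (norm_add_le _ _).trans_eq ?_
        rw [norm_smul_of_nonneg (by linarith), norm_smul_of_nonneg hθ₀]
    _ ≤ (1 - θ) * 1 + θ * 1 := by gcongr
    _ = 1 := by ring

lemma exists_one_le_norm_add_linearCombination_le_one [FiniteDimensional ℝ E] [Nonempty ι]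
    (hcard : Fintype.card ι = finrank ℝ E) (w : ι → E) (hw : ∀ j, ‖w j‖ ≤ 1)
    (x : ι → ℝ) {e : E} (he : ‖e‖ ≤ 1) :
    ∃ p : ι → ℝ, 1 ≤ ‖p‖ ∧ ‖e + Fintype.linearCombination ℝ w (p - x)‖ ≤ 1 := by
  classical
  set L := Fintype.linearCombination ℝ w
  by_cases hL : Function.Injective L
  · -- `L` is onto, so we can reach `± w j₀` and push the `j₀`-th coordinate out of `(-1, 1)`.
    have hsurj : Function.Surjective L :=
      (LinearMap.injective_iff_surjective_of_finrank_eq_finrank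
        (by rw [finrank_fintype_fun_eq_card, hcard])).mp hL
    obtain ⟨r, hr⟩ := hsurj (L x - e)
    obtain ⟨j₀⟩ := ‹Nonempty ι›
    obtain ⟨σ, hσ, hσr⟩ := exists_abs_eq_one_le_abs_add (r j₀)
    refine ⟨r + Pi.single j₀ σ, ?_, ?_⟩
    · calc (1 : ℝ) ≤ ‖(r + Pi.single j₀ σ : ι → ℝ) j₀‖ := by simpa using hσr
        _ ≤ ‖r + Pi.single j₀ σ‖ := norm_le_pi_norm _ j₀
    · have : e + L (r + Pi.single j₀ σ - x) = σ • w j₀ := by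
        rw [map_sub, map_add, hr, Fintype.linearCombination_apply_single]; abel
      rw [this, norm_smul, Real.norm_eq_abs, hσ, one_mul]
      exact hw j₀
  · -- a nonzero kernel vector `u` moves `x` without changing the sum
    obtain ⟨u, hLu, hu⟩ : ∃ u, L u = 0 ∧ u ≠ 0 := by
      simpa [injective_iff_map_eq_zero] using hL
    have hu' : 0 < ‖u‖ := norm_pos_iff.mpr hu
    refine ⟨x + ((1 + ‖x‖) / ‖u‖) • u, ?_, ?_⟩
    · have : ‖((1 + ‖x‖) / ‖u‖) • u‖ = 1 + ‖x‖ := by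
        rw [norm_smul, Real.norm_eq_abs, abs_of_nonneg (by positivity), div_mul_cancel₀ _ hu'.ne']
      have := norm_sub_le (x + ((1 + ‖x‖) / ‖u‖) • u) x
      rw [add_sub_cancel_left] at this
      linarith
    · rwa [add_sub_cancel_left, map_smul, hLu, smul_zero, add_zero]

lemma exists_norm_eq_one_add_linearCombination_le_one [FiniteDimensional ℝ E] [Nonempty ι]
    (hcard : Fintype.card ι = finrank ℝ E) (w : ι → E) (hw : ∀ j, ‖w j‖ ≤ 1)
    {x : ι → ℝ} (hx : ‖x‖ ≤ 1) {e : E} (he : ‖e‖ ≤ 1) :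
    ∃ y : ι → ℝ, ‖y‖ = 1 ∧ ‖e + Fintype.linearCombination ℝ w (y - x)‖ ≤ 1 := by
  obtain ⟨p, hp, hep⟩ := exists_one_le_norm_add_linearCombination_le_one hcard w hw x he
  obtain ⟨y, hy, hy1⟩ := exists_mem_segment_norm_eq hx hp
  exact ⟨y, hy1, norm_add_linearCombination_le_one_of_mem_segment w he hep hy⟩

structure IsPartialColoring (v : ℕ → E) (t : ℕ) (c : ℕ → ℝ) : Prop where
  eq_zero_of_le : ∀ i, t ≤ i → c i = 0
  abs_le_one : ∀ i, |c i| ≤ 1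
  norm_sum_le_one : ‖∑ i ∈ range t, c i • v i‖ ≤ 1
  card_floating_lt : #{i ∈ range t | |c i| < 1} < finrank ℝ E

namespace IsPartialColoring

variable {v : ℕ → E} {t : ℕ} {c : ℕ → ℝ}

lemma zero (hd : 0 < finrank ℝ E) : IsPartialColoring v 0 0 :=
  ⟨fun _ _ => rfl, by simp, by simp, by simpa using hd⟩

lemma exists_succ_of_card_eq [FiniteDimensional ℝ E] (hv : ∀ i, ‖v i‖ ≤ 1)
    (hc : IsPartialColoring v t c) (hs_card : #{i ∈ range (t + 1) | |c i| < 1} = finrank ℝ E) :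
    ∃ c', IsPartialColoring v (t + 1) c' ∧ ∀ i, |c i| = 1 → c' i = c i := by
  classical
  set s := {i ∈ range (t + 1) | |c i| < 1} with hs_def
  have hct : c t = 0 := hc.eq_zero_of_le t le_rfl
  have : Nonempty s := ⟨⟨t, by simp [hs_def, hct]⟩⟩
  obtain ⟨y, hy, hy_sum⟩ := exists_norm_eq_one_add_linearCombination_le_one
    (Fintype.card_coe s ▸ hs_card) (fun j : s => v j) (fun j => hv j)
    (x := fun j : s => c j) ((pi_norm_le_iff_of_nonneg zero_le_one).mpr fun j => hc.abs_le_one j)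
    (e := ∑ i ∈ range (t + 1), c i • v i)
    (by rw [sum_range_succ, hct, zero_smul, add_zero]; exact hc.norm_sum_le_one)
  set c' : ℕ → ℝ := fun i => if h : i ∈ s then y ⟨i, h⟩ else c i
  have hc'_mem (j : s) : c' j = y j := dif_pos j.2
  have hc'_not {i : ℕ} (hi : i ∉ s) : c' i = c i := dif_neg hi
  have hs_sub : s ⊆ range (t + 1) := filter_subset _ _
  refine ⟨c', ⟨fun i hi => ?_, fun i => ?_, ?_, ?_⟩, fun i hi => hc'_not ?_⟩
  · rw [hc'_not fun h => by have := mem_range.mp (hs_sub h); omega]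
    exact hc.eq_zero_of_le i (by omega)
  · by_cases hi : i ∈ s
    · simpa [hc'_mem ⟨i, hi⟩, hy] using norm_le_pi_norm y ⟨i, hi⟩
    · rw [hc'_not hi]; exact hc.abs_le_one i
  · rw [sum_smul_eq_add_sum_sub_smul hs_sub v fun i _ hi => hc'_not hi, ← sum_coe_sort s]
    simpa only [Fintype.linearCombination_apply, Pi.sub_apply, hc'_mem] using hy_sum
  · have hsub : {i ∈ range (t + 1) | |c' i| < 1} ⊆ s := fun i hi => by
      by_contra his
      rw [mem_filter, hc'_not his] at hi
      exact his (mem_filter.mpr hi)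
    obtain ⟨j, hj⟩ : ∃ j : s, ¬|y j| < 1 := by
      by_contra! h
      exact hy.not_lt ((pi_norm_lt_iff one_pos).mpr h)
    refine hs_card ▸ card_lt_card ((ssubset_iff_of_subset hsub).mpr ⟨j, j.2, fun hj' => hj ?_⟩)
    simpa [hc'_mem] using (mem_filter.mp hj').2
  · simp [hs_def, hi]

lemma exists_succ [FiniteDimensional ℝ E] (hv : ∀ i, ‖v i‖ ≤ 1) (hc : IsPartialColoring v t c) :
    ∃ c', IsPartialColoring v (t + 1) c' ∧ ∀ i, |c i| = 1 → c' i = c i := by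
  have hct : c t = 0 := hc.eq_zero_of_le t le_rfl
  have hs : {i ∈ range (t + 1) | |c i| < 1} = insert t {i ∈ range t | |c i| < 1} := by
    rw [range_add_one, filter_insert, if_pos (by simp [hct])]
  rcases (hs ▸ (card_insert_le _ _).trans hc.card_floating_lt).lt_or_eq with hlt | hs_card
  · refine ⟨c, ⟨fun i hi => hc.eq_zero_of_le i (by omega), hc.abs_le_one, ?_, hlt⟩,
      fun _ _ => rfl⟩
    rw [sum_range_succ, hct, zero_smul, add_zero]; exact hc.norm_sum_le_one
  · exact hc.exists_succ_of_card_eq hv hs_card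

lemma norm_sum_le (hv : ∀ i, ‖v i‖ ≤ 1) (hc : IsPartialColoring v t c) {ε : ℕ → ℝ}
    (hε : ∀ i, |ε i| ≤ 1) (hεc : ∀ i, |c i| = 1 → ε i = c i) :
    ‖∑ i ∈ range t, ε i • v i‖ ≤ 2 * finrank ℝ E - 1 := by
  set F := {i ∈ range t | |c i| < 1}
  -- rounding changes only the floating coefficients, each by at most `2`
  have hsplit : ∑ i ∈ range t, ε i • v i
      = ∑ i ∈ range t, c i • v i + ∑ i ∈ F, (ε i - c i) • v i :=
    sum_smul_eq_add_sum_sub_smul (filter_subset _ _) v fun i hi hfrozen =>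
      hεc i ((hc.abs_le_one i).antisymm (not_lt.mp fun h => hfrozen (mem_filter.mpr ⟨hi, h⟩)))
  have hterm (i : ℕ) : ‖(ε i - c i) • v i‖ ≤ 2 * 1 := by
    have hcoef : ‖ε i - c i‖ ≤ 2 := by
      rw [Real.norm_eq_abs]; linarith [abs_sub (ε i) (c i), hε i, hc.abs_le_one i]
    exact (norm_smul_le _ _).trans (mul_le_mul hcoef (hv i) (norm_nonneg _) zero_le_two)
  have hF : (#F : ℝ) + 1 ≤ finrank ℝ E := by exact_mod_cast hc.card_floating_lt
  calc ‖∑ i ∈ range t, ε i • v i‖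
      ≤ ‖∑ i ∈ range t, c i • v i‖ + ‖∑ i ∈ F, (ε i - c i) • v i‖ := hsplit ▸ norm_add_le _ _
    _ ≤ 1 + ∑ i ∈ F, (2 * 1 : ℝ) :=
        add_le_add hc.norm_sum_le_one (norm_sum_le_of_le _ fun i _ => hterm i)
    _ ≤ 2 * finrank ℝ E - 1 := by rw [sum_const, nsmul_eq_mul]; linarith

end IsPartialColoring

lemma exists_isPartialColoring_refining [FiniteDimensional ℝ E] (hd : 0 < finrank ℝ E)
    {v : ℕ → E} (hv : ∀ i, ‖v i‖ ≤ 1) (N : ℕ) :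
    ∃ c, IsPartialColoring v N c ∧
      ∀ t ≤ N, ∃ c₀, IsPartialColoring v t c₀ ∧ ∀ i, |c₀ i| = 1 → c i = c₀ i := by
  induction N with
  | zero =>
    refine ⟨0, .zero hd, fun t ht => ⟨0, ?_, by simp⟩⟩
    obtain rfl : t = 0 := by omega
    exact .zero hd
  | succ N ih =>
    obtain ⟨c, hc, hpast⟩ := ih
    obtain ⟨c', hc', hfix⟩ := hc.exists_succ hv
    refine ⟨c', hc', fun t ht => ?_⟩
    rcases Nat.lt_succ_iff_lt_or_eq.mp (Nat.lt_succ_of_le ht) with ht | rfl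
    · obtain ⟨c₀, hc₀, hagree⟩ := hpast t (by omega)
      exact ⟨c₀, hc₀, fun i hi => (hfix i (hagree i hi ▸ hi)).trans (hagree i hi)⟩
    · exact ⟨c', hc', fun _ _ => rfl⟩

theorem exists_signs_norm_sum_range_le [FiniteDimensional ℝ E] (hd : 0 < finrank ℝ E)
    {v : ℕ → E} (hv : ∀ i, ‖v i‖ ≤ 1) (N : ℕ) :
    ∃ ε : ℕ → ℝ, (∀ i, ε i = 1 ∨ ε i = -1) ∧
      ∀ t ≤ N, ‖∑ i ∈ range t, ε i • v i‖ ≤ 2 * finrank ℝ E - 1 := by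
  obtain ⟨c, -, hpast⟩ := exists_isPartialColoring_refining hd hv N
  refine ⟨fun i => if 0 ≤ c i then 1 else -1, fun i => by by_cases h : 0 ≤ c i <;> simp [h],
    fun t ht => ?_⟩
  obtain ⟨c₀, hc₀, hagree⟩ := hpast t ht
  refine hc₀.norm_sum_le hv (fun i => by by_cases h : 0 ≤ c i <;> simp [h]) fun i hi => ?_
  obtain hci := hagree i hi
  rw [← hci] at hi ⊢
  rcases (abs_eq zero_le_one).mp hi with h | h <;> simp [h]

end

lemma finProdFinEquiv_val_lt_mul_iff {n k : ℕ} (p : Fin n × Fin k) (m : ℕ) :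
    (finProdFinEquiv p : ℕ) < m * k ↔ (p.1 : ℕ) < m := by
  rw [finProdFinEquiv_apply_val]
  have := p.2.isLt
  constructor
  · intro h
    by_contra! hm
    nlinarith [Nat.mul_le_mul_left k hm]
  · intro h
    nlinarith [Nat.mul_le_mul_left k (Nat.succ_le_of_lt h)]

lemma sum_columns_eq_sum_range {M : Type*} [AddCommMonoid M] {n k m : ℕ} (hm : m ≤ n)
    (g : ℕ → M) :
    ∑ j : Fin k, ∑ i ∈ univ.filter (fun i : Fin n => (i : ℕ) < m), g (finProdFinEquiv (i, j))
      = ∑ ℓ ∈ range (m * k), g ℓ := by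
  rw [sum_comm, ← sum_product']
  refine sum_bij' (fun p _ => finProdFinEquiv p)
    (fun ℓ hℓ => finProdFinEquiv.symm ⟨ℓ, (mem_range.mp hℓ).trans_le (Nat.mul_le_mul_right k hm)⟩)
    (fun p hp => ?_) (fun ℓ hℓ => ?_) (fun p _ => finProdFinEquiv.symm_apply_apply p)
    (fun ℓ _ => by rw [Equiv.apply_symm_apply]) (fun p _ => rfl)
  · rw [mem_range, finProdFinEquiv_val_lt_mul_iff]
    exact (mem_filter.mp (mem_product.mp hp).1).2
  · refine mem_product.mpr ⟨mem_filter.mpr ⟨mem_univ _, ?_⟩, mem_univ _⟩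
    rw [← finProdFinEquiv_val_lt_mul_iff, Equiv.apply_symm_apply]
    exact mem_range.mp hℓ

theorem matrix_signs_general
    (d k n : ℕ) (hd : 0 < d)
    {E : Type*} [NormedAddCommGroup E] [NormedSpace ℝ E]
    [FiniteDimensional ℝ E] (hdim : Module.finrank ℝ E = d)
    (B : Fin k → Fin n → E)
    (hB : ∀ j i, ‖B j i‖ ≤ 1) :
    ∃ ε : Fin k → Fin n → ℝ, (∀ j i, ε j i = 1 ∨ ε j i = -1) ∧
      ∀ m : ℕ, 1 ≤ m → m ≤ n →
        ‖∑ j : Fin k, ∑ i ∈ Finset.univ.filter (fun i : Fin n => (i : ℕ) < m),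
            ε j i • B j i‖ ≤ 2 * d - 1 := by
  subst hdim
  -- list the entries column by column, padding with zeros
  set v : ℕ → E := Function.extend Fin.val
    (fun ℓ : Fin (n * k) => B (finProdFinEquiv.symm ℓ).2 (finProdFinEquiv.symm ℓ).1) 0 with hv_def
  have hv_val (ℓ : Fin (n * k)) : v ℓ = B (finProdFinEquiv.symm ℓ).2 (finProdFinEquiv.symm ℓ).1 :=
    Fin.val_injective.extend_apply _ _ ℓ
  have hv (ℓ : ℕ) : ‖v ℓ‖ ≤ 1 := by
    by_cases h : ∃ a : Fin (n * k), (a : ℕ) = ℓ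
    · obtain ⟨a, rfl⟩ := h
      rw [hv_val]; exact hB _ _
    · rw [hv_def, Function.extend_apply' _ _ _ h, Pi.zero_apply, norm_zero]; exact zero_le_one
  obtain ⟨σ, hσ, hσv⟩ := exists_signs_norm_sum_range_le hd hv (n * k)
  refine ⟨fun j i => σ (finProdFinEquiv (i, j)), fun j i => hσ _, fun m _ hm => ?_⟩
  have hprefix := hσv (m * k) (Nat.mul_le_mul_right k hm)
  rw [← sum_columns_eq_sum_range hm (fun ℓ => σ ℓ • v ℓ)] at hprefix
  simpa only [hv_val, Equiv.symm_apply_apply] using hprefix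

/-- The matrix form of the Bárány–Grinberg sign-sequence theorem: for any
`k × n` matrix `B` whose entries are vectors of norm at most `1` in a
`d`-dimensional real normed space, there is a `k × n` sign matrix
`ε = (ε_i^j)`, `ε_i^j ∈ {-1, 1}`, such that the sum of the entries in the
first `m` columns of the signed matrix `B^ε = (ε_i^j b_i^j)` has norm at most
`2d - 1` for every `m ∈ {1, …, n}`. -/
theorem matrix_signs
    (d k n : ℕ) (hd : 0 < d) (hk : 0 < k) (hn : 0 < n)
    {E : Type*} [NormedAddCommGroup E] [NormedSpace ℝ E]
    [FiniteDimensional ℝ E] (hdim : Module.finrank ℝ E = d)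
    (B : Fin k → Fin n → E)
    (hB : ∀ j i, ‖B j i‖ ≤ 1) :
    ∃ ε : Fin k → Fin n → ℝ, (∀ j i, ε j i = 1 ∨ ε j i = -1) ∧
      ∀ m : ℕ, 1 ≤ m → m ≤ n →
        ‖∑ j : Fin k, ∑ i ∈ Finset.univ.filter (fun i : Fin n => (i : ℕ) < m),
            ε j i • B j i‖ ≤ 2 * d - 1 :=
  matrix_signs_general d k n hd hdim B hB
end

section
/- Let d, k be positive integers, let ‖·‖ be any norm on ℝ^d, and let V ≥ 0 be a real number with the following property: for every positive integer p and every k×p matrix B = (b_i^j) with entries in ℝ^d of norm at most 1, there exists a sign matrix ε = (ε_i^j), ε_i^j ∈ {−1,1}, such that ‖∑_{j=1}^k ∑_{i=1}^m ε_i^j b_i^j‖ ≤ V for every m ∈ {1,…,p}. Then for every positive integer n and every k×n matrix A = (a_i^j) with entries in ℝ^d of norm at most 1 whose total sum of entries is zero, there exist permutations π_1, …, π_k of {1,…,n} such that the row-permuted matrix C with c_i^j = a_{π_j(i)}^j satisfies ‖∑_{j=1}^k ∑_{i=1}^m c_i^j‖ ≤ 2V for every m ∈ {1,…,n}. -/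
/-!
Chobanyan's argument. Fix row arrangements minimising the largest prefix norm `M`. Split every
row into consecutive pairs and choose signs `ε` for the half-differences of the pairs, all of whose
signed prefix sums have norm at most `V`. In each pair, the entry picked by the sign goes to the
front half, the other one to the back half: the front half lists the picked entries in order, then
comes the unpaired last entry (if `n` is odd), and the back half lists the other entries in
reverse order. Each prefix sum of the new arrangement is `S / 2 + W` or `-(S / 2 - W)`, where `S`
is a prefix sum of the old arrangement and `W` a signed prefix sum, so its norm is at most
`M / 2 + V`. By minimality `M ≤ M / 2 + V`.
-/

open Finset

section IndexMaps

/-- The order `0, 2, 4, …, (n - 1 if n is odd), …, 5, 3, 1`: each prefix of it is a prefix of the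
even positions or the complement of a prefix of the odd positions. -/
def foldIndex (n t : ℕ) : ℕ :=
  if t < n / 2 then 2 * t else if t < n - n / 2 then n - 1 else 2 * (n - 1 - t) + 1

lemma mapsTo_foldIndex (n : ℕ) : Set.MapsTo (foldIndex n) (Set.Iio n) (Set.Iio n) := by
  intro t (ht : t < n)
  change foldIndex n t < n
  unfold foldIndex
  split_ifs <;> omega

lemma injOn_foldIndex (n : ℕ) : Set.InjOn (foldIndex n) (Set.Iio n) := by
  intro s (hs : s < n) t (ht : t < n) h
  unfold foldIndex at h
  split_ifs at h <;> omega

noncomputable def pairFlip (n : ℕ) (ε : ℕ → ℝ) (t : ℕ) : ℕ :=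
  if t / 2 < n / 2 ∧ ε (t / 2) ≠ 1 then (if t % 2 = 0 then t + 1 else t - 1) else t

lemma mapsTo_pairFlip (n : ℕ) (ε : ℕ → ℝ) :
    Set.MapsTo (pairFlip n ε) (Set.Iio n) (Set.Iio n) := by
  intro t (ht : t < n)
  change pairFlip n ε t < n
  unfold pairFlip
  split_ifs <;> omega

lemma pairFlip_involutive (n : ℕ) (ε : ℕ → ℝ) : Function.Involutive (pairFlip n ε) := by
  intro t
  by_cases h : t / 2 < n / 2 ∧ ε (t / 2) ≠ 1
  · have hdiv : (if t % 2 = 0 then t + 1 else t - 1) / 2 = t / 2 := by split_ifs <;> omega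
    rw [pairFlip, pairFlip, if_pos h, hdiv, if_pos h]
    split_ifs <;> omega
  · rw [pairFlip, pairFlip, if_neg h, if_neg h]

lemma pairFlip_two_mul {n i : ℕ} (ε : ℕ → ℝ) (hi : 2 * i + 1 < n) :
    pairFlip n ε (2 * i) = if ε i = 1 then 2 * i else 2 * i + 1 := by
  have h2 : 2 * i / 2 = i := by omega
  by_cases h : ε i = 1 <;> simp [pairFlip, h2, h, show i < n / 2 by omega]

lemma pairFlip_two_mul_add_one {n i : ℕ} (ε : ℕ → ℝ) (hi : 2 * i + 1 < n) :
    pairFlip n ε (2 * i + 1) = if ε i = 1 then 2 * i + 1 else 2 * i := by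
  have h2 : (2 * i + 1) / 2 = i := by omega
  by_cases h : ε i = 1 <;> simp [pairFlip, h2, h, show i < n / 2 by omega]

noncomputable def finPermOfInjOn {n : ℕ} {f : ℕ → ℕ} (hf : Set.MapsTo f (Set.Iio n) (Set.Iio n))
    (hinj : Set.InjOn f (Set.Iio n)) : Equiv.Perm (Fin n) :=
  Equiv.ofBijective (fun i => ⟨f i, hf i.2⟩)
    (Finite.injective_iff_bijective.1 fun a b h => Fin.ext (hinj a.2 b.2 (congrArg Fin.val h)))

end IndexMaps

section Sums

variable {M : Type*} [AddCommMonoid M]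

lemma sum_range_comp_of_injOn (x : ℕ → M) {n : ℕ} {f : ℕ → ℕ}
    (hf : Set.MapsTo f (Set.Iio n) (Set.Iio n)) (hinj : Set.InjOn f (Set.Iio n)) :
    ∑ t ∈ range n, x (f t) = ∑ t ∈ range n, x t := by
  rw [← coe_range] at hf hinj
  exact sum_nbij f hf hinj (surjOn_of_injOn_of_card_le f hf hinj le_rfl) fun _ _ => rfl

lemma sum_range_two_mul (x : ℕ → M) (u : ℕ) :
    ∑ t ∈ range (2 * u), x t = ∑ i ∈ range u, (x (2 * i) + x (2 * i + 1)) := by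
  induction u with
  | zero => simp
  | succ u ih => rw [Nat.mul_succ, sum_range_succ, sum_range_succ, sum_range_succ, ih, add_assoc]

lemma sum_filter_val_lt (x : ℕ → M) {m n : ℕ} (hm : m ≤ n) :
    ∑ i ∈ univ.filter (fun i : Fin n => (i : ℕ) < m), x i = ∑ t ∈ range m, x t := by
  rw [sum_filter, Fin.sum_univ_eq_sum_range (fun t => if t < m then x t else 0), ← sum_filter]
  congr 1
  ext t
  simp only [mem_filter, mem_range]
  omega

end Sums

section FoldSums

variable {M : Type*} [AddCommGroup M]

lemma sum_range_foldIndex_of_le_half (z : ℕ → M) {m n : ℕ} (hm : m ≤ n / 2) :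
    ∑ t ∈ range m, z (foldIndex n t) = ∑ i ∈ range m, z (2 * i) :=
  sum_congr rfl fun t ht => by rw [foldIndex, if_pos (by rw [mem_range] at ht; omega)]

lemma sum_range_foldIndex_of_half_le (z : ℕ → M) {m n : ℕ} (hm : n - n / 2 ≤ m) (hmn : m ≤ n) :
    ∑ t ∈ range m, z (foldIndex n t)
      = ∑ t ∈ range n, z t - ∑ i ∈ range (n - m), z (2 * i + 1) := by
  have htail : ∑ t ∈ Ico m n, z (foldIndex n t) = ∑ i ∈ range (n - m), z (2 * i + 1) := by
    rw [sum_Ico_eq_sum_range, ← sum_range_reflect (fun i => z (2 * i + 1))]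
    refine sum_congr rfl fun s hs => ?_
    simp only [mem_range] at hs
    rw [foldIndex, if_neg (by omega), if_neg (by omega)]
    congr 2
    omega
  rw [← sum_range_comp_of_injOn z (mapsTo_foldIndex n) (injOn_foldIndex n),
    ← sum_range_add_sum_Ico _ hmn, htail, add_sub_cancel_right]

end FoldSums

section PairFlipSums

variable {M : Type*} [AddCommGroup M] [Module ℝ M]

noncomputable def halfDiff (x : ℕ → M) (i : ℕ) : M := (2⁻¹ : ℝ) • (x (2 * i) - x (2 * i + 1))

lemma ite_sign_eq_smul (a b : M) {s : ℝ} (hs : s = 1 ∨ s = -1) :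
    (if s = 1 then a else b) = (2⁻¹ : ℝ) • (a + b) + s • (2⁻¹ : ℝ) • (a - b) := by
  rcases hs with rfl | rfl
  · rw [if_pos rfl]; module
  · rw [if_neg (by norm_num)]; module

lemma sum_range_pairFlip_two_mul (x : ℕ → M) {ε : ℕ → ℝ} (hε : ∀ i, ε i = 1 ∨ ε i = -1)
    {n u : ℕ} (hu : 2 * u ≤ n) :
    ∑ i ∈ range u, x (pairFlip n ε (2 * i))
      = (2⁻¹ : ℝ) • ∑ t ∈ range (2 * u), x t + ∑ i ∈ range u, ε i • halfDiff x i := by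
  rw [sum_range_two_mul, smul_sum, ← sum_add_distrib]
  refine sum_congr rfl fun i hi => ?_
  have hi : 2 * i + 1 < n := by rw [mem_range] at hi; omega
  rw [pairFlip_two_mul ε hi, apply_ite x, ite_sign_eq_smul _ _ (hε i), halfDiff]

lemma sum_range_pairFlip_two_mul_add_one (x : ℕ → M) {ε : ℕ → ℝ}
    (hε : ∀ i, ε i = 1 ∨ ε i = -1) {n u : ℕ} (hu : 2 * u ≤ n) :
    ∑ i ∈ range u, x (pairFlip n ε (2 * i + 1))
      = (2⁻¹ : ℝ) • ∑ t ∈ range (2 * u), x t - ∑ i ∈ range u, ε i • halfDiff x i := by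
  rw [sum_range_two_mul, smul_sum, ← sum_sub_distrib]
  refine sum_congr rfl fun i hi => ?_
  have hi : 2 * i + 1 < n := by rw [mem_range] at hi; omega
  rw [pairFlip_two_mul_add_one ε hi, apply_ite x, ite_sign_eq_smul _ _ (hε i), halfDiff]
  module

end PairFlipSums

section SignConstant

variable {E : Type*} [SeminormedAddCommGroup E] [NormedSpace ℝ E] {k : ℕ} {V : ℝ}

def IsSignConstant (k : ℕ) (E : Type*) [SeminormedAddCommGroup E] [NormedSpace ℝ E] (V : ℝ) :
    Prop :=
  ∀ p : ℕ, 0 < p → ∀ B : Fin k → Fin p → E, (∀ j i, ‖B j i‖ ≤ 1) →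
    ∃ ε : Fin k → Fin p → ℝ, (∀ j i, ε j i = 1 ∨ ε j i = -1) ∧
      ∀ m : ℕ, 1 ≤ m → m ≤ p →
        ‖∑ j, ∑ i ∈ univ.filter (fun i : Fin p => (i : ℕ) < m), ε j i • B j i‖ ≤ V

lemma IsSignConstant.nonneg (hV : IsSignConstant k E V) : 0 ≤ V := by
  obtain ⟨ε, -, h⟩ := hV 1 one_pos 0 (by simp)
  simpa using h 1 le_rfl le_rfl

lemma IsSignConstant.exists_signs (hV : IsSignConstant k E V) (p : ℕ) (b : Fin k → ℕ → E)
    (hb : ∀ j i, i < p → ‖b j i‖ ≤ 1) :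
    ∃ ε : Fin k → ℕ → ℝ, (∀ j i, ε j i = 1 ∨ ε j i = -1) ∧
      ∀ u ≤ p, ‖∑ j, ∑ i ∈ range u, ε j i • b j i‖ ≤ V := by
  rcases p.eq_zero_or_pos with rfl | hp
  · refine ⟨fun _ _ => 1, by simp, fun u hu => ?_⟩
    simpa [nonpos_iff_eq_zero.1 hu] using hV.nonneg
  obtain ⟨η, hη, hηV⟩ := hV p hp (fun j i => b j i) fun j i => hb j i i.2
  refine ⟨fun j i => if h : i < p then η j ⟨i, h⟩ else 1, fun j i => ?_, fun u hu => ?_⟩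
  · dsimp only
    split_ifs
    exacts [hη j _, Or.inl rfl]
  rcases u.eq_zero_or_pos with rfl | hu0
  · simpa using hV.nonneg
  convert hηV u hu0 hu using 3 with j
  rw [← sum_filter_val_lt _ hu]
  exact sum_congr rfl fun i _ => by simp only [dif_pos i.2]

end SignConstant

section PrefixSums

variable {E : Type*} {k n : ℕ}

def prefixSum [AddCommMonoid E] (A : Fin k → Fin n → E) (m : ℕ) : E :=
  ∑ j, ∑ i ∈ univ.filter (fun i : Fin n => (i : ℕ) < m), A j i

def maxPrefixNorm [SeminormedAddCommGroup E] (A : Fin k → Fin n → E) : ℝ :=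
  (range (n + 1)).sup' nonempty_range_add_one fun m => ‖prefixSum A m‖

lemma norm_prefixSum_le_maxPrefixNorm [SeminormedAddCommGroup E] (A : Fin k → Fin n → E) {m : ℕ}
    (hm : m ≤ n) :
    ‖prefixSum A m‖ ≤ maxPrefixNorm A :=
  le_sup' (fun m => ‖prefixSum A m‖) (mem_range.2 (Nat.lt_succ_of_le hm))

lemma maxPrefixNorm_le [SeminormedAddCommGroup E] {A : Fin k → Fin n → E} {c : ℝ}
    (h : ∀ m ≤ n, ‖prefixSum A m‖ ≤ c) :
    maxPrefixNorm A ≤ c :=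
  sup'_le _ _ fun m hm => h m (Nat.le_of_lt_succ (mem_range.1 hm))

lemma prefixSum_eq_sum_range [AddCommMonoid E] {A : Fin k → Fin n → E} {x : Fin k → ℕ → E}
    (hx : ∀ j (i : Fin n), A j i = x j i) {m : ℕ} (hm : m ≤ n) :
    prefixSum A m = ∑ j, ∑ t ∈ range m, x j t := by
  simp only [prefixSum, hx, sum_filter_val_lt _ hm]

lemma prefixSum_self [AddCommMonoid E] (A : Fin k → Fin n → E) :
    prefixSum A n = ∑ j, ∑ i, A j i := by
  simp [prefixSum]

end PrefixSums

section Halving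

variable {E : Type*} [SeminormedAddCommGroup E] [NormedSpace ℝ E] {k n : ℕ} {V : ℝ}

lemma norm_halfDiff_le {x : ℕ → E} {i : ℕ} (h₀ : ‖x (2 * i)‖ ≤ 1) (h₁ : ‖x (2 * i + 1)‖ ≤ 1) :
    ‖halfDiff x i‖ ≤ 1 := by
  rw [halfDiff, norm_smul, norm_inv, Real.norm_two]
  linarith [norm_sub_le (x (2 * i)) (x (2 * i + 1))]

lemma norm_half_smul_add_le {a b : E} {r s : ℝ} (ha : ‖a‖ ≤ r) (hb : ‖b‖ ≤ s) :
    ‖(2⁻¹ : ℝ) • a + b‖ ≤ r / 2 + s := by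
  calc ‖(2⁻¹ : ℝ) • a + b‖ ≤ 2⁻¹ * ‖a‖ + ‖b‖ := by
        simpa [norm_smul] using norm_add_le ((2⁻¹ : ℝ) • a) b
    _ ≤ r / 2 + s := by linarith

theorem IsSignConstant.exists_reindex_norm_prefix_le (hV : IsSignConstant k E V) {B : ℝ}
    (x : Fin k → ℕ → E) (hx : ∀ j t, t < n → ‖x j t‖ ≤ 1)
    (hsum : ∑ j, ∑ t ∈ range n, x j t = 0)
    (hB : ∀ m ≤ n, ‖∑ j, ∑ t ∈ range m, x j t‖ ≤ B) :
    ∃ τ : Fin k → ℕ → ℕ,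
      (∀ j, Set.MapsTo (τ j) (Set.Iio n) (Set.Iio n) ∧ Set.InjOn (τ j) (Set.Iio n)) ∧
      ∀ m ≤ n, ‖∑ j, ∑ t ∈ range m, x j (τ j t)‖ ≤ B / 2 + V := by
  obtain ⟨ε, hε, hW⟩ := hV.exists_signs (n / 2) (fun j => halfDiff (x j))
    fun j i hi => norm_halfDiff_le (hx j _ (by omega)) (hx j _ (by omega))
  have hflip_sum : ∑ j, ∑ t ∈ range n, x j (pairFlip n (ε j) t) = 0 := by
    rw [← hsum]
    exact sum_congr rfl fun j _ => sum_range_comp_of_injOn _ (mapsTo_pairFlip n (ε j))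
      (pairFlip_involutive n (ε j)).injective.injOn
  refine ⟨fun j t => pairFlip n (ε j) (foldIndex n t), fun j =>
    ⟨(mapsTo_pairFlip n (ε j)).comp (mapsTo_foldIndex n),
      (pairFlip_involutive n (ε j)).injective.injOn.comp (injOn_foldIndex n)
        (mapsTo_foldIndex n)⟩, fun m hm => ?_⟩
  rcases le_or_gt m (n / 2) with hle | hgt
  · have hrow : ∀ j, ∑ t ∈ range m, x j (pairFlip n (ε j) (foldIndex n t))
        = (2⁻¹ : ℝ) • ∑ t ∈ range (2 * m), x j t + ∑ i ∈ range m, ε j i • halfDiff (x j) i :=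
      fun j => (sum_range_foldIndex_of_le_half (fun t => x j (pairFlip n (ε j) t)) hle).trans
        (sum_range_pairFlip_two_mul (x j) (hε j) (by omega))
    rw [sum_congr rfl fun j _ => hrow j, sum_add_distrib, ← smul_sum]
    exact norm_half_smul_add_le (hB _ (by omega)) (hW m hle)
  · have hrow : ∀ j, ∑ t ∈ range m, x j (pairFlip n (ε j) (foldIndex n t))
        = ∑ t ∈ range n, x j (pairFlip n (ε j) t)
          - ((2⁻¹ : ℝ) • ∑ t ∈ range (2 * (n - m)), x j t
            - ∑ i ∈ range (n - m), ε j i • halfDiff (x j) i) := fun j => by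
      rw [sum_range_foldIndex_of_half_le (fun t => x j (pairFlip n (ε j) t)) (by omega) hm,
        sum_range_pairFlip_two_mul_add_one (x j) (hε j) (by omega)]
    rw [sum_congr rfl fun j _ => hrow j, sum_sub_distrib, hflip_sum, zero_sub, norm_neg,
      sum_sub_distrib, ← smul_sum, sub_eq_add_neg]
    exact norm_half_smul_add_le (hB _ (by omega)) ((norm_neg _).trans_le (hW _ (by omega)))

theorem IsSignConstant.exists_perm_maxPrefixNorm_le (hV : IsSignConstant k E V)
    (A : Fin k → Fin n → E) (hA : ∀ j i, ‖A j i‖ ≤ 1) (hsum : ∑ j, ∑ i, A j i = 0) :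
    ∃ σ : Fin k → Equiv.Perm (Fin n),
      maxPrefixNorm (fun j i => A j (σ j i)) ≤ maxPrefixNorm A / 2 + V := by
  let x : Fin k → ℕ → E := fun j t => if h : t < n then A j ⟨t, h⟩ else 0
  have hxA : ∀ j (i : Fin n), A j i = x j i := fun j i => by simp only [x, dif_pos i.2]
  obtain ⟨τ, hτ, hbound⟩ := hV.exists_reindex_norm_prefix_le x
    (fun j t ht => by simpa only [hxA] using hA j ⟨t, ht⟩)
    (by rw [← prefixSum_eq_sum_range hxA le_rfl, prefixSum_self, hsum])
    fun m hm => by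
      rw [← prefixSum_eq_sum_range hxA hm]
      exact norm_prefixSum_le_maxPrefixNorm A hm
  refine ⟨fun j => finPermOfInjOn (hτ j).1 (hτ j).2, maxPrefixNorm_le fun m hm => ?_⟩
  rw [prefixSum_eq_sum_range (x := fun j t => x j (τ j t)) (fun j i => hxA j _) hm]
  exact hbound m hm

end Halving

theorem transference_general
    (k : ℕ)
    {E : Type*} [NormedAddCommGroup E] [NormedSpace ℝ E]
    (V : ℝ)
    (hsigns : ∀ p : ℕ, 0 < p → ∀ B : Fin k → Fin p → E,
      (∀ j i, ‖B j i‖ ≤ 1) →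
      ∃ ε : Fin k → Fin p → ℝ, (∀ j i, ε j i = 1 ∨ ε j i = -1) ∧
        ∀ m : ℕ, 1 ≤ m → m ≤ p →
          ‖∑ j : Fin k, ∑ i ∈ Finset.univ.filter (fun i : Fin p => (i : ℕ) < m),
              ε j i • B j i‖ ≤ V) :
    ∀ n : ℕ, 0 < n → ∀ A : Fin k → Fin n → E,
      (∀ j i, ‖A j i‖ ≤ 1) →
      (∑ j : Fin k, ∑ i : Fin n, A j i = 0) →
      ∃ π : Fin k → Equiv.Perm (Fin n),
        ∀ m : ℕ, 1 ≤ m → m ≤ n →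
          ‖∑ j : Fin k, ∑ i ∈ Finset.univ.filter (fun i : Fin n => (i : ℕ) < m),
              A j (π j i)‖ ≤ 2 * V := by
  intro n _ A hA hsum
  obtain ⟨π, -, hπ⟩ := exists_min_image univ
    (fun π : Fin k → Equiv.Perm (Fin n) => maxPrefixNorm fun j i => A j (π j i)) univ_nonempty
  obtain ⟨σ, hσ⟩ := IsSignConstant.exists_perm_maxPrefixNorm_le hsigns (fun j i => A j (π j i))
    (fun j i => hA j _) (by simpa only [Equiv.sum_comp] using hsum)
  have hmin := hπ (fun j => (σ j).trans (π j)) (mem_univ _)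
  refine ⟨π, fun m _ hm => (norm_prefixSum_le_maxPrefixNorm _ hm).trans ?_⟩
  simp only [Equiv.trans_apply] at hmin
  linarith

/-- The matrix transference theorem `U(K) ≤ 2 V(K)`: if `V ≥ 0` is such that
every `k × p` matrix with entries of norm at most `1` in a `d`-dimensional real
normed space admits a choice of signs `ε_i^j ∈ {-1, 1}` making the norm of the
sum of the entries in the first `m` columns of the signed matrix at most `V`
for every `m`, then every `k × n` matrix with entries of norm at most `1` whose
total sum of entries is zero admits a row-wise rearrangement in which the sum
of the entries in the first `m` columns has norm at most `2V` for every `m`. -/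
theorem transference
    (d k : ℕ) (hd : 0 < d) (hk : 0 < k)
    {E : Type*} [NormedAddCommGroup E] [NormedSpace ℝ E]
    [FiniteDimensional ℝ E] (hdim : Module.finrank ℝ E = d)
    (V : ℝ) (hV : 0 ≤ V)
    (hsigns : ∀ p : ℕ, 0 < p → ∀ B : Fin k → Fin p → E,
      (∀ j i, ‖B j i‖ ≤ 1) →
      ∃ ε : Fin k → Fin p → ℝ, (∀ j i, ε j i = 1 ∨ ε j i = -1) ∧
        ∀ m : ℕ, 1 ≤ m → m ≤ p →
          ‖∑ j : Fin k, ∑ i ∈ Finset.univ.filter (fun i : Fin p => (i : ℕ) < m),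
              ε j i • B j i‖ ≤ V) :
    ∀ n : ℕ, 0 < n → ∀ A : Fin k → Fin n → E,
      (∀ j i, ‖A j i‖ ≤ 1) →
      (∑ j : Fin k, ∑ i : Fin n, A j i = 0) →
      ∃ π : Fin k → Equiv.Perm (Fin n),
        ∀ m : ℕ, 1 ≤ m → m ≤ n →
          ‖∑ j : Fin k, ∑ i ∈ Finset.univ.filter (fun i : Fin n => (i : ℕ) < m),
              A j (π j i)‖ ≤ 2 * V :=
  transference_general k V hsigns
end

section
/- Let d be a positive integer and equip ℝ^d with the ℓ1 norm. Let e_1, …, e_d be the standard basis of ℝ^d and e = e_1 + ⋯ + e_d. Let A be the d×(2d) matrix each of whose d rows equals (e_1, e_2, …, e_d, −e/d, −e/d, …, −e/d) (with d copies of −e/d). Then every entry of A has ℓ1 norm at most 1, the total sum of the entries of A is zero, and for every row-permuted copy C of A the sum of the entries in the first column of C has ℓ1 norm at least d/2. -/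
/-!
A first-column sum of a row-permuted copy is `x = ∑ₜ cₜ eₜ - (q / d) e`, where `m` rows contribute
a basis vector (`cₜ` of them the vector `eₜ`, so `∑ₜ cₜ = m`) and the other `q = d - m` rows
contribute `-e/d`. For an integer `c ≥ 0` and `α ≥ 0` one has `|c - α| ≥ c (1 - 2α) + α`
(equality for `c ∈ {0, 1}`), so `‖x‖₁ ≥ m (1 - 2q/d) + q = (m² + q²) / d ≥ d / 2`.
-/

open Finset

lemma abs_natCast_sub_ge (n : ℕ) {α : ℝ} (hα : 0 ≤ α) : n * (1 - 2 * α) + α ≤ |n - α| := by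
  rcases n with _ | n
  · simp [abs_of_nonneg hα]
  · refine le_trans ?_ (le_abs_self _)
    push_cast
    nlinarith [mul_nonneg n.cast_nonneg hα]

lemma sum_abs_natCast_sub_ge {κ : Type*} [Fintype κ] (c : κ → ℕ) {α : ℝ} (hα : 0 ≤ α) :
    (∑ t, (c t : ℝ)) * (1 - 2 * α) + Fintype.card κ * α ≤ ∑ t, |(c t : ℝ) - α| := by
  calc (∑ t, (c t : ℝ)) * (1 - 2 * α) + Fintype.card κ * α
      = ∑ t, ((c t : ℝ) * (1 - 2 * α) + α) := by
        rw [sum_add_distrib, sum_mul, sum_const, card_univ, nsmul_eq_mul]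
    _ ≤ ∑ t, |(c t : ℝ) - α| := sum_le_sum fun t _ => abs_natCast_sub_ge (c t) hα

lemma half_le_of_add_eq {m q d : ℝ} (hd : 0 < d) (h : m + q = d) :
    d / 2 ≤ m * (1 - 2 * (q / d)) + d * (q / d) := by
  subst h
  rw [div_le_iff₀ two_pos]
  field_simp
  nlinarith [sq_nonneg (m - q)]

lemma sum_card_fiber_eq_card_filter_lt {ι : Type*} [Fintype ι] (f : ι → ℕ) (d : ℕ) :
    ∑ t : Fin d, #{j | f j = t} = #{j | f j < d} := by
  simp only [card_filter]
  rw [sum_comm]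
  refine sum_congr rfl fun j _ => ?_
  rw [Fin.sum_univ_eq_sum_range (fun n => if f j = n then 1 else 0), sum_ite_eq]
  simp only [mem_range]

variable {d : ℕ}

noncomputable def exampleEntry (d : ℕ) (i : Fin (2 * d)) : PiLp 1 (fun _ : Fin d => ℝ) :=
  if h : (i : ℕ) < d
  then (WithLp.equiv 1 (Fin d → ℝ)).symm (Pi.single ⟨(i : ℕ), h⟩ 1)
  else -((1 : ℝ) / d) • (WithLp.equiv 1 (Fin d → ℝ)).symm (fun _ => 1)

lemma exampleEntry_apply (i : Fin (2 * d)) (t : Fin d) :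
    exampleEntry d i t = (if (i : ℕ) = t then 1 else 0) - (if d ≤ (i : ℕ) then 1 else 0) / d := by
  unfold exampleEntry
  by_cases hi : (i : ℕ) < d
  · simp [hi, Fin.ext_iff, eq_comm, not_le.mpr hi]
  · simp [hi, not_lt.mp hi, (show (i : ℕ) ≠ t by omega)]

lemma norm_exampleEntry (i : Fin (2 * d)) : ‖exampleEntry d i‖ = 1 := by
  unfold exampleEntry
  split_ifs with hi
  · simp
  · have hd : (d : ℝ) ≠ 0 := by norm_cast; omega
    simp [norm_smul, PiLp.norm_eq_of_L1, hd]

lemma sum_exampleEntry : ∑ i, exampleEntry d i = 0 := by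
  ext t
  simp only [WithLp.ofLp_sum, Finset.sum_apply, exampleEntry_apply, sum_sub_distrib, ← sum_div]
  rw [Fin.sum_univ_eq_sum_range (fun n => if n = (t : ℕ) then (1 : ℝ) else 0),
    Fin.sum_univ_eq_sum_range (fun n => if d ≤ n then (1 : ℝ) else 0), two_mul, sum_range_add,
    sum_range_add]
  have hd : (d : ℝ) ≠ 0 := by norm_cast; exact Fin.pos t |>.ne'
  have ht : ∀ x, d + x ≠ (t : ℕ) := fun x => by omega
  have hlow : {x ∈ range d | d ≤ x} = ∅ := filter_eq_empty_iff.mpr fun x hx => by simpa using hx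
  simp [ht, hlow, hd]

lemma sum_exampleEntry_apply {ι : Type*} [Fintype ι] (col : ι → Fin (2 * d)) (t : Fin d) :
    (∑ j, exampleEntry d (col j)) t =
      #{j | (col j : ℕ) = t} - (#{j | d ≤ (col j : ℕ)} : ℝ) / d := by
  simp only [WithLp.ofLp_sum, Finset.sum_apply, exampleEntry_apply, sum_sub_distrib, ← sum_div,
    sum_boole]

theorem half_le_norm_sum_exampleEntry (hd : 0 < d) {ι : Type*} [Fintype ι]
    (hι : Fintype.card ι = d) (col : ι → Fin (2 * d)) :
    (d : ℝ) / 2 ≤ ‖∑ j, exampleEntry d (col j)‖ := by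
  set c : Fin d → ℕ := fun t => #{j | (col j : ℕ) = t}
  set m := #{j | (col j : ℕ) < d}
  set q := #{j | d ≤ (col j : ℕ)}
  have hmq : m + q = d := by
    simpa [m, q, not_lt, hι] using card_filter_add_card_filter_not (s := univ)
      (fun j => (col j : ℕ) < d)
  have hc : ∑ t, c t = m := sum_card_fiber_eq_card_filter_lt (fun j => (col j : ℕ)) d
  calc (d : ℝ) / 2 ≤ m * (1 - 2 * (q / d)) + d * (q / d) :=
        half_le_of_add_eq (by exact_mod_cast hd) (by exact_mod_cast hmq)
    _ ≤ ∑ t, |(c t : ℝ) - q / d| := by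
        simpa [← hc] using sum_abs_natCast_sub_ge c (α := q / d) (by positivity)
    _ = ‖∑ j, exampleEntry d (col j)‖ := by
        simp only [PiLp.norm_eq_of_L1, sum_exampleEntry_apply, Real.norm_eq_abs, c, q]

/-- The lower-bound example in the ℓ1 norm: let `A` be the `d × 2d` matrix each
of whose rows is `(e_1, …, e_d, -e/d, …, -e/d)`, where `e_1, …, e_d` is the
standard basis of `ℝ^d` (with the ℓ1 norm) and `e = e_1 + ⋯ + e_d`. Then every
entry of `A` has ℓ1 norm at most `1`, the total sum of the entries is zero, and
in every row-permuted copy of `A` the sum of the entries in the first column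
has ℓ1 norm at least `d/2`. -/
theorem l1_lower_bound_example
    (d : ℕ) (hd : 0 < d)
    (A : Fin d → Fin (2 * d) → PiLp 1 (fun _ : Fin d => ℝ))
    (hA : ∀ j i, A j i =
      if h : (i : ℕ) < d
      then (WithLp.equiv 1 (Fin d → ℝ)).symm (Pi.single ⟨(i : ℕ), h⟩ 1)
      else -((1 : ℝ) / d) • (WithLp.equiv 1 (Fin d → ℝ)).symm (fun _ => 1)) :
    (∀ j i, ‖A j i‖ ≤ 1) ∧
    (∑ j : Fin d, ∑ i : Fin (2 * d), A j i = 0) ∧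
    ∀ π : Fin d → Equiv.Perm (Fin (2 * d)),
      (d : ℝ) / 2 ≤ ‖∑ j : Fin d, A j (π j ⟨0, by omega⟩)‖ := by
  obtain rfl : A = fun _ => exampleEntry d := funext₂ hA
  exact ⟨fun _ i => (norm_exampleEntry i).le, sum_eq_zero fun _ _ => sum_exampleEntry,
    fun π => half_le_norm_sum_exampleEntry hd (Fintype.card_fin d) _⟩
end

section
/- Let d be a positive integer, let 0 ≤ q ≤ d be an integer, let e_1, …, e_d be the standard basis of ℝ^d and e = e_1 + ⋯ + e_d. For any (not necessarily distinct) standard basis vectors v_1, …, v_{d−q} ∈ {e_1, …, e_d}, the vector ∑_{t=1}^{d−q} v_t − (q/d)·e has ℓ1 norm at least ((d−q)^2 + q^2)/d, and ((d−q)^2 + q^2)/d ≥ d/2. -/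
/-!
Write `c = q/d` and let `n_i` be the number of `t` with `v_t = e_i`, so the `i`-th coordinate of
the vector is `n_i - c` and `∑ n_i = d - q`. On natural numbers `|n - c|` has the linear minorant
`(1 - 2c) n + c`, exact at `n = 0` and `n = 1`. Summing it over the `d` coordinates gives
`(1 - 2c)(d - q) + q = ((d - q)^2 + q^2)/d`. The second inequality is `(d - 2q)^2 ≥ 0`.
-/

open Finset

lemma one_sub_two_mul_mul_add_le_abs_natCast_sub {c : ℝ} (hc : 0 ≤ c) (n : ℕ) :
    (1 - 2 * c) * n + c ≤ |(n : ℝ) - c| := by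
  rcases Nat.eq_zero_or_pos n with rfl | hn
  · simp [abs_of_nonneg hc]
  · have hn' : (1 : ℝ) ≤ n := by exact_mod_cast hn
    nlinarith [le_abs_self ((n : ℝ) - c)]

lemma one_sub_two_mul_mul_sum_add_le_sum_abs_natCast_sub {ι : Type*} [Fintype ι] {c : ℝ}
    (hc : 0 ≤ c) (n : ι → ℕ) :
    (1 - 2 * c) * ∑ i, (n i : ℝ) + Fintype.card ι * c ≤ ∑ i, |(n i : ℝ) - c| :=
  calc (1 - 2 * c) * ∑ i, (n i : ℝ) + Fintype.card ι * c
      = ∑ i, ((1 - 2 * c) * n i + c) := by simp [sum_add_distrib, mul_sum]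
    _ ≤ ∑ i, |(n i : ℝ) - c| :=
      sum_le_sum fun i _ => one_sub_two_mul_mul_add_le_abs_natCast_sub hc _

lemma sum_natCast_card_fiber_eq_card {ι T : Type*} [Fintype ι] [Fintype T] [DecidableEq ι]
    (j : T → ι) : ∑ i, (#{t | j t = i} : ℝ) = Fintype.card T := by
  exact_mod_cast (card_eq_sum_card_fiberwise (f := j) (s := univ) (t := univ)
    fun _ _ => mem_univ _).symm

lemma sum_single_one_apply {ι T : Type*} [Fintype T] [DecidableEq ι] (j : T → ι) (i : ι) :
    ∑ t, (Pi.single (j t) 1 : ι → ℝ) i = #{t | j t = i} := by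
  simp [Pi.single_apply, eq_comm]

/-- The column estimate of the ℓ1 example: if `v_1, …, v_{d-q}` are (not
necessarily distinct) standard basis vectors of `ℝ^d` (with the ℓ1 norm) and
`e = e_1 + ⋯ + e_d`, then `∑ v_t - (q/d) e` has ℓ1 norm at least
`((d-q)^2 + q^2)/d`, and `((d-q)^2 + q^2)/d ≥ d/2`. -/
theorem l1_column_estimate
    (d q : ℕ) (hd : 0 < d) (hq : q ≤ d)
    (v : Fin (d - q) → PiLp 1 (fun _ : Fin d => ℝ))
    (hv : ∀ t, ∃ i : Fin d,
      v t = (WithLp.equiv 1 (Fin d → ℝ)).symm (Pi.single i 1)) :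
    (((d : ℝ) - q) ^ 2 + (q : ℝ) ^ 2) / d ≤
      ‖(∑ t : Fin (d - q), v t) -
        ((q : ℝ) / d) • (WithLp.equiv 1 (Fin d → ℝ)).symm (fun _ => 1)‖ ∧
    (d : ℝ) / 2 ≤ (((d : ℝ) - q) ^ 2 + (q : ℝ) ^ 2) / d := by
  have hd' : (0 : ℝ) < d := by exact_mod_cast hd
  choose j hj using hv
  simp only [funext hj, WithLp.equiv_symm_apply]
  set c : ℝ := q / d
  have hnorm : ‖(∑ t, WithLp.toLp 1 (Pi.single (j t) 1 : Fin d → ℝ)) - c • WithLp.toLp 1 1‖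
      = ∑ i, |(#{t | j t = i} : ℝ) - c| := by
    simp [PiLp.norm_eq_of_L1, sum_single_one_apply]
  have hbound := one_sub_two_mul_mul_sum_add_le_sum_abs_natCast_sub (by positivity : 0 ≤ c)
    fun i => #{t | j t = i}
  rw [sum_natCast_card_fiber_eq_card, Fintype.card_fin, Fintype.card_fin, Nat.cast_sub hq]
    at hbound
  constructor
  · calc (((d : ℝ) - q) ^ 2 + (q : ℝ) ^ 2) / d = (1 - 2 * c) * (d - q) + d * c := by
          simp only [c]
          field_simp
          ring
      _ ≤ _ := hbound
      _ = _ := hnorm.symm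
  · rw [div_le_div_iff₀ two_pos hd']
    nlinarith [sq_nonneg ((d : ℝ) - 2 * q)]
end

section
/- Let d, k, s be positive integers with k ≥ d, let n = 2ds, and equip ℝ^d with the ℓ1 norm. Then there exists a k×n matrix B = (b_i^j) with entries in ℝ^d such that every entry has ℓ1 norm at most 1, the total sum of the entries of B is zero, and for every row-permuted copy C of B the sum of the entries in the first column of C has ℓ1 norm at least d/2. -/
/-!
The first `d` rows of the matrix repeat the pattern `(e_1, …, e_d, -e/d, …, -e/d)`, whose entries
sum to zero, and the other rows vanish. Picking one entry in each of the first `d` rows, say `m`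
copies of `-e/d` and `d - m` basis vectors, gives `A - t • e` with `t = m/d ∈ [0, 1]` and `A` a
vector of natural numbers with coordinate sum `d - m`. For a natural number `a` we have
`|a - t| ≥ (1 - 2t) a + t`, so the ℓ1 norm is at least
`(1 - 2t)(d - m) + m = d/2 + (d - 2m)^2/(2d)`.
-/

open Finset

noncomputable def l1Pattern (d : ℕ) : Fin d ⊕ Fin d → PiLp 1 (fun _ : Fin d => ℝ)
  | .inl c => WithLp.toLp 1 (Pi.single c 1)
  | .inr _ => WithLp.toLp 1 (fun _ => -(d : ℝ)⁻¹)

/-- Column `r + 2d * b` is entry `r` of the `b`-th copy of the pattern, the first `d` entries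
being `Sum.inl`. -/
def columnEquiv (d s : ℕ) : Fin (2 * d * s) ≃ Fin s × (Fin d ⊕ Fin d) :=
  (finCongr (mul_comm _ _)).trans <| finProdFinEquiv.symm.trans <|
    (Equiv.refl _).prodCongr <| (finCongr (two_mul d)).trans finSumFinEquiv.symm

noncomputable def l1LowerBoundMatrix (d k s : ℕ) :
    Fin k → Fin (2 * d * s) → PiLp 1 (fun _ : Fin d => ℝ) :=
  fun j i => if (j : ℕ) < d then l1Pattern d (columnEquiv d s i).2 else 0

lemma le_abs_natCast_sub (a : ℕ) {t : ℝ} (ht₀ : 0 ≤ t) (ht₁ : t ≤ 1) :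
    (1 - 2 * t) * a + t ≤ |a - t| := by
  rcases a.eq_zero_or_pos with rfl | ha
  · simp [abs_of_nonneg ht₀]
  · have ha' : (1 : ℝ) ≤ a := by exact_mod_cast ha
    rw [abs_of_nonneg (by linarith)]
    nlinarith

section Pattern

variable {d : ℕ}

lemma norm_l1Pattern_le (x : Fin d ⊕ Fin d) : ‖l1Pattern d x‖ ≤ 1 := by
  cases x with
  | inl c => simp [l1Pattern]
  | inr c =>
    have hd : (d : ℝ) ≠ 0 := by exact_mod_cast c.pos.ne'
    simp [l1Pattern, PiLp.norm_eq_of_L1, hd]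

lemma sum_l1Pattern : ∑ x, l1Pattern d x = 0 := by
  ext c
  have hd : (d : ℝ) ≠ 0 := by exact_mod_cast c.pos.ne'
  simp [l1Pattern, Fintype.sum_sum_type, hd]

lemma sum_nsmul_l1Pattern_apply (N : Fin d ⊕ Fin d → ℕ) (c : Fin d) :
    (∑ x, N x • l1Pattern d x) c = N (.inl c) - ((∑ c', N (.inr c') : ℕ) : ℝ) / d := by
  simp [l1Pattern, Fintype.sum_sum_type, Pi.single_apply, div_eq_mul_inv, sum_mul,
    sub_eq_add_neg]

lemma norm_sum_nsmul_l1Pattern_ge (N : Fin d ⊕ Fin d → ℕ) (hN : ∑ x, N x = d) :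
    (d : ℝ) / 2 ≤ ‖∑ x, N x • l1Pattern d x‖ := by
  obtain rfl | hd := eq_or_ne d 0
  · simp
  set m := ∑ c, N (.inr c)
  set t : ℝ := m / d
  have hd' : (0 : ℝ) < d := by positivity
  have hsplit : ∑ c, (N (.inl c) : ℝ) + m = d := by
    rw [Fintype.sum_sum_type] at hN
    exact_mod_cast hN
  have hmd : (m : ℝ) ≤ d := by linarith [show 0 ≤ ∑ c, (N (.inl c) : ℝ) by positivity]
  have ht₀ : 0 ≤ t := by positivity
  have ht₁ : t ≤ 1 := div_le_one_of_le₀ hmd hd'.le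
  calc (d : ℝ) / 2 ≤ (1 - 2 * t) * (d - m) + d * t := by
        have : (1 - 2 * t) * (d - m) + d * t - d / 2 = (d - 2 * m) ^ 2 / (2 * d) := by
          simp only [t]
          field_simp
          ring
        nlinarith [show 0 ≤ ((d : ℝ) - 2 * m) ^ 2 / (2 * d) by positivity]
    _ = ∑ c, ((1 - 2 * t) * N (.inl c) + t) := by
        rw [sum_add_distrib, ← mul_sum, show ∑ c, (N (.inl c) : ℝ) = d - m by linarith]
        simp
    _ ≤ ∑ c, |(N (.inl c) : ℝ) - t| := sum_le_sum fun c _ => le_abs_natCast_sub _ ht₀ ht₁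
    _ = ‖∑ x, N x • l1Pattern d x‖ := by
        simp only [PiLp.norm_eq_of_L1, sum_nsmul_l1Pattern_apply, Real.norm_eq_abs, t, m]

lemma norm_sum_l1Pattern_ge {ι : Type*} (S : Finset ι) (hS : #S = d) (q : ι → Fin d ⊕ Fin d) :
    (d : ℝ) / 2 ≤ ‖∑ j ∈ S, l1Pattern d (q j)‖ := by
  classical
  rw [← sum_fiberwise' S q]
  simp only [sum_const]
  exact norm_sum_nsmul_l1Pattern_ge _ (by rw [← card_eq_sum_card_fiberwise (by simp), hS])

end Pattern

section Matrix

variable {d k s : ℕ}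

lemma norm_l1LowerBoundMatrix_le (j : Fin k) (i : Fin (2 * d * s)) :
    ‖l1LowerBoundMatrix d k s j i‖ ≤ 1 := by
  unfold l1LowerBoundMatrix
  split_ifs
  · exact norm_l1Pattern_le _
  · simp

lemma sum_l1LowerBoundMatrix : ∑ j : Fin k, ∑ i, l1LowerBoundMatrix d k s j i = 0 := by
  refine sum_eq_zero fun j _ => ?_
  unfold l1LowerBoundMatrix
  split_ifs
  · rw [(columnEquiv d s).sum_comp (fun p => l1Pattern d p.2), Fintype.sum_prod_type]
    simp only [sum_l1Pattern, sum_const_zero]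
  · simp

end Matrix

/-- The ℓ1 lower bound for all `k ≥ d` and `n = 2ds`: there is a `k × n` matrix
`B` with entries in `ℝ^d` (with the ℓ1 norm) of norm at most `1` whose total
sum of entries is zero, such that in every row-permuted copy `C` of `B` the sum
of the entries in the first column of `C` has ℓ1 norm at least `d/2`. -/
theorem l1_lower_bound_general
    (d k s : ℕ) (hd : 0 < d) (hs : 0 < s) (hk : d ≤ k) :
    ∃ B : Fin k → Fin (2 * d * s) → PiLp 1 (fun _ : Fin d => ℝ),
      (∀ j i, ‖B j i‖ ≤ 1) ∧
      (∑ j : Fin k, ∑ i : Fin (2 * d * s), B j i = 0) ∧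
      ∀ π : Fin k → Equiv.Perm (Fin (2 * d * s)),
        (d : ℝ) / 2 ≤
          ‖∑ j : Fin k, B j (π j ⟨0, by positivity⟩)‖ := by
  refine ⟨l1LowerBoundMatrix d k s, norm_l1LowerBoundMatrix_le, sum_l1LowerBoundMatrix,
    fun π => ?_⟩
  have hrows : #{j : Fin k | (j : ℕ) < d} = d := by simp [Fin.card_filter_val_lt, hk]
  simpa only [l1LowerBoundMatrix, ← sum_filter] using
    norm_sum_l1Pattern_ge _ hrows fun j => (columnEquiv d s (π j ⟨0, by positivity⟩)).2
end

section
/- Let d ≥ 4 be an integer, let k = ⌈(2^d − 1)/d⌉, let K = {x ∈ ℝ^d : x_i ≥ −1 for all i ∈ {1,…,d} and ∑_{i=1}^d x_i ≤ 2^d}, and let ‖x‖_K = min{t ≥ 0 : x ∈ tK} be the gauge of K. Then there exists a k×d matrix A = (a_i^j) with entries in ℝ^d such that ‖a_i^j‖_K ≤ 1 for all i, j, the total sum of the entries of A is zero, and for every row-permuted copy C of A the sum S of the entries in the first column of C satisfies ‖S‖_K ≥ k − 2 ≥ 2^d/(2d). -/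
/-!
Rows `j < d` of the matrix carry the binary weights `2^j`, one on each coordinate, and every
entry is shifted by `-e`. In a column chosen by a row-permutation the weights of the first `d`
rows either collide, so that some coordinate receives none of them, or are spread bijectively,
so that the coordinate receiving `2^0` gets nothing else. Either way some coordinate of the
column sum is at most `1 - (k - 1)`, while `K` lies in the half-space `x_m ≥ -1`; hence the
gauge of the column sum is at least `k - 2`.
-/

open Finset

theorem le_gauge_of_forall_mem_le_one {E : Type*} [AddCommGroup E] [Module ℝ E] {K : Set E}
    (hK : Absorbent ℝ K) (φ : E →ₗ[ℝ] ℝ) (hφ : ∀ y ∈ K, φ y ≤ 1) (x : E) :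
    φ x ≤ gauge K x := by
  refine le_csInf hK.gauge_set_nonempty ?_
  rintro r ⟨hr, y, hy, rfl⟩
  rw [map_smul, smul_eq_mul]
  nlinarith [hφ y hy]

def shiftedSimplex (ι : Type*) [Fintype ι] (c : ℝ) : Set (ι → ℝ) :=
  {x | (∀ i, -1 ≤ x i) ∧ ∑ i, x i ≤ c}

section ShiftedSimplex

variable {ι : Type*} [Fintype ι] {c : ℝ}

theorem ball_subset_shiftedSimplex (hc : Fintype.card ι ≤ c) :
    Metric.ball 0 1 ⊆ shiftedSimplex ι c := by
  intro x hx
  rw [mem_ball_zero_iff, pi_norm_lt_iff one_pos] at hx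
  have hx' : ∀ i, -1 ≤ x i ∧ x i ≤ 1 := fun i => abs_le.mp (hx i).le
  refine ⟨fun i => (hx' i).1, ?_⟩
  calc ∑ i, x i ≤ ∑ _i : ι, (1 : ℝ) := sum_le_sum fun i _ => (hx' i).2
    _ = Fintype.card ι := by simp
    _ ≤ c := hc

theorem absorbent_shiftedSimplex (hc : Fintype.card ι ≤ c) :
    Absorbent ℝ (shiftedSimplex ι c) :=
  absorbent_nhds_zero <| Filter.mem_of_superset (Metric.ball_mem_nhds 0 one_pos)
    (ball_subset_shiftedSimplex hc)

theorem neg_apply_le_gauge_shiftedSimplex (hc : Fintype.card ι ≤ c) (x : ι → ℝ) (i : ι) :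
    -x i ≤ gauge (shiftedSimplex ι c) x :=
  le_gauge_of_forall_mem_le_one (absorbent_shiftedSimplex hc) (-LinearMap.proj i)
    (fun y hy => by simpa using neg_le.mp (hy.1 i)) x

end ShiftedSimplex

theorem Finite.exists_preimage_singleton_subset {α : Type*} [Finite α] (g : α → α) (a : α) :
    ∃ b, g ⁻¹' {b} ⊆ {a} := by
  by_cases hg : g.Injective
  · exact ⟨g a, fun x hx => hg hx⟩
  · obtain ⟨b, hb⟩ : ∃ b, ∀ x, g x ≠ b := by
      simpa [Function.Surjective] using mt Finite.injective_iff_surjective.mpr hg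
    exact ⟨b, fun x hx => absurd hx (hb x)⟩

theorem ceil_div_mul_bounds {a n k : ℕ} (hn : 0 < n) (hk : k = ⌈(a : ℚ) / n⌉₊) :
    a ≤ k * n ∧ k * n < a + n := by
  have hnq : (0 : ℚ) < n := by exact_mod_cast hn
  have hle : (a : ℚ) / n ≤ k := hk ▸ Nat.le_ceil _
  have hlt : (k : ℚ) < a / n + 1 := hk ▸ Nat.ceil_lt_add_one (by positivity)
  rw [div_le_iff₀ hnq] at hle
  rw [← sub_lt_iff_lt_add, lt_div_iff₀ hnq] at hlt
  constructor
  · exact_mod_cast hle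
  · have : (k * n : ℚ) < a + n := by linarith
    exact_mod_cast this

theorem sq_le_two_pow {d : ℕ} (hd : 4 ≤ d) : d ^ 2 ≤ 2 ^ d := by
  induction d, hd using Nat.le_induction with
  | base => norm_num
  | succ n hn ih => rw [pow_succ 2 n]; nlinarith [ih]

theorem le_of_two_pow_sub_one_le_mul {d k : ℕ} (hd : 4 ≤ d) (hk : 2 ^ d - 1 ≤ k * d) :
    d ≤ k := by
  by_contra! h
  have : k * d + d ≤ d ^ 2 := by rw [sq, ← Nat.succ_mul]; exact Nat.mul_le_mul_right d h
  have := sq_le_two_pow hd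
  omega

theorem two_pow_div_le_sub_two {d k : ℕ} (hd : 4 ≤ d) (hk : 2 ^ d - 1 ≤ k * d) :
    (2 : ℝ) ^ d / (2 * d) ≤ k - 2 := by
  have hdR : (0 : ℝ) < d := by exact_mod_cast (by omega : 0 < d)
  rw [div_le_iff₀ (by positivity)]
  rcases hd.eq_or_lt with rfl | hd5
  · have : 4 ≤ k := by omega
    have : (4 : ℝ) ≤ k := by exact_mod_cast this
    norm_num; linarith
  · have hkR : (2 : ℝ) ^ d - 1 ≤ k * d := by
      have h := (Nat.cast_le (α := ℝ)).mpr hk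
      push_cast [Nat.cast_sub Nat.one_le_two_pow] at h
      exact h
    have hsq : (d : ℝ) ^ 2 ≤ 2 ^ d := by exact_mod_cast sq_le_two_pow hd
    have h5 : (5 : ℝ) ≤ d := by exact_mod_cast hd5
    nlinarith

namespace NonsymmetricSteinitz

variable {d k : ℕ}

def rowWeight (d : ℕ) (j : Fin k) : ℝ :=
  if (j : ℕ) < d then 2 ^ (j : ℕ) else 0

def offset (s : ℕ) (j : Fin k) (i : Fin d) : ℝ :=
  if (j : ℕ) = 0 ∧ (i : ℕ) < s then 0 else 1

/-- Rows are indexed from `0`, so row `j < d` carries `2^j e_i - e` (the paper's `2^(j-1)`). To make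
the total sum vanish, the first `s` entries of row `0` drop their `-e`, in place of the paper's
entries `-f` and `-g`. -/
def matrix (d k s : ℕ) (j : Fin k) (i : Fin d) : Fin d → ℝ :=
  Pi.single i (rowWeight d j) - fun _ => offset s j i

theorem rowWeight_nonneg (j : Fin k) : 0 ≤ rowWeight d j := by
  unfold rowWeight; split_ifs <;> positivity

theorem rowWeight_le_two_pow (j : Fin k) : rowWeight d j ≤ 2 ^ d := by
  unfold rowWeight
  split_ifs with h
  · exact pow_le_pow_right₀ one_le_two h.le
  · positivity

theorem sum_rowWeight (hdk : d ≤ k) : ∑ j : Fin k, rowWeight d j = 2 ^ d - 1 := by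
  unfold rowWeight
  rw [Fin.sum_univ_eq_sum_range (fun n => if n < d then (2 : ℝ) ^ n else 0), ← sum_filter,
    show (range k).filter (· < d) = range d by ext; simp; omega, geom_sum_eq (by norm_num)]
  norm_num

theorem exists_sum_single_rowWeight_le_one (hd : 0 < d) (hdk : d ≤ k) (f : Fin k → Fin d) :
    ∃ m, ∑ j, (Pi.single (f j) (rowWeight d j) : Fin d → ℝ) m ≤ 1 := by
  obtain ⟨m, hm⟩ := Finite.exists_preimage_singleton_subset (f ∘ Fin.castLE hdk) ⟨0, hd⟩
  refine ⟨m, ?_⟩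
  rw [sum_eq_single ⟨0, hd.trans_le hdk⟩]
  · rw [Pi.single_apply]
    split_ifs <;> simp [rowWeight, hd]
  · intro j _ hj
    by_cases hjd : (j : ℕ) < d
    · refine Pi.single_eq_of_ne (fun hmj => hj (Fin.ext ?_)) _
      simpa using congrArg Fin.val (@hm ⟨j, hjd⟩ hmj.symm)
    · simp [rowWeight, hjd]
  · simp

theorem offset_nonneg (s : ℕ) (j : Fin k) (i : Fin d) : 0 ≤ offset s j i := by
  unfold offset; split_ifs <;> norm_num

theorem offset_le_one (s : ℕ) (j : Fin k) (i : Fin d) : offset s j i ≤ 1 := by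
  unfold offset; split_ifs <;> norm_num

theorem sum_sum_offset {s : ℕ} (hk : 0 < k) (hs : s ≤ d) :
    ∑ j : Fin k, ∑ i : Fin d, offset s j i = k * d - s := by
  have h : ∀ (j : Fin k) (i : Fin d),
      offset s j i = 1 - if j = ⟨0, hk⟩ then (if (i : ℕ) < s then 1 else 0) else 0 := by
    intro j i
    simp only [offset, Fin.ext_iff]
    split_ifs <;> simp_all
  simp [h, sum_sub_distrib, sum_boole, Fin.card_filter_val_lt, hs]

theorem sub_one_le_sum_offset (s : ℕ) (hk : 0 < k) (f : Fin k → Fin d) :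
    (k : ℝ) - 1 ≤ ∑ j, offset s j (f j) := by
  have h : ∀ j, 1 - (if j = ⟨0, hk⟩ then 1 else 0) ≤ offset s j (f j) := by
    intro j
    simp only [offset, Fin.ext_iff]
    split_ifs <;> simp_all
  calc (k : ℝ) - 1 = ∑ j : Fin k, (1 - if j = ⟨0, hk⟩ then 1 else 0) := by
        simp [sum_sub_distrib]
    _ ≤ _ := sum_le_sum fun j _ => h j

theorem matrix_mem (s : ℕ) (j : Fin k) (i : Fin d) :
    matrix d k s j i ∈ shiftedSimplex (Fin d) (2 ^ d) := by
  refine ⟨fun m => ?_, ?_⟩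
  · have : 0 ≤ (Pi.single i (rowWeight d j) : Fin d → ℝ) m := by
      rw [Pi.single_apply]; split_ifs; exacts [rowWeight_nonneg j, le_rfl]
    simp only [matrix, Pi.sub_apply]
    linarith [offset_le_one s j i]
  · simp only [matrix, Pi.sub_apply, sum_sub_distrib, sum_pi_single', mem_univ,
      if_true, sum_const, card_univ, Fintype.card_fin, nsmul_eq_mul]
    nlinarith [rowWeight_le_two_pow (d := d) j, offset_nonneg s j i]

theorem sum_sum_matrix {s : ℕ} (hd : 0 < d) (hdk : d ≤ k) (hs : s ≤ d)
    (hsum : (2 : ℝ) ^ d - 1 + s = k * d) : ∑ j, ∑ i, matrix d k s j i = 0 := by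
  ext m
  simp only [Finset.sum_apply, matrix, Pi.sub_apply, sum_sub_distrib, sum_pi_single,
    mem_univ, if_true, Pi.zero_apply]
  rw [sum_rowWeight hdk, sum_sum_offset (by omega) hs]
  linarith

theorem exists_apply_sum_matrix_le (s : ℕ) (hd : 0 < d) (hdk : d ≤ k)
    (f : Fin k → Fin d) : ∃ m, (∑ j, matrix d k s j (f j)) m ≤ 2 - k := by
  obtain ⟨m, hm⟩ := exists_sum_single_rowWeight_le_one hd hdk f
  refine ⟨m, ?_⟩
  simp only [Finset.sum_apply, matrix, Pi.sub_apply, sum_sub_distrib]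
  linarith [sub_one_le_sum_offset s (hd.trans_le hdk) f]

theorem sub_two_le_gauge_sum_matrix (s : ℕ) (hd : 0 < d) (hdk : d ≤ k)
    (f : Fin k → Fin d) :
    (k : ℝ) - 2 ≤
      gauge (shiftedSimplex (Fin d) (2 ^ d)) (∑ j, matrix d k s j (f j)) := by
  obtain ⟨m, hm⟩ := exists_apply_sum_matrix_le s hd hdk f
  have hcard : (Fintype.card (Fin d) : ℝ) ≤ 2 ^ d := by
    exact_mod_cast (Fintype.card_fin d).trans_le Nat.lt_two_pow_self.le
  linarith [neg_apply_le_gauge_shiftedSimplex hcard (∑ j, matrix d k s j (f j)) m]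

end NonsymmetricSteinitz

/-- The example showing that the matrix Steinitz theorem fails for
non-symmetric seminorms: for `d ≥ 4`, `k = ⌈(2^d - 1)/d⌉` and the gauge of
`K = {x ∈ ℝ^d : x_i ≥ -1 for all i, ∑ x_i ≤ 2^d}`, there is a `k × d` matrix
`A` with entries of gauge at most `1` and total sum of entries zero, such that
in every row-permuted copy `C` of `A` the sum `S` of the entries in the first
column of `C` satisfies `gauge K S ≥ k - 2 ≥ 2^d / (2d)`. -/
theorem nonsymmetric_example
    (d k : ℕ) (hd : 4 ≤ d)
    (hk : k = ⌈((2 : ℚ) ^ d - 1) / d⌉₊)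
    (K : Set (Fin d → ℝ))
    (hK : K = {x : Fin d → ℝ | (∀ i, -1 ≤ x i) ∧ ∑ i : Fin d, x i ≤ 2 ^ d}) :
    ∃ A : Fin k → Fin d → (Fin d → ℝ),
      (∀ j i, gauge K (A j i) ≤ 1) ∧
      (∑ j : Fin k, ∑ i : Fin d, A j i = 0) ∧
      ((2 : ℝ) ^ d / (2 * d) ≤ (k : ℝ) - 2) ∧
      ∀ π : Fin k → Equiv.Perm (Fin d),
        (k : ℝ) - 2 ≤ gauge K (∑ j : Fin k, A j (π j ⟨0, by omega⟩)) := by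
  have hd0 : 0 < d := by omega
  obtain ⟨hlow, hhigh⟩ := ceil_div_mul_bounds (a := 2 ^ d - 1) (k := k) hd0
    (by simp [hk, Nat.cast_sub Nat.one_le_two_pow])
  have hdk := le_of_two_pow_sub_one_le_mul hd hlow
  set s := k * d - (2 ^ d - 1) with hs
  have hsum : (2 : ℝ) ^ d - 1 + s = k * d := by
    rw [hs, Nat.cast_sub hlow, Nat.cast_sub Nat.one_le_two_pow]
    push_cast; ring
  obtain rfl : K = shiftedSimplex (Fin d) (2 ^ d) := hK
  exact ⟨NonsymmetricSteinitz.matrix d k s,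
    fun j i => gauge_le_one_of_mem (NonsymmetricSteinitz.matrix_mem s j i),
    NonsymmetricSteinitz.sum_sum_matrix hd0 hdk (by omega) hsum,
    two_pow_div_le_sub_two hd hlow,
    fun π => NonsymmetricSteinitz.sub_two_le_gauge_sum_matrix s hd0 hdk _⟩
end
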